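/- arXiv:1105.5765 — 10 statements merged into one kernel-verified Lean document; each statement's English description precedes it below -/
import Mathlib

section
/- Let n_s ≥ 2, let Δs_0, …, Δs_{n_s-1} > 0, K_∥ > 0, γ ≥ 0, Δt > 0. Suppose (T_i^n)_{0≤i≤n_s-1, n∈ℕ} satisfies the implicit finite volume scheme (T_i^{n+1} − T_i^n)/Δt = (F_{i+1/2}^{n+1} − F_{i−1/2}^{n+1})/Δs_i, where for 0 ≤ i ≤ n_s−2, F_{i+1/2}^{n+1} = (4K_∥/7)·(|T_{i+1}^{n+1}|^{5/2} T_{i+1}^{n+1} − |T_i^{n+1}|^{5/2} T_i^{n+1})/(Δs_{i+1} + Δs_i), and F_{−1/2}^{n+1} = γ T_0^{n+1}, F_{n_s−1/2}^{n+1} = −γ T_{n_s−1}^{n+1}. If T_i^0 ≥ 0 for all i, then T_i^n ≥ 0 for all 0 ≤ i ≤ n_s−1 and all n ∈ ℕ. -/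
/-! The scheme satisfies a discrete minimum principle. Since `x ↦ |x|^{5/2} x` is monotone, at a
cell where `T^{n+1}` attains its minimum the flux through its right face is nonnegative and the flux
through its left face nonpositive (at the boundary faces as long as that minimum is `≤ 0`); the scheme then gives
`T^{n+1}_i ≥ T^n_i` at that cell, so a negative minimum is impossible once `T^n ≥ 0`. -/

theorem monotone_abs_rpow_mul_self {p : ℝ} (hp : 0 ≤ p) : Monotone fun x : ℝ => |x| ^ p * x := by
  have nonneg_case : ∀ x y : ℝ, 0 ≤ x → x ≤ y → |x| ^ p * x ≤ |y| ^ p * y := by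
    intro x y hx hxy
    gcongr
  intro a b hab
  rcases le_total 0 a with ha | ha
  · exact nonneg_case a b ha hab
  rcases le_total 0 b with hb | hb
  · exact (mul_nonpos_of_nonneg_of_nonpos (by positivity) ha).trans (mul_nonneg (by positivity) hb)
  · have := nonneg_case (-b) (-a) (neg_nonneg.2 hb) (neg_le_neg hab)
    simp only [abs_neg, mul_neg] at this
    linarith

theorem le_of_backward_euler {u v Gl Gr Δt d : ℝ} (hΔt : 0 < Δt) (hd : 0 < d)
    (hscheme : (v - u) / Δt = (Gr - Gl) / d) (hl : Gl ≤ 0) (hr : 0 ≤ Gr) : u ≤ v := by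
  have hdiv : 0 ≤ (v - u) / Δt := hscheme ▸ div_nonneg (by linarith) hd.le
  linarith [(le_div_iff₀ hΔt).mp hdiv]

section MinimumPrinciple

variable {ns : ℕ} {Δs : ℕ → ℝ} {c γ : ℝ} {φ : ℝ → ℝ} {v G : ℕ → ℝ} {i₀ : ℕ}

theorem flux_left_nonpos_of_isMin (hφ : Monotone φ) (hc : 0 ≤ c) (hγ : 0 ≤ γ)
    (hΔs : ∀ i < ns, 0 < Δs i) (hG0 : G 0 = γ * v 0)
    (hGint : ∀ i, 1 ≤ i → i ≤ ns - 1 →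
      G i = c * (φ (v i) - φ (v (i - 1))) / (Δs i + Δs (i - 1)))
    (hi₀ : i₀ < ns) (hmin : ∀ j < ns, v i₀ ≤ v j) (hneg : v i₀ ≤ 0) : G i₀ ≤ 0 := by
  rcases Nat.eq_zero_or_pos i₀ with rfl | hpos
  · rw [hG0]
    exact mul_nonpos_of_nonneg_of_nonpos hγ hneg
  · rw [hGint i₀ hpos (by omega)]
    have hφle : φ (v i₀) ≤ φ (v (i₀ - 1)) := hφ (hmin _ (by omega))
    have hd : 0 < Δs i₀ + Δs (i₀ - 1) := add_pos (hΔs _ hi₀) (hΔs _ (by omega))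
    exact div_nonpos_of_nonpos_of_nonneg (mul_nonpos_of_nonneg_of_nonpos hc (by linarith)) hd.le

theorem flux_right_nonneg_of_isMin (hφ : Monotone φ) (hc : 0 ≤ c) (hγ : 0 ≤ γ)
    (hΔs : ∀ i < ns, 0 < Δs i) (hGns : G ns = -γ * v (ns - 1))
    (hGint : ∀ i, 1 ≤ i → i ≤ ns - 1 →
      G i = c * (φ (v i) - φ (v (i - 1))) / (Δs i + Δs (i - 1)))
    (hi₀ : i₀ < ns) (hmin : ∀ j < ns, v i₀ ≤ v j) (hneg : v i₀ ≤ 0) : 0 ≤ G (i₀ + 1) := by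
  rcases (Nat.succ_le_of_lt hi₀).eq_or_lt with hlast | hinner
  · rw [show i₀ + 1 = ns from hlast, hGns, show ns - 1 = i₀ by omega]
    nlinarith
  · rw [hGint (i₀ + 1) (by omega) (by omega), Nat.add_sub_cancel]
    have hφle : φ (v i₀) ≤ φ (v (i₀ + 1)) := hφ (hmin _ hinner)
    have hd : 0 < Δs (i₀ + 1) + Δs i₀ := add_pos (hΔs _ hinner) (hΔs _ hi₀)
    exact div_nonneg (mul_nonneg hc (by linarith)) hd.le

theorem backward_euler_step_nonneg {Δt : ℝ} {u : ℕ → ℝ} (hφ : Monotone φ) (hc : 0 ≤ c)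
    (hγ : 0 ≤ γ) (hΔt : 0 < Δt) (hΔs : ∀ i < ns, 0 < Δs i)
    (hG0 : G 0 = γ * v 0) (hGns : G ns = -γ * v (ns - 1))
    (hGint : ∀ i, 1 ≤ i → i ≤ ns - 1 →
      G i = c * (φ (v i) - φ (v (i - 1))) / (Δs i + Δs (i - 1)))
    (hscheme : ∀ i < ns, (v i - u i) / Δt = (G (i + 1) - G i) / Δs i)
    (hu : ∀ i < ns, 0 ≤ u i) : ∀ i < ns, 0 ≤ v i := by
  intro i hi
  obtain ⟨i₀, hi₀, hmin⟩ :=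
    Finset.exists_min_image (Finset.range ns) v ⟨i, Finset.mem_range.mpr hi⟩
  rw [Finset.mem_range] at hi₀
  replace hmin : ∀ j < ns, v i₀ ≤ v j := fun j hj => hmin j (Finset.mem_range.mpr hj)
  suffices 0 ≤ v i₀ from this.trans (hmin i hi)
  by_contra! hneg
  have hstep : u i₀ ≤ v i₀ := le_of_backward_euler hΔt (hΔs i₀ hi₀) (hscheme i₀ hi₀)
    (flux_left_nonpos_of_isMin hφ hc hγ hΔs hG0 hGint hi₀ hmin hneg.le)
    (flux_right_nonneg_of_isMin hφ hc hγ hΔs hGns hGint hi₀ hmin hneg.le)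
  linarith [hu i₀ hi₀]

end MinimumPrinciple

/-- `F n i` is the flux `F_{i-1/2}^n`, so `F n 0` and `F n ns` are the boundary fluxes. -/
theorem implicit_scheme_nonnegativity_general
    (ns : ℕ)
    (Δs : ℕ → ℝ) (hΔs : ∀ i < ns, 0 < Δs i)
    (K γ Δt : ℝ) (hK : 0 < K) (hγ : 0 ≤ γ) (hΔt : 0 < Δt)
    (T F : ℕ → ℕ → ℝ)
    (hF0 : ∀ n, F n 0 = γ * T n 0)
    (hFns : ∀ n, F n ns = -γ * T n (ns - 1))
    (hFint : ∀ n i, 1 ≤ i → i ≤ ns - 1 →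
      F n i = (4 * K / 7) *
        (|T n i| ^ ((5:ℝ)/2) * T n i - |T n (i-1)| ^ ((5:ℝ)/2) * T n (i-1))
        / (Δs i + Δs (i-1)))
    (hscheme : ∀ n, ∀ i < ns,
      (T (n+1) i - T n i) / Δt = (F (n+1) (i+1) - F (n+1) i) / Δs i)
    (hinit : ∀ i < ns, 0 ≤ T 0 i) :
    ∀ n, ∀ i < ns, 0 ≤ T n i := by
  intro n
  induction n with
  | zero => exact hinit
  | succ n ih =>
    exact backward_euler_step_nonneg (monotone_abs_rpow_mul_self (by norm_num)) (by positivity)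
      hγ hΔt hΔs (hF0 (n + 1)) (hFns (n + 1)) (hFint (n + 1)) (hscheme n) ih

/-- Nonnegativity part of Proposition 2.2: the backward Euler (implicit)
finite volume scheme for the 1D nonlinear heat equation preserves
nonnegativity of the initial datum, unconditionally in `Δt`.
Here `F n i` denotes the numerical flux `F_{i-1/2}^n` computed from the
values at time level `n` (so interior fluxes correspond to `1 ≤ i ≤ ns - 1`,
and `F n 0`, `F n ns` are the boundary fluxes). -/
theorem implicit_scheme_nonnegativity
    (ns : ℕ) (hns : 2 ≤ ns)
    (Δs : ℕ → ℝ) (hΔs : ∀ i < ns, 0 < Δs i)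
    (K γ Δt : ℝ) (hK : 0 < K) (hγ : 0 ≤ γ) (hΔt : 0 < Δt)
    (T F : ℕ → ℕ → ℝ)
    (hF0 : ∀ n, F n 0 = γ * T n 0)
    (hFns : ∀ n, F n ns = -γ * T n (ns - 1))
    (hFint : ∀ n i, 1 ≤ i → i ≤ ns - 1 →
      F n i = (4 * K / 7) *
        (|T n i| ^ ((5:ℝ)/2) * T n i - |T n (i-1)| ^ ((5:ℝ)/2) * T n (i-1))
        / (Δs i + Δs (i-1)))
    (hscheme : ∀ n, ∀ i < ns,
      (T (n+1) i - T n i) / Δt = (F (n+1) (i+1) - F (n+1) i) / Δs i)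
    (hinit : ∀ i < ns, 0 ≤ T 0 i) :
    ∀ n, ∀ i < ns, 0 ≤ T n i :=
  implicit_scheme_nonnegativity_general ns Δs hΔs K γ Δt hK hγ hΔt T F hF0 hFns hFint hscheme hinit
end

section
/- Let n_s ≥ 2, let Δs_0, …, Δs_{n_s-1} > 0, K_∥ > 0, γ ≥ 0, Δt > 0, and let N_t ∈ ℕ. Suppose (T_i^n)_{0≤i≤n_s-1, n∈ℕ} satisfies the implicit finite volume scheme (T_i^{n+1} − T_i^n)/Δt = (F_{i+1/2}^{n+1} − F_{i−1/2}^{n+1})/Δs_i, where for 0 ≤ i ≤ n_s−2, F_{i+1/2}^{n+1} = (4K_∥/7)·((T_{i+1}^{n+1})^{7/2} − (T_i^{n+1})^{7/2})/(Δs_{i+1} + Δs_i), and F_{−1/2}^{n+1} = γ T_0^{n+1}, F_{n_s−1/2}^{n+1} = −γ T_{n_s−1}^{n+1}, with 0 ≤ T_i^0 for all i. Then there exists a constant C > 0, depending only on the initial data (T_i^0)_i (and on K_∥, γ) but not on Δt, N_t or the mesh, such that Σ_{n=0}^{N_t} Σ_{i=0}^{n_s−2} Δt · [( (T_{i+1}^{n+1})^{7/2}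 − (T_i^{n+1})^{7/2} )²] / (Δs_i + Δs_{i+1}) ≤ C. -/
/-!
Testing the scheme against `(T_i^{n+1})^{7/2} Δs_i` gives a discrete energy inequality for
`E^n = ∑ Δs_i (T_i^n)^{9/2}`. Summation by parts turns the flux side into `-(4K/7)` times the
discrete seminorm of `(T^{n+1})^{7/2}` plus the boundary terms `-γ (T^{n+1})^{9/2} ≤ 0`, while the
tangent line inequality for the convex function `x ↦ x^{9/2}` bounds the time-difference side
below by `(2/9) (E^{n+1} - E^n)`. Summing over `n` telescopes, so the seminorms are bounded by
`7 E^0 / (18 K)`.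

No sign information on `T` is needed: `Real.rpow` sends a negative base to `0` at a half-odd
exponent, so both inequalities hold for all real values.
-/

open Real Finset

namespace Real

/-- At a half-odd exponent the factor `cos (y * π)` in `Real.rpow_def_of_neg` vanishes. -/
theorem rpow_half_odd_of_neg {x : ℝ} (hx : x < 0) (k : ℤ) : x ^ ((2 * k + 1) / 2 : ℝ) = 0 := by
  rw [rpow_def_of_neg hx, cos_eq_zero_iff.2 ⟨k, by ring⟩, mul_zero]

theorem rpow_seven_halves_of_neg {x : ℝ} (hx : x < 0) : x ^ ((7 : ℝ) / 2) = 0 := by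
  convert rpow_half_odd_of_neg hx 3 using 2; norm_num

theorem rpow_nine_halves_of_neg {x : ℝ} (hx : x < 0) : x ^ ((9 : ℝ) / 2) = 0 := by
  convert rpow_half_odd_of_neg hx 4 using 2; norm_num

theorem rpow_nine_halves_nonneg (x : ℝ) : 0 ≤ x ^ ((9 : ℝ) / 2) := by
  rcases le_or_gt 0 x with hx | hx
  · exact rpow_nonneg hx _
  · rw [rpow_nine_halves_of_neg hx]

theorem mul_rpow_seven_halves_nonneg (x : ℝ) : 0 ≤ x * x ^ ((7 : ℝ) / 2) := by
  rcases le_or_gt 0 x with hx | hx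
  · exact mul_nonneg hx (rpow_nonneg hx _)
  · rw [rpow_seven_halves_of_neg hx, mul_zero]

/-- The tangent line inequality for the convex function `x ↦ x ^ p` on `[0, ∞)`. -/
theorem rpow_sub_rpow_le_mul_rpow_sub_one_mul_sub {p a b : ℝ} (hp : 1 < p) (ha : 0 ≤ a)
    (hb : 0 ≤ b) : a ^ p - b ^ p ≤ p * a ^ (p - 1) * (a - b) := by
  rcases ha.eq_or_lt with rfl | ha
  · rw [zero_rpow (by linarith), zero_rpow (by linarith)]
    linarith [rpow_nonneg hb p]
  have hbernoulli := one_add_mul_self_le_rpow_one_add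
    (by linarith [div_nonneg hb ha.le] : -1 ≤ b / a - 1) hp.le
  rw [add_sub_cancel, div_rpow hb ha.le, le_div_iff₀ (rpow_pos_of_pos ha p)] at hbernoulli
  have hap : a ^ p = a * a ^ (p - 1) := by
    rw [← rpow_one_add' ha.le (by linarith), add_sub_cancel]
  have hslope : (b / a - 1) * a ^ p = (b - a) * a ^ (p - 1) := by
    rw [hap]; field_simp
  nlinarith

theorem rpow_nine_halves_sub_le (a b : ℝ) :
    a ^ ((9 : ℝ) / 2) - b ^ ((9 : ℝ) / 2) ≤ 9 / 2 * a ^ ((7 : ℝ) / 2) * (a - b) := by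
  rcases lt_or_ge a 0 with ha | ha
  · rw [rpow_nine_halves_of_neg ha, rpow_seven_halves_of_neg ha]
    linarith [rpow_nine_halves_nonneg b]
  rcases lt_or_ge b 0 with hb | hb
  · have hseven := rpow_nonneg ha ((7 : ℝ) / 2)
    rw [rpow_nine_halves_of_neg hb, show (9 : ℝ) / 2 = 1 + 7 / 2 by norm_num,
      rpow_one_add' ha (by norm_num)]
    nlinarith
  · have := rpow_sub_rpow_le_mul_rpow_sub_one_mul_sub (p := 9 / 2) (by norm_num) ha hb
    norm_num at this ⊢
    linarith

end Real

theorem Finset.sum_range_succ_sub_mul_by_parts {R : Type*} [CommRing R] (F p : ℕ → R) (m : ℕ) :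
    ∑ i ∈ range (m + 1), (F (i + 1) - F i) * p i
      = F (m + 1) * p m - F 0 * p 0 - ∑ i ∈ range m, F (i + 1) * (p (i + 1) - p i) := by
  induction m with
  | zero => simp [sub_mul]
  | succ m ih => rw [sum_range_succ, ih, sum_range_succ]; ring

section FiniteVolumeScheme

variable {ns : ℕ} {Δs : ℕ → ℝ} {K γ Δt : ℝ} {u v F : ℕ → ℝ}

noncomputable def schemeEnergy (ns : ℕ) (Δs T : ℕ → ℝ) : ℝ :=
  ∑ i ∈ range ns, Δs i * T i ^ ((9 : ℝ) / 2)

noncomputable def discreteSeminorm (ns : ℕ) (Δs P : ℕ → ℝ) : ℝ :=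
  ∑ i ∈ range (ns - 1), (P (i + 1) - P i) ^ 2 / (Δs i + Δs (i + 1))

theorem schemeEnergy_nonneg (hΔs : ∀ i < ns, 0 < Δs i) (T : ℕ → ℝ) :
    0 ≤ schemeEnergy ns Δs T :=
  sum_nonneg fun i hi => mul_nonneg (hΔs i (mem_range.1 hi)).le (rpow_nine_halves_nonneg _)

theorem sum_flux_sub_mul_le (hns : 1 ≤ ns) (hγ : 0 ≤ γ) (hF0 : F 0 = γ * v 0)
    (hFns : F ns = -γ * v (ns - 1))
    (hFint : ∀ i, 1 ≤ i → i ≤ ns - 1 →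
      F i = (4 * K / 7) * (v i ^ ((7 : ℝ) / 2) - v (i - 1) ^ ((7 : ℝ) / 2)) / (Δs i + Δs (i - 1))) :
    ∑ i ∈ range ns, (F (i + 1) - F i) * v i ^ ((7 : ℝ) / 2)
      ≤ -(4 * K / 7 * discreteSeminorm ns Δs fun i => v i ^ ((7 : ℝ) / 2)) := by
  obtain ⟨m, rfl⟩ : ∃ m, ns = m + 1 := ⟨ns - 1, by omega⟩
  have hinterior : ∑ i ∈ range m, F (i + 1) * (v (i + 1) ^ ((7 : ℝ) / 2) - v i ^ ((7 : ℝ) / 2))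
      = 4 * K / 7 * discreteSeminorm (m + 1) Δs fun i => v i ^ ((7 : ℝ) / 2) := by
    rw [discreteSeminorm, Nat.add_sub_cancel, mul_sum]
    refine sum_congr rfl fun i hi => ?_
    rw [hFint (i + 1) (by omega) (by have := mem_range.1 hi; omega), Nat.add_sub_cancel, add_comm (Δs _)]
    ring
  rw [sum_range_succ_sub_mul_by_parts, hinterior, hFns, hF0, Nat.add_sub_cancel]
  nlinarith [mul_rpow_seven_halves_nonneg (v m), mul_rpow_seven_halves_nonneg (v 0)]

theorem schemeEnergy_sub_le_sum_sub_mul_rpow (hΔs : ∀ i < ns, 0 < Δs i) :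
    2 / 9 * (schemeEnergy ns Δs v - schemeEnergy ns Δs u)
      ≤ ∑ i ∈ range ns, (v i - u i) * Δs i * v i ^ ((7 : ℝ) / 2) := by
  rw [schemeEnergy, schemeEnergy, ← sum_sub_distrib, mul_sum]
  refine sum_le_sum fun i hi => ?_
  nlinarith [mul_le_mul_of_nonneg_left (rpow_nine_halves_sub_le (v i) (u i))
    (hΔs i (mem_range.1 hi)).le]

/-- One backward Euler step from `u = T^n` to `v = T^{n+1}`, with fluxes `F = F^{n+1}`. -/
theorem discreteSeminorm_le_schemeEnergy_sub (hns : 1 ≤ ns) (hΔs : ∀ i < ns, 0 < Δs i)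
    (hγ : 0 ≤ γ) (hΔt : 0 < Δt) (hF0 : F 0 = γ * v 0) (hFns : F ns = -γ * v (ns - 1))
    (hFint : ∀ i, 1 ≤ i → i ≤ ns - 1 →
      F i = (4 * K / 7) * (v i ^ ((7 : ℝ) / 2) - v (i - 1) ^ ((7 : ℝ) / 2)) / (Δs i + Δs (i - 1)))
    (hscheme : ∀ i < ns, (v i - u i) / Δt = (F (i + 1) - F i) / Δs i) :
    4 * K / 7 * (Δt * discreteSeminorm ns Δs fun i => v i ^ ((7 : ℝ) / 2))
      ≤ 2 / 9 * (schemeEnergy ns Δs u - schemeEnergy ns Δs v) := by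
  have htest : ∑ i ∈ range ns, (v i - u i) * Δs i * v i ^ ((7 : ℝ) / 2)
      = Δt * ∑ i ∈ range ns, (F (i + 1) - F i) * v i ^ ((7 : ℝ) / 2) := by
    rw [mul_sum]
    refine sum_congr rfl fun i hi => ?_
    have hi := mem_range.1 hi
    rw [(div_eq_div_iff hΔt.ne' (hΔs i hi).ne').1 (hscheme i hi)]
    ring
  have hflux := mul_le_mul_of_nonneg_left (sum_flux_sub_mul_le hns hγ hF0 hFns hFint) hΔt.le
  linarith [schemeEnergy_sub_le_sum_sub_mul_rpow (u := u) (v := v) hΔs]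

end FiniteVolumeScheme

theorem implicit_scheme_seminorm_estimate_general
    (ns : ℕ) (hns : 2 ≤ ns)
    (Δs : ℕ → ℝ) (hΔs : ∀ i < ns, 0 < Δs i)
    (K γ : ℝ) (hK : 0 < K) (hγ : 0 ≤ γ)
    (T0 : ℕ → ℝ) :
    ∃ C > (0:ℝ), ∀ (Δt : ℝ), 0 < Δt → ∀ (T F : ℕ → ℕ → ℝ),
      (∀ i < ns, T 0 i = T0 i) →
      (∀ n, F n 0 = γ * T n 0) →
      (∀ n, F n ns = -γ * T n (ns - 1)) →
      (∀ n i, 1 ≤ i → i ≤ ns - 1 →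
        F n i = (4 * K / 7) *
          ((T n i) ^ ((7:ℝ)/2) - (T n (i-1)) ^ ((7:ℝ)/2))
          / (Δs i + Δs (i-1))) →
      (∀ n, ∀ i < ns,
        (T (n+1) i - T n i) / Δt = (F (n+1) (i+1) - F (n+1) i) / Δs i) →
      ∀ Nt : ℕ,
        (∑ n ∈ Finset.range (Nt+1), ∑ i ∈ Finset.range (ns-1),
          Δt * ((T (n+1) (i+1)) ^ ((7:ℝ)/2) - (T (n+1) i) ^ ((7:ℝ)/2))^2
            / (Δs i + Δs (i+1))) ≤ C := by
  refine ⟨7 / (18 * K) * schemeEnergy ns Δs T0 + 1,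
    add_pos_of_nonneg_of_pos (mul_nonneg (by positivity) (schemeEnergy_nonneg hΔs T0)) one_pos, ?_⟩
  intro Δt hΔt T F hinit hF0 hFns hFint hscheme Nt
  set E := fun n => schemeEnergy ns Δs (T n)
  have hE0 : E 0 = schemeEnergy ns Δs T0 :=
    sum_congr rfl fun i hi => by rw [hinit i (mem_range.1 hi)]
  have hstep (n : ℕ) := discreteSeminorm_le_schemeEnergy_sub (by omega) hΔs hγ hΔt (hF0 (n + 1))
    (hFns (n + 1)) (hFint (n + 1)) (hscheme n)
  have htelescope : 4 * K / 7 * ∑ n ∈ range (Nt + 1),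
      Δt * discreteSeminorm ns Δs (fun i => T (n + 1) i ^ ((7 : ℝ) / 2)) ≤ 2 / 9 * E 0 := by
    calc _ ≤ ∑ n ∈ range (Nt + 1), 2 / 9 * (E n - E (n + 1)) := by
          rw [mul_sum]; exact sum_le_sum fun n _ => hstep n
      _ = 2 / 9 * (E 0 - E (Nt + 1)) := by rw [← mul_sum, sum_range_sub']
      _ ≤ 2 / 9 * E 0 := by linarith [schemeEnergy_nonneg hΔs (T (Nt + 1))]
  calc _ = ∑ n ∈ range (Nt + 1),
        Δt * discreteSeminorm ns Δs (fun i => T (n + 1) i ^ ((7 : ℝ) / 2)) := by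
        simp_rw [discreteSeminorm, mul_sum, mul_div_assoc]
    _ ≤ 2 / 9 * E 0 / (4 * K / 7) := (le_div_iff₀' (by positivity)).2 htelescope
    _ = 7 / (18 * K) * schemeEnergy ns Δs T0 := by rw [hE0]; field_simp; ring
    _ ≤ _ := le_add_of_nonneg_right zero_le_one

/-- Discrete semi-norm (gradient) estimate of Proposition 2.2 for the
backward Euler finite volume scheme for the 1D nonlinear heat equation:
there is a constant `C > 0` depending only on the initial data `T0`
(and on `K`, `γ`), but not on the time step `Δt`, on the number of time
iterations `Nt`, or on the particular solution, such that the discrete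
semi-norm of `T^{7/2}` is bounded by `C`.
Here `F n i` denotes the numerical flux `F_{i-1/2}^n` computed from the
values at time level `n`. -/
theorem implicit_scheme_seminorm_estimate
    (ns : ℕ) (hns : 2 ≤ ns)
    (Δs : ℕ → ℝ) (hΔs : ∀ i < ns, 0 < Δs i)
    (K γ : ℝ) (hK : 0 < K) (hγ : 0 ≤ γ)
    (T0 : ℕ → ℝ) (hT0 : ∀ i < ns, 0 ≤ T0 i) :
    ∃ C > (0:ℝ), ∀ (Δt : ℝ), 0 < Δt → ∀ (T F : ℕ → ℕ → ℝ),
      (∀ i < ns, T 0 i = T0 i) →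
      (∀ n, F n 0 = γ * T n 0) →
      (∀ n, F n ns = -γ * T n (ns - 1)) →
      (∀ n i, 1 ≤ i → i ≤ ns - 1 →
        F n i = (4 * K / 7) *
          ((T n i) ^ ((7:ℝ)/2) - (T n (i-1)) ^ ((7:ℝ)/2))
          / (Δs i + Δs (i-1))) →
      (∀ n, ∀ i < ns,
        (T (n+1) i - T n i) / Δt = (F (n+1) (i+1) - F (n+1) i) / Δs i) →
      ∀ Nt : ℕ,
        (∑ n ∈ Finset.range (Nt+1), ∑ i ∈ Finset.range (ns-1),
          Δt * ((T (n+1) (i+1)) ^ ((7:ℝ)/2) - (T (n+1) i) ^ ((7:ℝ)/2))^2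
            / (Δs i + Δs (i+1))) ≤ C :=
  implicit_scheme_seminorm_estimate_general ns hns Δs hΔs K γ hK hγ T0
end

section
/- Let n_s ≥ 2, let Δs_0, …, Δs_{n_s-1} > 0, K_∥ > 0, γ ≥ 0, Δt > 0, and let n ∈ ℕ. Suppose the numbers (T_i^n)_i and (T_i^{n+1})_i are all nonnegative and satisfy one step of the implicit finite volume scheme: (T_i^{n+1} − T_i^n)/Δt = (F_{i+1/2}^{n+1} − F_{i−1/2}^{n+1})/Δs_i for 0 ≤ i ≤ n_s−1, where F_{i+1/2}^{n+1} = (4K_∥/7)·((T_{i+1}^{n+1})^{7/2} − (T_i^{n+1})^{7/2})/(Δs_{i+1} + Δs_i) for 0 ≤ i ≤ n_s−2, F_{−1/2}^{n+1} = γ T_0^{n+1}, F_{n_s−1/2}^{n+1} = −γ T_{n_s−1}^{n+1}. Then for every convex continuously differentiable function φ : ℝ → ℝ, Σ_{i=0}^{n_s−1} Δs_i φ(T_i^{n+1}) − Σ_{i=0}^{n_s−1} Δs_i φ(T_i^n) ≤ −γΔt[φ'(T_0^{n+1}) T_0^{n+1} + φ'(T_{n_s−1}^{n+1}) T_{n_s−1}^{n+1}]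 − (4K_∥/7)·Δt·Σ_{i=0}^{n_s−2} [φ'(T_{i+1}^{n+1}) − φ'(T_i^{n+1})] · ((T_{i+1}^{n+1})^{7/2} − (T_i^{n+1})^{7/2})/(Δs_i + Δs_{i+1}). -/
/-!
Convexity gives `φ(Tᵢⁿ⁺¹) - φ(Tᵢⁿ) ≤ φ'(Tᵢⁿ⁺¹) (Tᵢⁿ⁺¹ - Tᵢⁿ)`, and the scheme turns
`Δsᵢ (Tᵢⁿ⁺¹ - Tᵢⁿ)` into `Δt (F_{i+1/2} - F_{i-1/2})`. Summing over the cells and summing by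
parts leaves the boundary fluxes `±γ T` and the interior fluxes paired with the jumps of
`φ'(Tⁿ⁺¹)`.
-/

open Finset

theorem ConvexOn.sub_le_deriv_mul_sub {S : Set ℝ} {f : ℝ → ℝ} (hf : ConvexOn ℝ S f)
    {a b : ℝ} (ha : a ∈ S) (hb : b ∈ S) (hfa : DifferentiableAt ℝ f a) :
    f a - f b ≤ deriv f a * (a - b) := by
  rcases lt_trichotomy a b with hab | rfl | hab
  · have hslope := hf.deriv_le_slope ha hb hab hfa
    rw [slope_def_field, le_div_iff₀ (sub_pos.2 hab)] at hslope
    linarith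
  · simp
  · have hslope := hf.slope_le_deriv hb ha hab hfa
    rw [slope_def_field, div_le_iff₀ (sub_pos.2 hab)] at hslope
    linarith

theorem Finset.sum_range_succ_mul_sub_by_parts {R : Type*} [CommRing R] (g F : ℕ → R) (n : ℕ) :
    ∑ i ∈ range (n + 1), g i * (F (i + 1) - F i)
      = g n * F (n + 1) - g 0 * F 0 - ∑ i ∈ range n, (g (i + 1) - g i) * F (i + 1) := by
  induction n with
  | zero => simp [mul_sub]
  | succ n ih =>
    rw [sum_range_succ, ih, sum_range_succ]
    ring

theorem ConvexOn.mul_sub_le_of_implicit_step {φ : ℝ → ℝ} (hφ : ConvexOn ℝ Set.univ φ)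
    {a b d Δs Δt : ℝ} (hφb : DifferentiableAt ℝ φ b) (hΔs : 0 < Δs) (hΔt : Δt ≠ 0)
    (hstep : (b - a) / Δt = d / Δs) :
    Δs * φ b - Δs * φ a ≤ Δt * (deriv φ b * d) := by
  rw [div_eq_div_iff hΔt hΔs.ne'] at hstep
  calc Δs * φ b - Δs * φ a = Δs * (φ b - φ a) := by ring
    _ ≤ Δs * (deriv φ b * (b - a)) :=
        mul_le_mul_of_nonneg_left
          (hφ.sub_le_deriv_mul_sub (Set.mem_univ b) (Set.mem_univ a) hφb) hΔs.le
    _ = deriv φ b * ((b - a) * Δs) := by ring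
    _ = Δt * (deriv φ b * d) := by rw [hstep]; ring

theorem implicit_scheme_entropy_inequality_general
    (ns : ℕ) (hns : 2 ≤ ns)
    (Δs : ℕ → ℝ) (hΔs : ∀ i < ns, 0 < Δs i)
    (K γ Δt : ℝ) (hΔt : 0 < Δt)
    (Tn Tn1 : ℕ → ℝ) (F : ℕ → ℝ)
    (hF0 : F 0 = γ * Tn1 0)
    (hFns : F ns = -γ * Tn1 (ns - 1))
    (hFint : ∀ i, 1 ≤ i → i ≤ ns - 1 →
      F i = (4 * K / 7) *
        ((Tn1 i) ^ ((7:ℝ)/2) - (Tn1 (i-1)) ^ ((7:ℝ)/2)) / (Δs i + Δs (i-1)))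
    (hscheme : ∀ i < ns, (Tn1 i - Tn i) / Δt = (F (i+1) - F i) / Δs i) :
    ∀ φ : ℝ → ℝ, ConvexOn ℝ Set.univ φ → ContDiff ℝ 1 φ →
      (∑ i ∈ Finset.range ns, Δs i * φ (Tn1 i))
        - (∑ i ∈ Finset.range ns, Δs i * φ (Tn i))
      ≤ -(γ * Δt) * (deriv φ (Tn1 0) * Tn1 0
            + deriv φ (Tn1 (ns-1)) * Tn1 (ns-1))
        - (4 * K / 7) * Δt *
          (∑ i ∈ Finset.range (ns-1),
            (deriv φ (Tn1 (i+1)) - deriv φ (Tn1 i)) *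
              ((Tn1 (i+1)) ^ ((7:ℝ)/2) - (Tn1 i) ^ ((7:ℝ)/2))
              / (Δs i + Δs (i+1))) := by
  intro φ hφ hC1
  have hφd : Differentiable ℝ φ := hC1.differentiable one_ne_zero
  obtain ⟨m, rfl⟩ : ∃ m, ns = m + 1 := ⟨ns - 1, by omega⟩
  simp only [Nat.add_sub_cancel] at hFns ⊢
  have hcells : (∑ i ∈ range (m + 1), Δs i * φ (Tn1 i)) - ∑ i ∈ range (m + 1), Δs i * φ (Tn i)
      ≤ Δt * ∑ i ∈ range (m + 1), deriv φ (Tn1 i) * (F (i + 1) - F i) := by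
    rw [← sum_sub_distrib, mul_sum]
    refine sum_le_sum fun i hi => ?_
    rw [mem_range] at hi
    exact hφ.mul_sub_le_of_implicit_step (hφd _) (hΔs i hi) hΔt.ne' (hscheme i hi)
  have hinterior : ∑ i ∈ range m, (deriv φ (Tn1 (i + 1)) - deriv φ (Tn1 i)) * F (i + 1)
      = (4 * K / 7) * ∑ i ∈ range m, (deriv φ (Tn1 (i + 1)) - deriv φ (Tn1 i)) *
          ((Tn1 (i + 1)) ^ ((7:ℝ)/2) - (Tn1 i) ^ ((7:ℝ)/2)) / (Δs i + Δs (i + 1)) := by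
    rw [mul_sum]
    refine sum_congr rfl fun i hi => ?_
    rw [mem_range] at hi
    rw [hFint (i + 1) (by omega) (by omega), Nat.add_sub_cancel, add_comm (Δs (i + 1))]
    ring
  rw [sum_range_succ_mul_sub_by_parts, hFns, hF0, hinterior] at hcells
  linarith

/-- Key discrete entropy inequality from the proof of Proposition 2.2:
for one step of the backward Euler finite volume scheme with nonnegative
values, and any convex `C¹` function `φ`, the discrete entropy
`∑ Δsᵢ φ(Tᵢ)` decreases up to the boundary and dissipation terms.
Here `F i` denotes the numerical flux `F_{i-1/2}^{n+1}` computed from the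
values `Tn1` at time level `n+1`. -/
theorem implicit_scheme_entropy_inequality
    (ns : ℕ) (hns : 2 ≤ ns)
    (Δs : ℕ → ℝ) (hΔs : ∀ i < ns, 0 < Δs i)
    (K γ Δt : ℝ) (hK : 0 < K) (hγ : 0 ≤ γ) (hΔt : 0 < Δt)
    (Tn Tn1 : ℕ → ℝ) (F : ℕ → ℝ)
    (hTn : ∀ i < ns, 0 ≤ Tn i) (hTn1 : ∀ i < ns, 0 ≤ Tn1 i)
    (hF0 : F 0 = γ * Tn1 0)
    (hFns : F ns = -γ * Tn1 (ns - 1))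
    (hFint : ∀ i, 1 ≤ i → i ≤ ns - 1 →
      F i = (4 * K / 7) *
        ((Tn1 i) ^ ((7:ℝ)/2) - (Tn1 (i-1)) ^ ((7:ℝ)/2)) / (Δs i + Δs (i-1)))
    (hscheme : ∀ i < ns, (Tn1 i - Tn i) / Δt = (F (i+1) - F i) / Δs i) :
    ∀ φ : ℝ → ℝ, ConvexOn ℝ Set.univ φ → ContDiff ℝ 1 φ →
      (∑ i ∈ Finset.range ns, Δs i * φ (Tn1 i))
        - (∑ i ∈ Finset.range ns, Δs i * φ (Tn i))
      ≤ -(γ * Δt) * (deriv φ (Tn1 0) * Tn1 0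
            + deriv φ (Tn1 (ns-1)) * Tn1 (ns-1))
        - (4 * K / 7) * Δt *
          (∑ i ∈ Finset.range (ns-1),
            (deriv φ (Tn1 (i+1)) - deriv φ (Tn1 i)) *
              ((Tn1 (i+1)) ^ ((7:ℝ)/2) - (Tn1 i) ^ ((7:ℝ)/2))
              / (Δs i + Δs (i+1))) :=
  implicit_scheme_entropy_inequality_general ns hns Δs hΔs K γ Δt hΔt Tn Tn1 F hF0 hFns hFint
    hscheme
end

section
/- Let K_∥ > 0, γ ≥ 0, Δt > 0, ν > 0. Let T^n, T^{n+1} : [0,1] → ℝ be twice continuously differentiable functions with T^n nonnegative, satisfying the semi-discrete IMEX relation (T^{n+1}(s) − T^n(s))/Δt − ν (T^{n+1})''(s) = d/ds[ (K_∥ (T^n(s))^{5/2} − ν) (T^n)'(s) ] for all s ∈ (0,1), together with the boundary conditions −ν (T^{n+1})'(0) + γ T^{n+1}(0) = (K_∥ (T^n(0))^{5/2} − ν)(T^n)'(0) and −ν (T^{n+1})'(1) − γ T^{n+1}(1) = (K_∥ (T^n(1))^{5/2} − ν)(T^n)'(1). If K_∥ · (sup_{s∈[0,1]} T^n(s))^{5/2}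 ≤ ν, then (1/2)∫_0^1 (T^{n+1})² ds + (νΔt/2)∫_0^1 |(T^{n+1})'|² ds ≤ (1/2)∫_0^1 (T^n)² ds + (νΔt/2)∫_0^1 |(T^n)'|² ds. -/
/-!
Test the scheme against `Tⁿ⁺¹` and integrate by parts. With the total flux
`w = ν ∂ₛTⁿ⁺¹ + (K (Tⁿ)^{5/2} - ν) ∂ₛTⁿ` the scheme reads `∂ₛw = (Tⁿ⁺¹ - Tⁿ)/Δt` and the boundary
conditions are Robin conditions `w = ±γ Tⁿ⁺¹`, so the boundary term is `-γ (Tⁿ⁺¹(0)² + Tⁿ⁺¹(1)²) ≤ 0`.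
Pointwise, `(a - b) a ≥ (a² - b²)/2`, and since `0 ≤ κ := K (Tⁿ)^{5/2} ≤ ν`,
`ν q² + (κ - ν) p q = ν (q² - p²)/2 + (ν - κ)(q - p)²/2 + κ (q² + p²)/2 ≥ ν (q² - p²)/2`.
-/

open Set intervalIntegral

theorem integral_deriv_mul_add_mul_deriv_nonpos_of_robin {a b γ : ℝ} {w w' v v' : ℝ → ℝ}
    (hab : a ≤ b) (hγ : 0 ≤ γ) (hw : ContinuousOn w (Icc a b)) (hv : ContinuousOn v (Icc a b))
    (hw' : ∀ x ∈ Ioo a b, HasDerivAt w (w' x) x) (hv' : ∀ x ∈ Ioo a b, HasDerivAt v (v' x) x)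
    (hint : IntervalIntegrable (fun x => w' x * v x + w x * v' x) MeasureTheory.volume a b)
    (ha : w a = γ * v a) (hb : w b = -γ * v b) :
    ∫ x in a..b, (w' x * v x + w x * v' x) ≤ 0 := by
  rw [integral_eq_sub_of_hasDerivAt_of_le hab (hw.mul hv)
    (fun x hx => (hw' x hx).mul (hv' x hx)) hint, Pi.mul_apply, Pi.mul_apply, ha, hb]
  nlinarith [mul_nonneg hγ (sq_nonneg (v a)), mul_nonneg hγ (sq_nonneg (v b))]

theorem imex_energy_density_le {κ ν Δt a b p q : ℝ} (hΔt : 0 < Δt) (hκ : 0 ≤ κ) (hκν : κ ≤ ν) :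
    (1/2 * a^2 + ν * Δt / 2 * q^2) - (1/2 * b^2 + ν * Δt / 2 * p^2)
      ≤ Δt * ((a - b) / Δt * a + (ν * q + (κ - ν) * p) * q) := by
  have hgrad : 0 ≤ Δt * ((ν - κ) / 2 * (q - p)^2 + κ / 2 * (q^2 + p^2)) := by positivity
  have hdiff : 0 ≤ (a - b)^2 / 2 := by positivity
  have hcancel : Δt * ((a - b) / Δt * a) = (a - b) * a := by field_simp
  rw [mul_add, hcancel]
  nlinarith

theorem mul_rpow_le_of_mul_sSup_image_rpow_le {K ν p : ℝ} {f : ℝ → ℝ} {S : Set ℝ}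
    (hS : IsCompact S) (hf : ContinuousOn f S) (hK : 0 ≤ K) (hp : 0 ≤ p)
    (hpos : ∀ s ∈ S, 0 ≤ f s) (hsup : K * sSup (f '' S) ^ p ≤ ν) {s : ℝ} (hs : s ∈ S) :
    K * f s ^ p ≤ ν :=
  le_trans (mul_le_mul_of_nonneg_left (Real.rpow_le_rpow (hpos s hs)
    (le_csSup (hS.bddAbove_image hf) (mem_image_of_mem f hs)) hp) hK) hsup

theorem contDiff_mul_rpow_sub_mul_deriv {u : ℝ → ℝ} (hu : ContDiff ℝ 2 u) (K ν : ℝ) {p : ℝ}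
    (hp : 1 ≤ p) : ContDiff ℝ 1 (fun x => (K * u x ^ p - ν) * deriv u x) :=
  ((contDiff_const.mul ((Real.contDiff_rpow_const_of_le (n := 1) (by exact_mod_cast hp)).comp
    (hu.of_le (by norm_num)))).sub contDiff_const).mul hu.deriv'

theorem imex_energy_stability_1D_general
    (K γ Δt ν : ℝ) (hK : 0 < K) (hγ : 0 ≤ γ) (hΔt : 0 < Δt)
    (Tn Tn1 : ℝ → ℝ)
    (hTn : ContDiff ℝ 2 Tn) (hTn1 : ContDiff ℝ 2 Tn1)
    (hTnpos : ∀ s ∈ Set.Icc (0:ℝ) 1, 0 ≤ Tn s)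
    (hpde : ∀ s ∈ Set.Ioo (0:ℝ) 1,
      (Tn1 s - Tn s) / Δt - ν * deriv (deriv Tn1) s
        = deriv (fun x => (K * Tn x ^ ((5:ℝ)/2) - ν) * deriv Tn x) s)
    (hbc0 : -ν * deriv Tn1 0 + γ * Tn1 0
        = (K * Tn 0 ^ ((5:ℝ)/2) - ν) * deriv Tn 0)
    (hbc1 : -ν * deriv Tn1 1 - γ * Tn1 1
        = (K * Tn 1 ^ ((5:ℝ)/2) - ν) * deriv Tn 1)
    (hsup : K * (sSup (Tn '' Set.Icc (0:ℝ) 1)) ^ ((5:ℝ)/2) ≤ ν) :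
    (1/2) * (∫ s in (0:ℝ)..1, (Tn1 s)^2)
      + (ν * Δt / 2) * (∫ s in (0:ℝ)..1, (deriv Tn1 s)^2)
    ≤ (1/2) * (∫ s in (0:ℝ)..1, (Tn s)^2)
      + (ν * Δt / 2) * (∫ s in (0:ℝ)..1, (deriv Tn s)^2) := by
  have hu := hTn.continuous
  have hv := hTn1.continuous
  have hu' := hTn.continuous_deriv (by norm_num)
  have hTn1' : ContDiff ℝ 1 (deriv Tn1) := hTn1.deriv'
  have hv' := hTn1'.continuous
  set h := fun x => (K * Tn x ^ ((5:ℝ)/2) - ν) * deriv Tn x with h_def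
  have hh : ContDiff ℝ 1 h := contDiff_mul_rpow_sub_mul_deriv hTn K ν (by norm_num)
  set w := fun x => ν * deriv Tn1 x + h x with w_def
  have hw : Continuous w := (continuous_const.mul hv').add hh.continuous
  have hw' : ∀ s ∈ Ioo (0:ℝ) 1, HasDerivAt w ((Tn1 s - Tn s) / Δt) s := by
    intro s hs
    have := ((hTn1'.differentiable one_ne_zero s).hasDerivAt.const_mul ν).add
      (hh.differentiable one_ne_zero s).hasDerivAt
    rwa [← hpde s hs, add_sub_cancel] at this
  have hflux : ∫ s in (0:ℝ)..1, ((Tn1 s - Tn s) / Δt * Tn1 s + w s * deriv Tn1 s) ≤ 0 :=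
    integral_deriv_mul_add_mul_deriv_nonpos_of_robin zero_le_one hγ hw.continuousOn
      hv.continuousOn hw' (fun s _ => (hTn1.differentiable (by norm_num) s).hasDerivAt)
      (Continuous.intervalIntegrable (by fun_prop) _ _) (by simp only [w_def, h_def]; linarith)
      (by simp only [w_def, h_def]; linarith)
  have hdens : ∫ s in (0:ℝ)..1, ((1/2 * Tn1 s ^ 2 + ν * Δt / 2 * deriv Tn1 s ^ 2)
        - (1/2 * Tn s ^ 2 + ν * Δt / 2 * deriv Tn s ^ 2))
      ≤ ∫ s in (0:ℝ)..1, Δt * ((Tn1 s - Tn s) / Δt * Tn1 s + w s * deriv Tn1 s) :=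
    integral_mono_on zero_le_one (Continuous.intervalIntegrable (by fun_prop) _ _)
      (Continuous.intervalIntegrable (by fun_prop) _ _) fun s hs =>
        imex_energy_density_le hΔt (mul_nonneg hK.le (Real.rpow_nonneg (hTnpos s hs) _))
          (mul_rpow_le_of_mul_sSup_image_rpow_le isCompact_Icc hu.continuousOn hK.le
            (by norm_num) hTnpos hsup hs)
  have hscaled := mul_nonpos_of_nonneg_of_nonpos hΔt.le hflux
  rw [integral_const_mul, integral_sub, integral_add, integral_add, integral_const_mul,
    integral_const_mul, integral_const_mul, integral_const_mul] at hdens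
  · linarith
  all_goals exact Continuous.intervalIntegrable (by fun_prop) _ _

/-- Proposition 2.3: energy stability of the IMEX time discretization of
the 1D nonlinear heat equation `∂ₜT = ∂ₛ(K T^{5/2} ∂ₛT)` with nonlinear
Robin boundary conditions, provided the viscosity `ν` dominates
`K (sup T^n)^{5/2}`. -/
theorem imex_energy_stability_1D
    (K γ Δt ν : ℝ) (hK : 0 < K) (hγ : 0 ≤ γ) (hΔt : 0 < Δt) (hν : 0 < ν)
    (Tn Tn1 : ℝ → ℝ)
    (hTn : ContDiff ℝ 2 Tn) (hTn1 : ContDiff ℝ 2 Tn1)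
    (hTnpos : ∀ s ∈ Set.Icc (0:ℝ) 1, 0 ≤ Tn s)
    (hpde : ∀ s ∈ Set.Ioo (0:ℝ) 1,
      (Tn1 s - Tn s) / Δt - ν * deriv (deriv Tn1) s
        = deriv (fun x => (K * Tn x ^ ((5:ℝ)/2) - ν) * deriv Tn x) s)
    (hbc0 : -ν * deriv Tn1 0 + γ * Tn1 0
        = (K * Tn 0 ^ ((5:ℝ)/2) - ν) * deriv Tn 0)
    (hbc1 : -ν * deriv Tn1 1 - γ * Tn1 1
        = (K * Tn 1 ^ ((5:ℝ)/2) - ν) * deriv Tn 1)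
    (hsup : K * (sSup (Tn '' Set.Icc (0:ℝ) 1)) ^ ((5:ℝ)/2) ≤ ν) :
    (1/2) * (∫ s in (0:ℝ)..1, (Tn1 s)^2)
      + (ν * Δt / 2) * (∫ s in (0:ℝ)..1, (deriv Tn1 s)^2)
    ≤ (1/2) * (∫ s in (0:ℝ)..1, (Tn s)^2)
      + (ν * Δt / 2) * (∫ s in (0:ℝ)..1, (deriv Tn s)^2) :=
  imex_energy_stability_1D_general K γ Δt ν hK hγ hΔt Tn Tn1 hTn hTn1 hTnpos hpde hbc0 hbc1 hsup
end

section
/- Let Ω = (0,1)×(0,1) with variables (s,r), let K_∥ > 0, γ ≥ 0, Δt > 0, ν > 0. Let T^n, T^⋆ : [0,1]×[0,1] → ℝ be twice continuously differentiable, with T^n nonnegative, satisfying for all (s,r) ∈ Ω: (T^⋆ − T^n)/Δt − ∂_s[(K_∥ (T^n)^{5/2} − ν) ∂_s T^n] − ν ∂_{ss} T^⋆ = 0, with boundary conditions: for r ∈ (1/2,1), (K_∥ (T^n(0,r))^{5/2} − ν)∂_sT^n(0,r) = γ T^⋆(0,r) − ν∂_sT^⋆(0,r) and (K_∥ (T^n(1,r))^{5/2}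 − ν)∂_sT^n(1,r) = −γ T^⋆(1,r) − ν∂_sT^⋆(1,r); and for r ∈ (0,1/2), periodicity in s: T^n(0,r)=T^n(1,r), ∂_sT^n(0,r)=∂_sT^n(1,r), T^⋆(0,r)=T^⋆(1,r), ∂_sT^⋆(0,r)=∂_sT^⋆(1,r). If K_∥ · (sup_Ω T^n)^{5/2} ≤ ν, then (1/2)∫_Ω (T^⋆)² dr ds + (νΔt/2)∫_Ω |∂_s T^⋆|² dr ds ≤ (1/2)∫_Ω (T^n)² dr ds + (νΔt/2)∫_Ω |∂_s T^n|² dr ds. -/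
/-!
Multiply the scheme by `T⋆` and integrate by parts in `s` on each slice `r = const`. With the
total flux `G = (K (Tⁿ)^{5/2} - ν) ∂ₛTⁿ + ν ∂ₛT⋆`, the scheme reads `(T⋆ - Tⁿ)/Δt = ∂ₛG`, and
the boundary term `[T⋆ G]₀¹` vanishes in the periodic region and equals
`-γ (T⋆(0)² + T⋆(1)²) ≤ 0` in the limiter region. The bound on `sup Tⁿ` gives
`|K (Tⁿ)^{5/2} - ν| ≤ ν`, hence `-∂ₛT⋆ G ≤ ν/2 (|∂ₛTⁿ|² - |∂ₛT⋆|²)` pointwise, while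
`T⋆ (T⋆ - Tⁿ) ≥ ((T⋆)² - (Tⁿ)²)/2`. This proves the estimate on almost every slice, and
Fubini integrates it over `r`.
-/

open Set MeasureTheory intervalIntegral Function

theorem neg_mul_flux_le_of_abs_le {c ν x y : ℝ} (hc : |c| ≤ ν) :
    -(y * (c * x + ν * y)) ≤ ν / 2 * x ^ 2 - ν / 2 * y ^ 2 := by
  obtain ⟨h₁, h₂⟩ := abs_le.mp hc
  nlinarith [mul_nonneg (neg_le_iff_add_nonneg.mp h₁) (sq_nonneg (x + y)),
    mul_nonneg (sub_nonneg.mpr h₂) (sq_nonneg (x - y))]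

theorem abs_mul_rpow_sub_le {K t M ν p : ℝ} (hK : 0 ≤ K) (ht : 0 ≤ t) (htM : t ≤ M) (hp : 0 ≤ p)
    (hM : K * M ^ p ≤ ν) : |K * t ^ p - ν| ≤ ν := by
  have hKt : K * t ^ p ≤ ν := le_trans (by gcongr) hM
  have hKt₀ : 0 ≤ K * t ^ p := mul_nonneg hK (Real.rpow_nonneg ht p)
  exact abs_sub_le_of_nonneg_of_le hKt₀ hKt (hKt₀.trans hKt) le_rfl

theorem energy_le_of_hasDerivAt_flux {u v G : ℝ → ℝ} {a b Δt ν : ℝ} (hab : a ≤ b) (hΔt : 0 < Δt)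
    (hu : ContDiff ℝ 1 u) (hv : ContDiff ℝ 1 v) (hG : ContinuousOn G (Icc a b))
    (hG' : ∀ x ∈ Ioo a b, HasDerivAt G ((v x - u x) / Δt) x)
    (hdiss : ∀ x ∈ Icc a b, -(deriv v x * G x) ≤ ν / 2 * deriv u x ^ 2 - ν / 2 * deriv v x ^ 2)
    (hbdry : v b * G b - v a * G a ≤ 0) :
    1 / 2 * (∫ x in a..b, v x ^ 2) + ν * Δt / 2 * ∫ x in a..b, deriv v x ^ 2
      ≤ 1 / 2 * (∫ x in a..b, u x ^ 2) + ν * Δt / 2 * ∫ x in a..b, deriv u x ^ 2 := by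
  have hu₀ := hu.continuous
  have hv₀ := hv.continuous
  have hu₁ := hu.continuous_deriv le_rfl
  have hv₁ := hv.continuous_deriv le_rfl
  have hvG : ContinuousOn (fun x => deriv v x * G x) (uIcc a b) := by
    rw [uIcc_of_le hab]; exact hv₁.continuousOn.mul hG
  have hibp : ∫ x in a..b, v x * ((v x - u x) / Δt)
      = v b * G b - v a * G a - ∫ x in a..b, deriv v x * G x :=
    integral_mul_deriv_eq_deriv_mul_of_hasDerivAt hv₀.continuousOn (by rwa [uIcc_of_le hab])
      (fun x _ => (hv.differentiable one_ne_zero x).hasDerivAt)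
      (by rwa [min_eq_left hab, max_eq_right hab])
      (hv₁.intervalIntegrable a b) ((by fun_prop : Continuous _).intervalIntegrable a b)
  have hkin : ∫ x in a..b, (v x ^ 2 - u x ^ 2)
      ≤ ∫ x in a..b, 2 * Δt * (v x * ((v x - u x) / Δt)) := by
    refine integral_mono_on hab ((by fun_prop : Continuous _).intervalIntegrable a b)
      ((by fun_prop : Continuous _).intervalIntegrable a b) fun x _ => ?_
    field_simp
    nlinarith [sq_nonneg (v x - u x)]
  have hflux : ∫ x in a..b, -(deriv v x * G x)
      ≤ ∫ x in a..b, (ν / 2 * deriv u x ^ 2 - ν / 2 * deriv v x ^ 2) :=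
    integral_mono_on hab hvG.intervalIntegrable.neg
      ((by fun_prop : Continuous _).intervalIntegrable a b) hdiss
  rw [integral_sub ((by fun_prop : Continuous _).intervalIntegrable a b)
      ((by fun_prop : Continuous _).intervalIntegrable a b),
    intervalIntegral.integral_const_mul, hibp] at hkin
  rw [intervalIntegral.integral_neg,
    integral_sub ((by fun_prop : Continuous _).intervalIntegrable a b)
      ((by fun_prop : Continuous _).intervalIntegrable a b),
    intervalIntegral.integral_const_mul, intervalIntegral.integral_const_mul] at hflux
  linarith [mul_le_mul_of_nonneg_left hflux hΔt.le, mul_nonpos_of_nonneg_of_nonpos hΔt.le hbdry]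

theorem imex_energy_le_1d {u v c : ℝ → ℝ} {a b Δt ν : ℝ} (hab : a ≤ b) (hΔt : 0 < Δt)
    (hu : ContDiff ℝ 2 u) (hv : ContDiff ℝ 2 v) (hc : ContDiff ℝ 1 c)
    (hcν : ∀ x ∈ Icc a b, |c x| ≤ ν)
    (hpde : ∀ x ∈ Ioo a b,
      (v x - u x) / Δt - deriv (fun y => c y * deriv u y) x - ν * deriv (deriv v) x = 0)
    (hbdry : v b * (c b * deriv u b + ν * deriv v b)
      - v a * (c a * deriv u a + ν * deriv v a) ≤ 0) :
    1 / 2 * (∫ x in a..b, v x ^ 2) + ν * Δt / 2 * ∫ x in a..b, deriv v x ^ 2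
      ≤ 1 / 2 * (∫ x in a..b, u x ^ 2) + ν * Δt / 2 * ∫ x in a..b, deriv u x ^ 2 := by
  have hu' : ContDiff ℝ 1 (deriv u) := hu.deriv'
  have hv' : ContDiff ℝ 1 (deriv v) := hv.deriv'
  have hflux : ContDiff ℝ 1 fun x => c x * deriv u x + ν * deriv v x :=
    (hc.mul hu').add (contDiff_const.mul hv')
  refine energy_le_of_hasDerivAt_flux hab hΔt (hu.of_le one_le_two) (hv.of_le one_le_two)
    hflux.continuous.continuousOn (fun x hx => ?_)
    (fun x hx => neg_mul_flux_le_of_abs_le (hcν x hx)) hbdry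
  have hv'x := hv'.differentiable one_ne_zero x
  have hderiv : deriv (fun y => c y * deriv u y + ν * deriv v y) x = (v x - u x) / Δt := by
    rw [deriv_fun_add ((hc.mul hu').differentiable one_ne_zero x) (hv'x.const_mul ν),
      deriv_const_mul _ hv'x]
    linarith [hpde x hx]
  exact hderiv ▸ (hflux.differentiable one_ne_zero x).hasDerivAt

theorem continuous_deriv_uncurry_fst {V E : Type*} [NormedAddCommGroup V] [NormedSpace ℝ V]
    [NormedAddCommGroup E] [NormedSpace ℝ E] {F : ℝ → V → E} (hF : ContDiff ℝ 1 (uncurry F)) :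
    Continuous fun p : ℝ × V => deriv (fun x => F x p.2) p.1 := by
  have hpartial : (fun p : ℝ × V => deriv (fun x => F x p.2) p.1)
      = fun p => fderiv ℝ (uncurry F) p (1, 0) := by
    funext p
    have hline : HasDerivAt (fun x : ℝ => (x, p.2)) ((1 : ℝ), (0 : V)) p.1 :=
      (hasDerivAt_id p.1).prodMk (hasDerivAt_const p.1 p.2)
    exact ((hF.differentiable one_ne_zero p).hasFDerivAt.comp_hasDerivAt p.1 hline).deriv
  rw [hpartial]
  exact (hF.continuous_fderiv one_ne_zero).clm_apply continuous_const

theorem intervalIntegral_intervalIntegral_swap_of_continuous {F : ℝ → ℝ → ℝ}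
    (hF : Continuous (uncurry F)) (a b c d : ℝ) :
    ∫ x in a..b, ∫ y in c..d, F x y = ∫ y in c..d, ∫ x in a..b, F x y :=
  intervalIntegral_intervalIntegral_swap <|
    (hF.continuousOn.integrableOn_compact (isCompact_uIcc.prod isCompact_uIcc)).mono_set
      (prod_mono uIoc_subset_uIcc uIoc_subset_uIcc)

theorem integral_integral_add_le_of_ae_slice {f₁ f₂ g₁ g₂ : ℝ → ℝ → ℝ} {a b c d α β : ℝ}
    (hcd : c ≤ d) (hf₁ : Continuous (uncurry f₁)) (hf₂ : Continuous (uncurry f₂))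
    (hg₁ : Continuous (uncurry g₁)) (hg₂ : Continuous (uncurry g₂))
    (h : ∀ᵐ y ∂volume.restrict (Icc c d),
      α * (∫ x in a..b, f₁ x y) + β * (∫ x in a..b, f₂ x y)
        ≤ α * (∫ x in a..b, g₁ x y) + β * ∫ x in a..b, g₂ x y) :
    α * (∫ x in a..b, ∫ y in c..d, f₁ x y) + β * (∫ x in a..b, ∫ y in c..d, f₂ x y)
      ≤ α * (∫ x in a..b, ∫ y in c..d, g₁ x y) + β * ∫ x in a..b, ∫ y in c..d, g₂ x y := by
  have slice_integrable {f : ℝ → ℝ → ℝ} (hf : Continuous (uncurry f)) :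
      IntervalIntegrable (fun y => ∫ x in a..b, f x y) volume c d :=
    (continuous_parametric_intervalIntegral_of_continuous' (f := fun y x => f x y)
      (hf.comp continuous_swap) a b).intervalIntegrable c d
  rw [intervalIntegral_intervalIntegral_swap_of_continuous hf₁,
    intervalIntegral_intervalIntegral_swap_of_continuous hf₂,
    intervalIntegral_intervalIntegral_swap_of_continuous hg₁,
    intervalIntegral_intervalIntegral_swap_of_continuous hg₂,
    ← intervalIntegral.integral_const_mul α, ← intervalIntegral.integral_const_mul β,
    ← intervalIntegral.integral_const_mul α, ← intervalIntegral.integral_const_mul β,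
    ← intervalIntegral.integral_add ((slice_integrable hf₁).const_mul α)
      ((slice_integrable hf₂).const_mul β),
    ← intervalIntegral.integral_add ((slice_integrable hg₁).const_mul α)
      ((slice_integrable hg₂).const_mul β)]
  exact integral_mono_ae_restrict hcd
    (((slice_integrable hf₁).const_mul α).add ((slice_integrable hf₂).const_mul β))
    (((slice_integrable hg₁).const_mul α).add ((slice_integrable hg₂).const_mul β)) h

theorem imex_parallel_step_energy_2D_general
    (K γ Δt ν : ℝ) (hK : 0 < K) (hγ : 0 ≤ γ) (hΔt : 0 < Δt)
    (Tn Ts : ℝ → ℝ → ℝ)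
    (hTn : ContDiff ℝ 2 (Function.uncurry Tn))
    (hTs : ContDiff ℝ 2 (Function.uncurry Ts))
    (hTnpos : ∀ s ∈ Icc (0:ℝ) 1, ∀ r ∈ Icc (0:ℝ) 1, 0 ≤ Tn s r)
    (hpde : ∀ s ∈ Ioo (0:ℝ) 1, ∀ r ∈ Ioo (0:ℝ) 1,
      (Ts s r - Tn s r) / Δt
        - deriv (fun x => (K * (Tn x r) ^ ((5:ℝ)/2) - ν)
            * deriv (fun y => Tn y r) x) s
        - ν * deriv (deriv (fun x => Ts x r)) s = 0)
    (hbc0 : ∀ r ∈ Ioo (1/2:ℝ) 1,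
      (K * (Tn 0 r) ^ ((5:ℝ)/2) - ν) * deriv (fun x => Tn x r) 0
        = γ * Ts 0 r - ν * deriv (fun x => Ts x r) 0)
    (hbc1 : ∀ r ∈ Ioo (1/2:ℝ) 1,
      (K * (Tn 1 r) ^ ((5:ℝ)/2) - ν) * deriv (fun x => Tn x r) 1
        = -(γ * Ts 1 r) - ν * deriv (fun x => Ts x r) 1)
    (hper : ∀ r ∈ Ioo (0:ℝ) (1/2),
      Tn 0 r = Tn 1 r
      ∧ deriv (fun x => Tn x r) 0 = deriv (fun x => Tn x r) 1
      ∧ Ts 0 r = Ts 1 r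
      ∧ deriv (fun x => Ts x r) 0 = deriv (fun x => Ts x r) 1)
    (hsup : K * (sSup (Function.uncurry Tn ''
        (Icc (0:ℝ) 1 ×ˢ Icc (0:ℝ) 1))) ^ ((5:ℝ)/2) ≤ ν) :
    (1/2) * (∫ s in (0:ℝ)..1, ∫ r in (0:ℝ)..1, (Ts s r)^2)
      + (ν * Δt / 2) * (∫ s in (0:ℝ)..1, ∫ r in (0:ℝ)..1,
          (deriv (fun x => Ts x r) s)^2)
    ≤ (1/2) * (∫ s in (0:ℝ)..1, ∫ r in (0:ℝ)..1, (Tn s r)^2)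
      + (ν * Δt / 2) * (∫ s in (0:ℝ)..1, ∫ r in (0:ℝ)..1,
          (deriv (fun x => Tn x r) s)^2) := by
  have slice_contDiff {T : ℝ → ℝ → ℝ} (hT : ContDiff ℝ 2 (uncurry T)) (r : ℝ) :
      ContDiff ℝ 2 fun x => T x r :=
    hT.comp (contDiff_id.prodMk contDiff_const)
  have hTn_le_sSup : ∀ s ∈ Icc (0:ℝ) 1, ∀ r ∈ Icc (0:ℝ) 1,
      Tn s r ≤ sSup (uncurry Tn '' (Icc (0:ℝ) 1 ×ˢ Icc (0:ℝ) 1)) := fun s hs r hr =>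
    le_csSup ((isCompact_Icc.prod isCompact_Icc).image hTn.continuous).bddAbove
      (mem_image_of_mem (uncurry Tn) (mk_mem_prod hs hr))
  refine integral_integral_add_le_of_ae_slice zero_le_one (hTs.continuous.pow 2)
    ((continuous_deriv_uncurry_fst (hTs.of_le one_le_two)).pow 2) (hTn.continuous.pow 2)
    ((continuous_deriv_uncurry_fst (hTn.of_le one_le_two)).pow 2)
    ((ae_restrict_congr_set Ioo_ae_eq_Icc).mp ?_)
  filter_upwards [ae_restrict_mem measurableSet_Ioo, ae_restrict_of_ae (volume.ae_ne (1 / 2))]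
    with r hr hr_ne
  have hr' : r ∈ Icc (0:ℝ) 1 := Ioo_subset_Icc_self hr
  refine imex_energy_le_1d (c := fun x => K * Tn x r ^ ((5:ℝ)/2) - ν) zero_le_one hΔt
    (slice_contDiff hTn r) (slice_contDiff hTs r) ?_
    (fun s hs => abs_mul_rpow_sub_le hK.le (hTnpos s hs r hr') (hTn_le_sSup s hs r hr')
      (by norm_num) hsup)
    (fun s hs => hpde s hs r hr) ?_
  · exact (contDiff_const.mul ((Real.contDiff_rpow_const_of_le (n := 1) (by norm_num)).comp
      ((slice_contDiff hTn r).of_le one_le_two))).sub contDiff_const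
  rcases hr_ne.lt_or_gt with hlt | hgt
  · obtain ⟨hTn01, hdTn01, hTs01, hdTs01⟩ := hper r ⟨hr.1, hlt⟩
    simp only [hTn01, hdTn01, hTs01, hdTs01, sub_self, le_refl]
  · rw [hbc0 r ⟨hgt, hr.2⟩, hbc1 r ⟨hgt, hr.2⟩]
    nlinarith [mul_nonneg hγ (sq_nonneg (Ts 0 r)), mul_nonneg hγ (sq_nonneg (Ts 1 r))]

/-- Energy estimate for the first (parallel-direction, IMEX) step of the
directional splitting scheme for the 2D nonlinear heat equation on
`Ω = (0,1) × (0,1)`, with limiter boundary conditions for `r ∈ (1/2,1)`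
and periodicity in `s` for `r ∈ (0,1/2)`.  `Tn s r` and `Ts s r` denote
`T^n(s,r)` and `T^⋆(s,r)`. -/
theorem imex_parallel_step_energy_2D
    (K γ Δt ν : ℝ) (hK : 0 < K) (hγ : 0 ≤ γ) (hΔt : 0 < Δt) (hν : 0 < ν)
    (Tn Ts : ℝ → ℝ → ℝ)
    (hTn : ContDiff ℝ 2 (Function.uncurry Tn))
    (hTs : ContDiff ℝ 2 (Function.uncurry Ts))
    (hTnpos : ∀ s ∈ Icc (0:ℝ) 1, ∀ r ∈ Icc (0:ℝ) 1, 0 ≤ Tn s r)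
    (hpde : ∀ s ∈ Ioo (0:ℝ) 1, ∀ r ∈ Ioo (0:ℝ) 1,
      (Ts s r - Tn s r) / Δt
        - deriv (fun x => (K * (Tn x r) ^ ((5:ℝ)/2) - ν)
            * deriv (fun y => Tn y r) x) s
        - ν * deriv (deriv (fun x => Ts x r)) s = 0)
    (hbc0 : ∀ r ∈ Ioo (1/2:ℝ) 1,
      (K * (Tn 0 r) ^ ((5:ℝ)/2) - ν) * deriv (fun x => Tn x r) 0
        = γ * Ts 0 r - ν * deriv (fun x => Ts x r) 0)
    (hbc1 : ∀ r ∈ Ioo (1/2:ℝ) 1,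
      (K * (Tn 1 r) ^ ((5:ℝ)/2) - ν) * deriv (fun x => Tn x r) 1
        = -(γ * Ts 1 r) - ν * deriv (fun x => Ts x r) 1)
    (hper : ∀ r ∈ Ioo (0:ℝ) (1/2),
      Tn 0 r = Tn 1 r
      ∧ deriv (fun x => Tn x r) 0 = deriv (fun x => Tn x r) 1
      ∧ Ts 0 r = Ts 1 r
      ∧ deriv (fun x => Ts x r) 0 = deriv (fun x => Ts x r) 1)
    (hsup : K * (sSup (Function.uncurry Tn ''
        (Icc (0:ℝ) 1 ×ˢ Icc (0:ℝ) 1))) ^ ((5:ℝ)/2) ≤ ν) :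
    (1/2) * (∫ s in (0:ℝ)..1, ∫ r in (0:ℝ)..1, (Ts s r)^2)
      + (ν * Δt / 2) * (∫ s in (0:ℝ)..1, ∫ r in (0:ℝ)..1,
          (deriv (fun x => Ts x r) s)^2)
    ≤ (1/2) * (∫ s in (0:ℝ)..1, ∫ r in (0:ℝ)..1, (Tn s r)^2)
      + (ν * Δt / 2) * (∫ s in (0:ℝ)..1, ∫ r in (0:ℝ)..1,
          (deriv (fun x => Tn x r) s)^2) :=
  imex_parallel_step_energy_2D_general K γ Δt ν hK hγ hΔt Tn Ts hTn hTs hTnpos hpde hbc0 hbc1 hper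
    hsup
end

section
/- Let Ω = (0,1)×(0,1) with variables (s,r), let K_⊥ > 0, Q_⊥ ∈ ℝ, Δt > 0. Let T^⋆, T^{n+1} : [0,1]×[0,1] → ℝ be twice continuously differentiable and satisfy for all (s,r) ∈ Ω: (T^{n+1} − T^⋆)/Δt − K_⊥ ∂_{rr} T^{n+1} = 0, with Neumann boundary conditions ∂_r T^{n+1}(s,0) = −Q_⊥ and ∂_r T^{n+1}(s,1) = 0 for all s ∈ (0,1). Then (1/2)∫_Ω ((T^{n+1})² − (T^⋆)²) dr ds ≤ −Δt K_⊥ ∫_Ω (∂_r T^{n+1})² dr ds + Δt Q_⊥ K_⊥ ∫_0^1 T^{n+1}(s,0) ds. -/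
/-!
For each fixed `s`, multiply the implicit radial step by `T^{n+1}` and integrate in `r`: the
elementary inequality `a² - b² ≤ 2 (a - b) a` bounds the change of energy by
`Δt K⊥ ∫ T ∂ᵣᵣT`, and integration by parts turns this into the boundary flux term minus the
radial Dirichlet energy. The slice integrals are continuous in `s`, so the slice estimates,
valid for `s ∈ (0,1)`, integrate to the two-dimensional one.
-/

open Set Function intervalIntegral

lemma sq_sub_sq_le_two_mul_sub_mul (a b : ℝ) : a ^ 2 - b ^ 2 ≤ 2 * (a - b) * a := by
  nlinarith [sq_nonneg (a - b)]

lemma ContDiff.continuous_deriv_deriv_two {f : ℝ → ℝ} (hf : ContDiff ℝ 2 f) :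
    Continuous (deriv (deriv f)) :=
  (hf.deriv' (n := 1)).continuous_deriv_one

theorem integral_mul_deriv_deriv_eq {f : ℝ → ℝ} (hf : ContDiff ℝ 2 f) (a b : ℝ) :
    ∫ x in a..b, f x * deriv (deriv f) x
      = f b * deriv f b - f a * deriv f a - ∫ x in a..b, deriv f x ^ 2 := by
  simp only [sq]
  exact integral_mul_deriv_eq_deriv_mul
    (fun x _ => (hf.differentiable two_ne_zero x).hasDerivAt)
    (fun x _ => (hf.differentiable_deriv_two x).hasDerivAt)
    ((hf.continuous_deriv one_le_two).intervalIntegrable _ _)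
    (hf.continuous_deriv_deriv_two.intervalIntegrable _ _)

theorem integral_sq_sub_sq_le_of_eq_mul_deriv_deriv {f g : ℝ → ℝ} {a b c : ℝ} (hab : a ≤ b)
    (hf : ContDiff ℝ 2 f) (hg : Continuous g)
    (hstep : ∀ x ∈ Ioo a b, f x - g x = c * deriv (deriv f) x) :
    (1 / 2) * ∫ x in a..b, (f x ^ 2 - g x ^ 2)
      ≤ c * (f b * deriv f b - f a * deriv f a - ∫ x in a..b, deriv f x ^ 2) := by
  have hf_cont : Continuous f := hf.continuous
  have hf''_cont := hf.continuous_deriv_deriv_two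
  have hmono : ∫ x in a..b, (f x ^ 2 - g x ^ 2)
      ≤ ∫ x in a..b, 2 * c * (f x * deriv (deriv f) x) :=
    integral_mono_on_of_le_Ioo hab ((by fun_prop : Continuous _).intervalIntegrable _ _)
      ((by fun_prop : Continuous _).intervalIntegrable _ _) fun x hx => by
      have := sq_sub_sq_le_two_mul_sub_mul (f x) (g x)
      rw [hstep x hx] at this
      linarith
  rw [integral_const_mul, integral_mul_deriv_deriv_eq hf] at hmono
  linarith

theorem ContDiff.continuous_deriv_snd {F : ℝ → ℝ → ℝ} (hF : ContDiff ℝ 1 (uncurry F)) :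
    Continuous fun p : ℝ × ℝ => deriv (F p.1) p.2 := by
  have hpartial (p : ℝ × ℝ) : deriv (F p.1) p.2 = fderiv ℝ (uncurry F) p (0, 1) := by
    have hslice : HasDerivAt (fun y => (p.1, y)) ((0 : ℝ), (1 : ℝ)) p.2 :=
      (hasDerivAt_const p.2 p.1).prodMk (hasDerivAt_id p.2)
    exact ((hF.differentiable one_ne_zero p).hasFDerivAt.comp_hasDerivAt p.2 hslice).deriv
  simp only [hpartial]
  exact (hF.continuous_fderiv one_ne_zero).clm_apply continuous_const

theorem implicit_radial_step_energy_2D_general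
    (Kp Q Δt : ℝ) (hΔt : 0 < Δt)
    (Ts Tn1 : ℝ → ℝ → ℝ)
    (hTs : ContDiff ℝ 2 (Function.uncurry Ts))
    (hTn1 : ContDiff ℝ 2 (Function.uncurry Tn1))
    (hpde : ∀ s ∈ Ioo (0:ℝ) 1, ∀ r ∈ Ioo (0:ℝ) 1,
      (Tn1 s r - Ts s r) / Δt
        - Kp * deriv (deriv (fun y => Tn1 s y)) r = 0)
    (hbc0 : ∀ s ∈ Ioo (0:ℝ) 1, deriv (fun y => Tn1 s y) 0 = -Q)
    (hbc1 : ∀ s ∈ Ioo (0:ℝ) 1, deriv (fun y => Tn1 s y) 1 = 0) :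
    (1/2) * (∫ s in (0:ℝ)..1, ∫ r in (0:ℝ)..1, ((Tn1 s r)^2 - (Ts s r)^2))
    ≤ -(Δt * Kp) * (∫ s in (0:ℝ)..1, ∫ r in (0:ℝ)..1,
          (deriv (fun y => Tn1 s y) r)^2)
      + Δt * Q * Kp * (∫ s in (0:ℝ)..1, Tn1 s 0) := by
  have hTs_cont := hTs.continuous
  have hTn1_cont := hTn1.continuous
  have hA : Continuous fun s => ∫ r in (0:ℝ)..1, ((Tn1 s r)^2 - (Ts s r)^2) :=
    continuous_parametric_intervalIntegral_of_continuous' (by fun_prop) 0 1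
  have hC : Continuous fun s => ∫ r in (0:ℝ)..1, (deriv (fun y => Tn1 s y) r)^2 :=
    continuous_parametric_intervalIntegral_of_continuous'
      ((hTn1.of_le one_le_two).continuous_deriv_snd.pow 2) 0 1
  have hT0 : Continuous fun s => Tn1 s 0 := by fun_prop
  have hslice (s : ℝ) (hs : s ∈ Ioo (0:ℝ) 1) :
      (1/2) * ∫ r in (0:ℝ)..1, ((Tn1 s r)^2 - (Ts s r)^2)
        ≤ -(Δt * Kp) * (∫ r in (0:ℝ)..1, (deriv (fun y => Tn1 s y) r)^2)
          + Δt * Q * Kp * Tn1 s 0 := by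
    have h := integral_sq_sub_sq_le_of_eq_mul_deriv_deriv (f := fun y => Tn1 s y)
      (g := fun y => Ts s y) (c := Δt * Kp) zero_le_one
      (hTn1.comp (contDiff_const.prodMk contDiff_id)) (by fun_prop) fun r hr => by
        have := hpde s hs r hr
        field_simp at this
        linarith
    rw [hbc0 s hs, hbc1 s hs] at h
    linarith
  calc (1/2) * (∫ s in (0:ℝ)..1, ∫ r in (0:ℝ)..1, ((Tn1 s r)^2 - (Ts s r)^2))
      = ∫ s in (0:ℝ)..1, (1/2) * ∫ r in (0:ℝ)..1, ((Tn1 s r)^2 - (Ts s r)^2) :=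
        (integral_const_mul _ _).symm
    _ ≤ ∫ s in (0:ℝ)..1, (-(Δt * Kp) * (∫ r in (0:ℝ)..1, (deriv (fun y => Tn1 s y) r)^2)
          + Δt * Q * Kp * Tn1 s 0) :=
        integral_mono_on_of_le_Ioo zero_le_one ((by fun_prop : Continuous _).intervalIntegrable _ _)
          ((by fun_prop : Continuous _).intervalIntegrable _ _) hslice
    _ = _ := by
        rw [integral_add ((by fun_prop : Continuous _).intervalIntegrable _ _)
          ((by fun_prop : Continuous _).intervalIntegrable _ _), integral_const_mul,
          integral_const_mul]

/-- Energy estimate for the second (radial-direction, implicit linear heat)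
step of the directional splitting scheme for the 2D nonlinear heat equation
on `Ω = (0,1) × (0,1)`, with Neumann boundary conditions `∂ᵣT = −Q⊥` at
`r = 0` and `∂ᵣT = 0` at `r = 1`.  `Ts s r` and `Tn1 s r` denote
`T^⋆(s,r)` and `T^{n+1}(s,r)`. -/
theorem implicit_radial_step_energy_2D
    (Kp Q Δt : ℝ) (hKp : 0 < Kp) (hΔt : 0 < Δt)
    (Ts Tn1 : ℝ → ℝ → ℝ)
    (hTs : ContDiff ℝ 2 (Function.uncurry Ts))
    (hTn1 : ContDiff ℝ 2 (Function.uncurry Tn1))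
    (hpde : ∀ s ∈ Ioo (0:ℝ) 1, ∀ r ∈ Ioo (0:ℝ) 1,
      (Tn1 s r - Ts s r) / Δt
        - Kp * deriv (deriv (fun y => Tn1 s y)) r = 0)
    (hbc0 : ∀ s ∈ Ioo (0:ℝ) 1, deriv (fun y => Tn1 s y) 0 = -Q)
    (hbc1 : ∀ s ∈ Ioo (0:ℝ) 1, deriv (fun y => Tn1 s y) 1 = 0) :
    (1/2) * (∫ s in (0:ℝ)..1, ∫ r in (0:ℝ)..1, ((Tn1 s r)^2 - (Ts s r)^2))
    ≤ -(Δt * Kp) * (∫ s in (0:ℝ)..1, ∫ r in (0:ℝ)..1,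
          (deriv (fun y => Tn1 s y) r)^2)
      + Δt * Q * Kp * (∫ s in (0:ℝ)..1, Tn1 s 0) :=
  implicit_radial_step_energy_2D_general Kp Q Δt hΔt Ts Tn1 hTs hTn1 hpde hbc0 hbc1
end

section
/- Let Ω = (0,1)×(0,1) with variables (s,r), let K_⊥ > 0, Δt > 0, ν ≥ 0. Let T^⋆, T^{n+1} : [0,1]×[0,1] → ℝ be smooth (three times continuously differentiable) functions satisfying for all (s,r) ∈ Ω: (T^{n+1} − T^⋆)/Δt − K_⊥ ∂_{rr} T^{n+1} = 0, and such that ∂_s(∂_r T^{n+1}(s,r)) = 0 at r = 0 and r = 1 for all s ∈ (0,1). Then ∫_Ω ν [ (∂_s T^{n+1})² − (∂_s T^⋆)² ] dr ds ≤ 0. -/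
/-!
On each slice `s = const` put `φ = ∂ₛT^{n+1}(s, ·)` and `ψ = ∂ₛT^⋆(s, ·)`. Differentiating the
implicit radial step in `s` and commuting partial derivatives (Schwarz, applied to `T^{n+1}` and
to `∂ᵣT^{n+1}`) gives `φ - ψ = Δt K_⊥ φ''`, and the mixed-derivative condition is `φ' = 0` at
`r = 0, 1`. Hence `φ² - ψ² = 2φ(φ - ψ) - (φ - ψ)² ≤ 2 Δt K_⊥ φ φ''`, while integration by parts
gives `∫ φ φ'' = -∫ φ'² ≤ 0`. Integrating in `s` finishes the estimate.
-/

open Set MeasureTheory Function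

section Partial

variable {E : Type*} [NormedAddCommGroup E] [NormedSpace ℝ E]

noncomputable def partialFst (F : ℝ → ℝ → E) (s r : ℝ) : E := deriv (fun x => F x r) s

noncomputable def partialSnd (F : ℝ → ℝ → E) (s r : ℝ) : E := deriv (fun y => F s y) r

variable {s r : ℝ}

theorem HasFDerivAt.hasDerivAt_comp_prodMk_left {g : ℝ × ℝ → E} {g' : ℝ × ℝ →L[ℝ] E}
    (h : HasFDerivAt g g' (s, r)) : HasDerivAt (fun x => g (x, r)) (g' (1, 0)) s :=
  h.comp_hasDerivAt (f := fun x : ℝ => (x, r)) s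
    ((hasDerivAt_id s).prodMk (hasDerivAt_const s r))

theorem HasFDerivAt.hasDerivAt_comp_prodMk_right {g : ℝ × ℝ → E} {g' : ℝ × ℝ →L[ℝ] E}
    (h : HasFDerivAt g g' (s, r)) : HasDerivAt (fun y => g (s, y)) (g' (0, 1)) r :=
  h.comp_hasDerivAt (f := fun y : ℝ => (s, y)) r
    ((hasDerivAt_const r s).prodMk (hasDerivAt_id r))

variable {F : ℝ → ℝ → E}

theorem partialFst_eq_fderiv (h : DifferentiableAt ℝ (uncurry F) (s, r)) :
    partialFst F s r = fderiv ℝ (uncurry F) (s, r) (1, 0) :=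
  (h.hasFDerivAt.hasDerivAt_comp_prodMk_left).deriv

theorem partialSnd_eq_fderiv (h : DifferentiableAt ℝ (uncurry F) (s, r)) :
    partialSnd F s r = fderiv ℝ (uncurry F) (s, r) (0, 1) :=
  (h.hasFDerivAt.hasDerivAt_comp_prodMk_right).deriv

theorem ContDiff.uncurry_partialFst {n : ℕ} (hF : ContDiff ℝ (n + 1) (uncurry F)) :
    ContDiff ℝ n (uncurry (partialFst F)) := by
  have hdiff : Differentiable ℝ (uncurry F) := hF.differentiable (by simp)
  have : uncurry (partialFst F) = fun p => fderiv ℝ (uncurry F) p (1, 0) :=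
    funext fun p => partialFst_eq_fderiv (hdiff p)
  rw [this]
  exact (hF.fderiv_right le_rfl).clm_apply contDiff_const

theorem ContDiff.uncurry_partialSnd {n : ℕ} (hF : ContDiff ℝ (n + 1) (uncurry F)) :
    ContDiff ℝ n (uncurry (partialSnd F)) := by
  have hdiff : Differentiable ℝ (uncurry F) := hF.differentiable (by simp)
  have : uncurry (partialSnd F) = fun p => fderiv ℝ (uncurry F) p (0, 1) :=
    funext fun p => partialSnd_eq_fderiv (hdiff p)
  rw [this]
  exact (hF.fderiv_right le_rfl).clm_apply contDiff_const

theorem partialFst_partialSnd (hF : ContDiff ℝ 2 (uncurry F)) :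
    partialFst (partialSnd F) = partialSnd (partialFst F) := by
  ext s r
  have hF' : Differentiable ℝ (fderiv ℝ (uncurry F)) :=
    (hF.fderiv_right (m := 1) le_rfl).differentiable (by simp)
  have hdiff : Differentiable ℝ (uncurry F) := hF.differentiable (by simp)
  have hsnd : partialSnd F = fun s r => fderiv ℝ (uncurry F) (s, r) (0, 1) :=
    funext₂ fun s r => partialSnd_eq_fderiv (hdiff (s, r))
  have hfst : partialFst F = fun s r => fderiv ℝ (uncurry F) (s, r) (1, 0) :=
    funext₂ fun s r => partialFst_eq_fderiv (hdiff (s, r))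
  rw [hsnd, hfst]
  calc partialFst (fun s r => fderiv ℝ (uncurry F) (s, r) (0, 1)) s r
      = fderiv ℝ (fderiv ℝ (uncurry F)) (s, r) (1, 0) (0, 1) :=
        (((hF' (s, r)).hasFDerivAt.hasDerivAt_comp_prodMk_left).clm_apply
          (hasDerivAt_const s (0, 1))).deriv.trans (by simp)
    _ = fderiv ℝ (fderiv ℝ (uncurry F)) (s, r) (0, 1) (1, 0) :=
        (hF.contDiffAt.isSymmSndFDerivAt (by simp)) _ _
    _ = partialSnd (fun s r => fderiv ℝ (uncurry F) (s, r) (1, 0)) s r :=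
        ((((hF' (s, r)).hasFDerivAt.hasDerivAt_comp_prodMk_right).clm_apply
          (hasDerivAt_const r (1, 0))).deriv.trans (by simp)).symm

theorem partialSnd_partialSnd_partialFst (hF : ContDiff ℝ 3 (uncurry F)) :
    partialSnd (partialSnd (partialFst F)) = partialFst (partialSnd (partialSnd F)) := by
  rw [← partialFst_partialSnd (hF.of_le (by norm_num)),
    partialFst_partialSnd (hF.uncurry_partialSnd (n := 2))]

end Partial

theorem partialFst_sub_eq_of_implicit_step {u v w : ℝ → ℝ → ℝ} {S R : Set ℝ}
    (hS : IsOpen S) {Δt K : ℝ} (hΔt : Δt ≠ 0) (hu : Differentiable ℝ (uncurry u))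
    (hv : Differentiable ℝ (uncurry v))
    (hstep : ∀ s ∈ S, ∀ r ∈ R, (u s r - v s r) / Δt - K * w s r = 0) :
    ∀ s ∈ S, ∀ r ∈ R, partialFst u s r - partialFst v s r = Δt * K * partialFst w s r := by
  intro s hs r hr
  have hw : (fun x => K * w x r) =ᶠ[nhds s] fun x => (u x r - v x r) / Δt := by
    filter_upwards [hS.mem_nhds hs] with x hx
    linarith [hstep x hx r hr]
  have hu' : DifferentiableAt ℝ (fun x => u x r) s :=
    ((hu (s, r)).hasFDerivAt.hasDerivAt_comp_prodMk_left).differentiableAt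
  have hv' : DifferentiableAt ℝ (fun x => v x r) s :=
    ((hv (s, r)).hasFDerivAt.hasDerivAt_comp_prodMk_left).differentiableAt
  have hderiv := hw.deriv_eq
  rw [deriv_const_mul_field, deriv_div_const, deriv_fun_sub hu' hv'] at hderiv
  unfold partialFst
  field_simp at hderiv ⊢
  linarith

theorem integral_mul_deriv_deriv_nonpos {φ : ℝ → ℝ} {a b : ℝ} (hab : a ≤ b)
    (hφ : ContDiff ℝ 2 φ) (ha : deriv φ a = 0) (hb : deriv φ b = 0) :
    ∫ x in a..b, φ x * deriv (deriv φ) x ≤ 0 := by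
  have hφ' : ContDiff ℝ 1 (deriv φ) := hφ.iterate_deriv' 1 1
  rw [intervalIntegral.integral_mul_deriv_eq_deriv_mul
    (fun x _ => (hφ.differentiable (by simp) x).hasDerivAt)
    (fun x _ => (hφ'.differentiable (by simp) x).hasDerivAt)
    (hφ'.continuous.intervalIntegrable a b)
    ((hφ'.continuous_deriv le_rfl).intervalIntegrable a b), ha, hb]
  have : 0 ≤ ∫ x in a..b, deriv φ x * deriv φ x :=
    intervalIntegral.integral_nonneg hab fun x _ => mul_self_nonneg _
  linarith

theorem integral_sq_sub_sq_nonpos_of_implicit_step {φ ψ : ℝ → ℝ} {a b c : ℝ}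
    (hab : a ≤ b) (hc : 0 ≤ c) (hφ : ContDiff ℝ 2 φ) (hψ : Continuous ψ)
    (hstep : ∀ x ∈ Ioo a b, φ x - ψ x = c * deriv (deriv φ) x)
    (ha : deriv φ a = 0) (hb : deriv φ b = 0) :
    ∫ x in a..b, (φ x ^ 2 - ψ x ^ 2) ≤ 0 :=
  calc ∫ x in a..b, (φ x ^ 2 - ψ x ^ 2)
      ≤ ∫ x in a..b, 2 * c * (φ x * deriv (deriv φ) x) := by
        refine intervalIntegral.integral_mono_on_of_le_Ioo hab ?_ ?_ fun x hx => ?_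
        · exact ((hφ.continuous.pow 2).sub (hψ.pow 2)).intervalIntegrable a b
        · exact (continuous_const.mul (hφ.continuous.mul
            ((hφ.iterate_deriv' 1 1).continuous_deriv le_rfl))).intervalIntegrable a b
        · calc φ x ^ 2 - ψ x ^ 2 = 2 * φ x * (φ x - ψ x) - (φ x - ψ x) ^ 2 := by ring
            _ ≤ 2 * φ x * (φ x - ψ x) := sub_le_self _ (sq_nonneg _)
            _ = 2 * c * (φ x * deriv (deriv φ) x) := by rw [hstep x hx]; ring
    _ = 2 * c * ∫ x in a..b, φ x * deriv (deriv φ) x := intervalIntegral.integral_const_mul _ _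
    _ ≤ 0 := mul_nonpos_of_nonneg_of_nonpos (by positivity)
        (integral_mul_deriv_deriv_nonpos hab hφ ha hb)

/-- The radial implicit heat step does not increase the weighted L² norm of
the parallel derivative: estimate used in the proof of Proposition 3.1 for
the directional splitting scheme of the 2D nonlinear heat equation.
`Ts s r` and `Tn1 s r` denote `T^⋆(s,r)` and `T^{n+1}(s,r)`. -/
theorem radial_step_parallel_derivative_estimate
    (Kp Δt ν : ℝ) (hKp : 0 < Kp) (hΔt : 0 < Δt) (hν : 0 ≤ ν)
    (Ts Tn1 : ℝ → ℝ → ℝ)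
    (hTs : ContDiff ℝ 3 (Function.uncurry Ts))
    (hTn1 : ContDiff ℝ 3 (Function.uncurry Tn1))
    (hpde : ∀ s ∈ Ioo (0:ℝ) 1, ∀ r ∈ Ioo (0:ℝ) 1,
      (Tn1 s r - Ts s r) / Δt
        - Kp * deriv (deriv (fun y => Tn1 s y)) r = 0)
    (hmixed0 : ∀ s ∈ Ioo (0:ℝ) 1,
      deriv (fun x => deriv (fun y => Tn1 x y) 0) s = 0)
    (hmixed1 : ∀ s ∈ Ioo (0:ℝ) 1,
      deriv (fun x => deriv (fun y => Tn1 x y) 1) s = 0) :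
    (∫ s in (0:ℝ)..1, ∫ r in (0:ℝ)..1,
      ν * ((deriv (fun x => Tn1 x r) s)^2 - (deriv (fun x => Ts x r) s)^2))
    ≤ 0 := by
  have hG : ContDiff ℝ 2 (uncurry (partialFst Tn1)) := hTn1.uncurry_partialFst
  have hH : ContDiff ℝ 2 (uncurry (partialFst Ts)) := hTs.uncurry_partialFst
  have hstep : ∀ s ∈ Ioo (0:ℝ) 1, ∀ r ∈ Ioo (0:ℝ) 1,
      partialFst Tn1 s r - partialFst Ts s r
        = Δt * Kp * partialSnd (partialSnd (partialFst Tn1)) s r := by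
    rw [partialSnd_partialSnd_partialFst hTn1]
    exact partialFst_sub_eq_of_implicit_step isOpen_Ioo hΔt.ne'
      (hTn1.differentiable (by simp)) (hTs.differentiable (by simp)) hpde
  have hneumann : ∀ s r, partialFst (partialSnd Tn1) s r = 0 →
      partialSnd (partialFst Tn1) s r = 0 := fun s r h => by
    rwa [← partialFst_partialSnd (hTn1.of_le (by norm_num))]
  have hslice : ∀ s ∈ Ioo (0:ℝ) 1,
      ∫ r in (0:ℝ)..1, (partialFst Tn1 s r ^ 2 - partialFst Ts s r ^ 2) ≤ 0 := fun s hs =>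
    integral_sq_sub_sq_nonpos_of_implicit_step zero_le_one (by positivity)
      (hG.comp (contDiff_const.prodMk contDiff_id))
      (hH.continuous.comp (continuous_const.prodMk continuous_id))
      (hstep s hs) (hneumann s 0 (hmixed0 s hs)) (hneumann s 1 (hmixed1 s hs))
  rw [intervalIntegral.integral_of_le zero_le_one, integral_Ioc_eq_integral_Ioo]
  refine setIntegral_nonpos measurableSet_Ioo fun s hs => ?_
  rw [intervalIntegral.integral_const_mul]
  exact mul_nonpos_of_nonneg_of_nonpos hν (hslice s hs)
end

section
/- Let Ω = (0,1)×(0,1) with variables (s,r), let K_∥ > 0, K_⊥ > 0, γ ≥ 0, Q_⊥ ∈ ℝ, Δt > 0, ν > 0. For each n ∈ ℕ let T^n, T^{n,⋆} : [0,1]×[0,1] → ℝ be smooth nonnegative functions generated by the splitting scheme: (i) (T^{n,⋆} − T^n)/Δt − ∂_s[(K_∥(T^n)^{5/2} − ν)∂_sT^n] − ν∂_{ss}T^{n,⋆} = 0 on Ω with, for r ∈ (1/2,1), (K_∥(T^n(0,r))^{5/2} − ν)∂_sT^n(0,r) = γT^{n,⋆}(0,r) − ν∂_sT^{n,⋆}(0,r)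 and (K_∥(T^n(1,r))^{5/2} − ν)∂_sT^n(1,r) = −γT^{n,⋆}(1,r) − ν∂_sT^{n,⋆}(1,r), and for r ∈ (0,1/2) periodicity of T^n, ∂_sT^n, T^{n,⋆}, ∂_sT^{n,⋆} in s; (ii) (T^{n+1} − T^{n,⋆})/Δt − K_⊥∂_{rr}T^{n+1} = 0 on Ω with ∂_rT^{n+1}(s,0) = −Q_⊥ and ∂_rT^{n+1}(s,1) = 0. Assume K_∥·(sup_Ω T^n)^{5/2} ≤ ν for all n. Then for every n ∈ ℕ: (1/2)∫_Ω (T^{n+1})² dr ds + (νΔt/2)∫_Ω |∂_sT^{n+1}|² dr ds ≤ (1/2)∫_Ω (T^0)² dr ds + (νΔt/2)∫_Ω |∂_sT^0|² dr ds − K_⊥ Δt Σ_{k=1}^{n+1} [ ∫_Ω |∂_rT^k|² dr ds − Q_⊥ ∫_0^1 T^k(s,0) ds ]. -/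
open Set MeasureTheory intervalIntegral

section Helpers

noncomputable def pd1 (f : ℝ × ℝ → ℝ) (p : ℝ × ℝ) : ℝ := fderiv ℝ f p (1, 0)
noncomputable def pd2 (f : ℝ × ℝ → ℝ) (p : ℝ × ℝ) : ℝ := fderiv ℝ f p (0, 1)

variable {f : ℝ × ℝ → ℝ}

lemma hasDerivAt_slice1 (hf : ContDiff ℝ (⊤ : ℕ∞) f) (s r : ℝ) :
    HasDerivAt (fun x => f (x, r)) (pd1 f (s, r)) s := by
  have h1 : HasDerivAt (fun x : ℝ => (x, r)) ((1:ℝ), (0:ℝ)) s :=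
    (hasDerivAt_id s).prodMk (hasDerivAt_const s r)
  exact (hf.differentiable (by simp) (s, r)).hasFDerivAt.comp_hasDerivAt s h1

lemma hasDerivAt_slice2 (hf : ContDiff ℝ (⊤ : ℕ∞) f) (s r : ℝ) :
    HasDerivAt (fun y => f (s, y)) (pd2 f (s, r)) r := by
  have h1 : HasDerivAt (fun y : ℝ => (s, y)) ((0:ℝ), (1:ℝ)) r :=
    (hasDerivAt_const r s).prodMk (hasDerivAt_id r)
  exact (hf.differentiable (by simp) (s, r)).hasFDerivAt.comp_hasDerivAt r h1

lemma contDiff_pd1 (hf : ContDiff ℝ (⊤ : ℕ∞) f) : ContDiff ℝ (⊤ : ℕ∞) (pd1 f) :=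
  (hf.fderiv_right (by simp)).clm_apply contDiff_const

lemma contDiff_pd2 (hf : ContDiff ℝ (⊤ : ℕ∞) f) : ContDiff ℝ (⊤ : ℕ∞) (pd2 f) :=
  (hf.fderiv_right (by simp)).clm_apply contDiff_const

lemma deriv_slice1 (hf : ContDiff ℝ (⊤ : ℕ∞) f) (r : ℝ) :
    deriv (fun x => f (x, r)) = fun s => pd1 f (s, r) :=
  funext fun s => (hasDerivAt_slice1 hf s r).deriv

lemma deriv_slice2 (hf : ContDiff ℝ (⊤ : ℕ∞) f) (s : ℝ) :
    deriv (fun y => f (s, y)) = fun r => pd2 f (s, r) :=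
  funext fun r => (hasDerivAt_slice2 hf s r).deriv

lemma pd_comm (hf : ContDiff ℝ (⊤ : ℕ∞) f) (p : ℝ × ℝ) : pd1 (pd2 f) p = pd2 (pd1 f) p := by
  have hd : ∀ y, HasFDerivAt f (fderiv ℝ f y) y :=
    fun y => (hf.differentiable (by simp) y).hasFDerivAt
  have h2 : HasFDerivAt (fderiv ℝ f) (fderiv ℝ (fderiv ℝ f) p) p :=
    ((hf.fderiv_right (m := (⊤ : ℕ∞)) (by simp)).differentiable (by simp) p).hasFDerivAt
  have hsymm := second_derivative_symmetric hd h2 (1, 0) (0, 1)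
  have hdiff : DifferentiableAt ℝ (fderiv ℝ f) p :=
    (hf.fderiv_right (m := (⊤ : ℕ∞)) (by simp)).differentiable (by simp) p
  have e1 : fderiv ℝ (pd2 f) p =
      (fderiv ℝ f p).comp (0 : ℝ × ℝ →L[ℝ] ℝ × ℝ)
        + (fderiv ℝ (fderiv ℝ f) p).flip (0, 1) := by
    simpa [show pd2 f = fun y => fderiv ℝ f y ((0:ℝ), (1:ℝ)) from rfl] using fderiv_clm_apply hdiff (differentiableAt_const ((0:ℝ), (1:ℝ)))
  have e2 : fderiv ℝ (pd1 f) p =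
      (fderiv ℝ f p).comp (0 : ℝ × ℝ →L[ℝ] ℝ × ℝ)
        + (fderiv ℝ (fderiv ℝ f) p).flip (1, 0) := by
    simpa [show pd1 f = fun y => fderiv ℝ f y ((1:ℝ), (0:ℝ)) from rfl] using fderiv_clm_apply hdiff (differentiableAt_const ((1:ℝ), (0:ℝ)))
  simp only [pd1, pd2, e1, e2, ContinuousLinearMap.add_apply,
    ContinuousLinearMap.comp_apply, ContinuousLinearMap.zero_apply,
    ContinuousLinearMap.flip_apply, map_zero]
  simpa using hsymm

lemma ae_restrict_Ioo : ∀ᵐ x ∂((volume : Measure ℝ).restrict (Ioc (0:ℝ) 1)),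
    x ∈ Ioo (0:ℝ) 1 := by
  have h1 : ∀ᵐ x : ℝ, x ≠ (1:ℝ) := by
    refine ae_iff.2 ?_
    simpa using measure_singleton (1:ℝ)
  filter_upwards [ae_restrict_mem measurableSet_Ioc, ae_restrict_of_ae h1] with x hx hx1
  exact ⟨hx.1, lt_of_le_of_ne hx.2 hx1⟩

lemma ae_restrict_Ioo' : ∀ᵐ x ∂((volume : Measure ℝ).restrict (Icc (0:ℝ) 1)),
    x ∈ Ioo (0:ℝ) 1 := by
  have h1 : ∀ᵐ x : ℝ, x ≠ (1:ℝ) ∧ x ≠ (0:ℝ) := by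
    refine (ae_iff.2 ?_).mono (fun x h => by tauto)
    have hsub : {x : ℝ | ¬(x ≠ 1 ∧ x ≠ 0)} ⊆ {1, 0} := by
      intro x hx; simp at hx ⊢; tauto
    refine measure_mono_null hsub ?_
    have he : ((({1, 0} : Set ℝ)) : Set ℝ) = {1} ∪ {0} := rfl
    rw [he]
    refine measure_union_null ?_ ?_ <;> exact measure_singleton _
  filter_upwards [ae_restrict_mem measurableSet_Icc, ae_restrict_of_ae h1] with x hx hx1
  exact ⟨lt_of_le_of_ne hx.1 (Ne.symm hx1.2), lt_of_le_of_ne hx.2 hx1.1⟩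

lemma ae_restrict_IooHalf : ∀ᵐ x ∂((volume : Measure ℝ).restrict (Icc (0:ℝ) 1)),
    x ∈ Ioo (0:ℝ) 1 ∧ x ≠ 1/2 := by
  have h1 : ∀ᵐ x : ℝ, x ≠ (1/2:ℝ) := by
    refine ae_iff.2 ?_
    simpa using measure_singleton (1/2:ℝ)
  filter_upwards [ae_restrict_Ioo', ae_restrict_of_ae h1] with x hx hx1
  exact ⟨hx, hx1⟩

/-- abstract 1-D energy inequality for the implicit radial step -/
lemma slice_rad {Δt Kp Qb : ℝ} (hΔt : 0 < Δt) (hKp : 0 < Kp)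
    (u w u' u'' : ℝ → ℝ)
    (hu : ∀ x, HasDerivAt u (u' x) x)
    (hu' : ∀ x, HasDerivAt u' (u'' x) x)
    (hcw : Continuous w) (hcu : Continuous u) (hcu' : Continuous u')
    (hcu'' : Continuous u'')
    (hpde : ∀ x ∈ Ioo (0:ℝ) 1, (u x - w x) / Δt = Kp * u'' x)
    (hb0 : u' 0 = -Qb) (hb1 : u' 1 = 0) :
    (1/2) * ∫ x in (0:ℝ)..1, (u x)^2
      ≤ (1/2) * (∫ x in (0:ℝ)..1, (w x)^2)
        - Kp * Δt * ((∫ x in (0:ℝ)..1, (u' x)^2) - Qb * u 0) := by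
  have h01 : (0:ℝ) ≤ 1 := zero_le_one
  have key : ∫ x in (0:ℝ)..1, u x * (u x - w x)
      = Δt * Kp * ∫ x in (0:ℝ)..1, u'' x * u x := by
    rw [← intervalIntegral.integral_const_mul]
    rw [intervalIntegral.integral_of_le h01, intervalIntegral.integral_of_le h01]
    refine integral_congr_ae ?_
    filter_upwards [ae_restrict_Ioo] with x hx
    have h := hpde x hx
    have h2 : u x - w x = Δt * (Kp * u'' x) := by
      field_simp at h; linarith
    rw [h2]; ring
  have ibp : ∫ x in (0:ℝ)..1, u' x * u' x
      = u' 1 * u 1 - u' 0 * u 0 - ∫ x in (0:ℝ)..1, u'' x * u x :=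
    integral_mul_deriv_eq_deriv_mul (fun x _ => hu' x) (fun x _ => hu x)
      (hcu''.intervalIntegrable 0 1) (hcu'.intervalIntegrable 0 1)
  have hsq : ∫ x in (0:ℝ)..1, u' x * u' x = ∫ x in (0:ℝ)..1, (u' x)^2 :=
    intervalIntegral.integral_congr (fun x _ => by ring)
  have hiden : ∫ x in (0:ℝ)..1, u x * (u x - w x)
      = (1/2) * (∫ x in (0:ℝ)..1, (u x)^2) - (1/2) * (∫ x in (0:ℝ)..1, (w x)^2)
        + (1/2) * ∫ x in (0:ℝ)..1, (u x - w x)^2 := by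
    rw [← intervalIntegral.integral_const_mul, ← intervalIntegral.integral_const_mul,
      ← intervalIntegral.integral_const_mul, ← intervalIntegral.integral_sub, ←
      intervalIntegral.integral_add]
    · exact intervalIntegral.integral_congr (fun x _ => by ring)
    · exact ((continuous_const.mul (hcu.pow 2)).sub
        (continuous_const.mul (hcw.pow 2))).intervalIntegrable 0 1
    · exact (continuous_const.mul (((hcu.sub hcw).pow 2))).intervalIntegrable 0 1
    · exact (continuous_const.mul (hcu.pow 2)).intervalIntegrable 0 1
    · exact (continuous_const.mul (hcw.pow 2)).intervalIntegrable 0 1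
  have hpos : 0 ≤ ∫ x in (0:ℝ)..1, (u x - w x)^2 :=
    intervalIntegral.integral_nonneg h01 (fun x _ => sq_nonneg _)
  rw [hb0, hb1] at ibp
  have e : ∫ x in (0:ℝ)..1, u'' x * u x
      = Qb * u 0 - ∫ x in (0:ℝ)..1, (u' x)^2 := by
    rw [← hsq]; linarith [ibp]
  rw [e] at key
  have key2 : ∫ x in (0:ℝ)..1, u x * (u x - w x)
      = -(Kp * Δt * ((∫ x in (0:ℝ)..1, (u' x)^2) - Qb * u 0)) := by
    rw [key]; ring
  linarith [key2, hiden, hpos]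

/-- abstract 1-D energy inequality for the parallel IMEX step -/
lemma slice_par {Δt ν : ℝ} (hΔt : 0 < Δt) (hν : 0 < ν)
    (a b a' b' b'' F F' : ℝ → ℝ)
    (hb : ∀ x, HasDerivAt b (b' x) x)
    (hb' : ∀ x, HasDerivAt b' (b'' x) x)
    (hF : ∀ x, HasDerivAt F (F' x) x)
    (hca : Continuous a) (hca' : Continuous a')
    (hcb : Continuous b) (hcb' : Continuous b') (hcb'' : Continuous b'')
    (hcF : Continuous F) (hcF' : Continuous F')
    (hpde : ∀ x ∈ Ioo (0:ℝ) 1, (b x - a x) / Δt = F' x + ν * b'' x)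
    (hB : F 1 * b 1 + ν * (b' 1 * b 1) - (F 0 * b 0 + ν * (b' 0 * b 0)) ≤ 0)
    (hY : ∀ x ∈ Icc (0:ℝ) 1, -(F x * b' x) ≤ ν / 2 * ((a' x)^2 + (b' x)^2)) :
    (1/2) * (∫ x in (0:ℝ)..1, (b x)^2) + (ν * Δt / 2) * (∫ x in (0:ℝ)..1, (b' x)^2)
      ≤ (1/2) * (∫ x in (0:ℝ)..1, (a x)^2)
        + (ν * Δt / 2) * (∫ x in (0:ℝ)..1, (a' x)^2) := by
  have h01 : (0:ℝ) ≤ 1 := zero_le_one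
  have key : ∫ x in (0:ℝ)..1, b x * (b x - a x)
      = Δt * ∫ x in (0:ℝ)..1, (F' x * b x + ν * (b'' x * b x)) := by
    rw [← intervalIntegral.integral_const_mul]
    rw [intervalIntegral.integral_of_le h01, intervalIntegral.integral_of_le h01]
    refine integral_congr_ae ?_
    filter_upwards [ae_restrict_Ioo] with x hx
    have h := hpde x hx
    have h2 : b x - a x = Δt * (F' x + ν * b'' x) := by
      field_simp at h; linarith
    rw [h2]; ring
  have hsplit : ∫ x in (0:ℝ)..1, (F' x * b x + ν * (b'' x * b x))
      = (∫ x in (0:ℝ)..1, F' x * b x) + ν * ∫ x in (0:ℝ)..1, b'' x * b x := by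
    rw [← intervalIntegral.integral_const_mul, ← intervalIntegral.integral_add]
    · exact ((hcF'.mul hcb)).intervalIntegrable 0 1
    · exact (continuous_const.mul (hcb''.mul hcb)).intervalIntegrable 0 1
  have ibp1 : ∫ x in (0:ℝ)..1, F x * b' x
      = F 1 * b 1 - F 0 * b 0 - ∫ x in (0:ℝ)..1, F' x * b x :=
    integral_mul_deriv_eq_deriv_mul (fun x _ => hF x) (fun x _ => hb x)
      (hcF'.intervalIntegrable 0 1) (hcb'.intervalIntegrable 0 1)
  have ibp2 : ∫ x in (0:ℝ)..1, b' x * b' x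
      = b' 1 * b 1 - b' 0 * b 0 - ∫ x in (0:ℝ)..1, b'' x * b x :=
    integral_mul_deriv_eq_deriv_mul (fun x _ => hb' x) (fun x _ => hb x)
      (hcb''.intervalIntegrable 0 1) (hcb'.intervalIntegrable 0 1)
  have hsq : ∫ x in (0:ℝ)..1, b' x * b' x = ∫ x in (0:ℝ)..1, (b' x)^2 :=
    intervalIntegral.integral_congr (fun x _ => by ring)
  have hiden : ∫ x in (0:ℝ)..1, b x * (b x - a x)
      = (1/2) * (∫ x in (0:ℝ)..1, (b x)^2) - (1/2) * (∫ x in (0:ℝ)..1, (a x)^2)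
        + (1/2) * ∫ x in (0:ℝ)..1, (b x - a x)^2 := by
    rw [← intervalIntegral.integral_const_mul, ← intervalIntegral.integral_const_mul,
      ← intervalIntegral.integral_const_mul, ← intervalIntegral.integral_sub, ←
      intervalIntegral.integral_add]
    · exact intervalIntegral.integral_congr (fun x _ => by ring)
    · exact ((continuous_const.mul (hcb.pow 2)).sub
        (continuous_const.mul (hca.pow 2))).intervalIntegrable 0 1
    · exact (continuous_const.mul (((hcb.sub hca).pow 2))).intervalIntegrable 0 1
    · exact (continuous_const.mul (hcb.pow 2)).intervalIntegrable 0 1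
    · exact (continuous_const.mul (hca.pow 2)).intervalIntegrable 0 1
  have hpos : 0 ≤ ∫ x in (0:ℝ)..1, (b x - a x)^2 :=
    intervalIntegral.integral_nonneg h01 (fun x _ => sq_nonneg _)
  have hyoung : -(∫ x in (0:ℝ)..1, F x * b' x)
      ≤ ν / 2 * (∫ x in (0:ℝ)..1, (a' x)^2) + ν / 2 * (∫ x in (0:ℝ)..1, (b' x)^2) := by
    have h1 : ∫ x in (0:ℝ)..1, -(F x * b' x)
        ≤ ∫ x in (0:ℝ)..1, ν / 2 * ((a' x)^2 + (b' x)^2) := by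
      refine intervalIntegral.integral_mono_on h01 ?_ ?_ hY
      · exact ((hcF.mul hcb').neg).intervalIntegrable 0 1
      · exact (continuous_const.mul ((hca'.pow 2).add (hcb'.pow 2))).intervalIntegrable 0 1
    rw [intervalIntegral.integral_neg] at h1
    have h2 : ∫ x in (0:ℝ)..1, ν / 2 * ((a' x)^2 + (b' x)^2)
        = ν / 2 * (∫ x in (0:ℝ)..1, (a' x)^2) + ν / 2 * (∫ x in (0:ℝ)..1, (b' x)^2) := by
      rw [intervalIntegral.integral_const_mul, intervalIntegral.integral_add
        (f := fun x => (a' x)^2) (g := fun x => (b' x)^2) ((hca'.pow 2).intervalIntegrable 0 1) ((hcb'.pow 2).intervalIntegrable 0 1), mul_add]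
    linarith
  set Ib2 := ∫ x in (0:ℝ)..1, (b x)^2
  set Ia2 := ∫ x in (0:ℝ)..1, (a x)^2
  set Ib'2 := ∫ x in (0:ℝ)..1, (b' x)^2
  set Ia'2 := ∫ x in (0:ℝ)..1, (a' x)^2
  set IFb := ∫ x in (0:ℝ)..1, F x * b' x
  have e1 : ∫ x in (0:ℝ)..1, F' x * b x = F 1 * b 1 - F 0 * b 0 - IFb := by
    rw [ibp1]; ring
  have e2 : ∫ x in (0:ℝ)..1, b'' x * b x = b' 1 * b 1 - b' 0 * b 0 - Ib'2 := by
    rw [← hsq]; linarith [ibp2]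
  rw [hiden, hsplit, e1, e2] at key
  have hBt : Δt * ((F 1 * b 1 - F 0 * b 0 - IFb) + ν * (b' 1 * b 1 - b' 0 * b 0 - Ib'2))
      ≤ Δt * (-IFb - ν * Ib'2) := by
    refine mul_le_mul_of_nonneg_left ?_ hΔt.le
    nlinarith [hB]
  have hY2 : Δt * (-IFb - ν * Ib'2)
      ≤ Δt * (ν / 2 * Ia'2 + ν / 2 * Ib'2 - ν * Ib'2) := by
    refine mul_le_mul_of_nonneg_left ?_ hΔt.le
    linarith
  nlinarith [key, hBt, hY2, hpos]

lemma swap01 (f : ℝ → ℝ → ℝ) (hf : Continuous (Function.uncurry f)) :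
    ∫ s in (0:ℝ)..1, ∫ r in (0:ℝ)..1, f s r
      = ∫ r in (0:ℝ)..1, ∫ s in (0:ℝ)..1, f s r := by
  have hint : Integrable (Function.uncurry f)
      (((volume : Measure ℝ).restrict (Ioc 0 1)).prod
        ((volume : Measure ℝ).restrict (Ioc 0 1))) := by
    rw [Measure.prod_restrict, ← Measure.volume_eq_prod]
    exact (hf.continuousOn.integrableOn_compact (isCompact_Icc.prod isCompact_Icc)).mono_set
      (prod_mono Ioc_subset_Icc_self Ioc_subset_Icc_self)
  simp_rw [intervalIntegral.integral_of_le (zero_le_one' ℝ)]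
  exact MeasureTheory.integral_integral_swap hint

lemma contInner1 {g : ℝ × ℝ → ℝ} (hg : Continuous g) :
    Continuous fun s => ∫ r in (0:ℝ)..1, g (s, r) :=
  intervalIntegral.continuous_parametric_intervalIntegral_of_continuous'
    (f := fun s r => g (s, r)) (hg.comp (continuous_fst.prodMk continuous_snd)) 0 1

lemma contInner2 {g : ℝ × ℝ → ℝ} (hg : Continuous g) :
    Continuous fun r => ∫ s in (0:ℝ)..1, g (s, r) :=
  intervalIntegral.continuous_parametric_intervalIntegral_of_continuous'
    (f := fun r s => g (s, r)) (hg.comp (continuous_snd.prodMk continuous_fst)) 0 1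

end Helpers

/-- Proposition 3.1: global energy estimate for the directional (Lie)
splitting scheme for the 2D nonlinear heat equation
`∂ₜT − ∂ₛ(K‖ T^{5/2} ∂ₛT) − ∂ᵣ(K⊥ ∂ᵣT) = 0` on `Ω = (0,1)²`,
combining the IMEX treatment of the parallel nonlinear diffusion and the
implicit treatment of the radial linear diffusion.  `T n s r` denotes
`T^n(s,r)` and `Ts n s r` denotes the intermediate value `T^{n,⋆}(s,r)`. -/
theorem splitting_scheme_energy_estimate_2D
    (K Kp γ Q Δt ν : ℝ)
    (hK : 0 < K) (hKp : 0 < Kp) (hγ : 0 ≤ γ) (hΔt : 0 < Δt) (hν : 0 < ν)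
    (T Ts : ℕ → ℝ → ℝ → ℝ)
    (hT : ∀ n, ContDiff ℝ (⊤ : ℕ∞) (Function.uncurry (T n)))
    (hTs : ∀ n, ContDiff ℝ (⊤ : ℕ∞) (Function.uncurry (Ts n)))
    (hTpos : ∀ n, ∀ s ∈ Icc (0:ℝ) 1, ∀ r ∈ Icc (0:ℝ) 1, 0 ≤ T n s r)
    (hTspos : ∀ n, ∀ s ∈ Icc (0:ℝ) 1, ∀ r ∈ Icc (0:ℝ) 1, 0 ≤ Ts n s r)
    -- (i) parallel IMEX step
    (hpde1 : ∀ n, ∀ s ∈ Ioo (0:ℝ) 1, ∀ r ∈ Ioo (0:ℝ) 1,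
      (Ts n s r - T n s r) / Δt
        - deriv (fun x => (K * (T n x r) ^ ((5:ℝ)/2) - ν)
            * deriv (fun y => T n y r) x) s
        - ν * deriv (deriv (fun x => Ts n x r)) s = 0)
    (hbc0 : ∀ n, ∀ r ∈ Ioo (1/2:ℝ) 1,
      (K * (T n 0 r) ^ ((5:ℝ)/2) - ν) * deriv (fun x => T n x r) 0
        = γ * Ts n 0 r - ν * deriv (fun x => Ts n x r) 0)
    (hbc1 : ∀ n, ∀ r ∈ Ioo (1/2:ℝ) 1,
      (K * (T n 1 r) ^ ((5:ℝ)/2) - ν) * deriv (fun x => T n x r) 1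
        = -(γ * Ts n 1 r) - ν * deriv (fun x => Ts n x r) 1)
    (hper : ∀ n, ∀ r ∈ Ioo (0:ℝ) (1/2),
      T n 0 r = T n 1 r
      ∧ deriv (fun x => T n x r) 0 = deriv (fun x => T n x r) 1
      ∧ Ts n 0 r = Ts n 1 r
      ∧ deriv (fun x => Ts n x r) 0 = deriv (fun x => Ts n x r) 1)
    -- (ii) radial implicit step
    (hpde2 : ∀ n, ∀ s ∈ Ioo (0:ℝ) 1, ∀ r ∈ Ioo (0:ℝ) 1,
      (T (n+1) s r - Ts n s r) / Δt
        - Kp * deriv (deriv (fun y => T (n+1) s y)) r = 0)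
    (hneum0 : ∀ n, ∀ s ∈ Ioo (0:ℝ) 1, deriv (fun y => T (n+1) s y) 0 = -Q)
    (hneum1 : ∀ n, ∀ s ∈ Ioo (0:ℝ) 1, deriv (fun y => T (n+1) s y) 1 = 0)
    -- viscosity condition
    (hsup : ∀ n, K * (sSup (Function.uncurry (T n) ''
        (Icc (0:ℝ) 1 ×ˢ Icc (0:ℝ) 1))) ^ ((5:ℝ)/2) ≤ ν) :
    ∀ n : ℕ,
      (1/2) * (∫ s in (0:ℝ)..1, ∫ r in (0:ℝ)..1, (T (n+1) s r)^2)
        + (ν * Δt / 2) * (∫ s in (0:ℝ)..1, ∫ r in (0:ℝ)..1,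
            (deriv (fun x => T (n+1) x r) s)^2)
      ≤ (1/2) * (∫ s in (0:ℝ)..1, ∫ r in (0:ℝ)..1, (T 0 s r)^2)
        + (ν * Δt / 2) * (∫ s in (0:ℝ)..1, ∫ r in (0:ℝ)..1,
            (deriv (fun x => T 0 x r) s)^2)
        - Kp * Δt * (∑ k ∈ Finset.Icc 1 (n+1),
            ((∫ s in (0:ℝ)..1, ∫ r in (0:ℝ)..1,
                (deriv (fun y => T k s y) r)^2)
              - Q * (∫ s in (0:ℝ)..1, T k s 0))) := by
  -- step (ii), main part
  have stepB1 : ∀ n : ℕ,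
      (1/2) * (∫ s in (0:ℝ)..1, ∫ r in (0:ℝ)..1, (T (n+1) s r)^2)
        ≤ (1/2) * (∫ s in (0:ℝ)..1, ∫ r in (0:ℝ)..1, (Ts n s r)^2)
          - Kp * Δt * ((∫ s in (0:ℝ)..1, ∫ r in (0:ℝ)..1,
              (pd2 (Function.uncurry (T (n+1))) (s, r))^2)
            - Q * ∫ s in (0:ℝ)..1, T (n+1) s 0) := by
    intro n
    have hslice : ∀ s ∈ Ioo (0:ℝ) 1,
        (1/2) * (∫ r in (0:ℝ)..1, (T (n+1) s r)^2)
          ≤ (1/2) * (∫ r in (0:ℝ)..1, (Ts n s r)^2)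
            - Kp * Δt * ((∫ r in (0:ℝ)..1,
                (pd2 (Function.uncurry (T (n+1))) (s, r))^2)
              - Q * T (n+1) s 0) := by
      intro s hs
      refine slice_rad (Qb := Q) hΔt hKp (fun y => T (n+1) s y) (fun y => Ts n s y)
        (fun y => pd2 (Function.uncurry (T (n+1))) (s, y))
        (fun y => pd2 (pd2 (Function.uncurry (T (n+1)))) (s, y))
        (fun y => hasDerivAt_slice2 (hT (n+1)) s y)
        (fun y => hasDerivAt_slice2 (contDiff_pd2 (hT (n+1))) s y)
        ((hTs n).continuous.comp (continuous_const.prodMk continuous_id))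
        ((hT (n+1)).continuous.comp (continuous_const.prodMk continuous_id))
        ((contDiff_pd2 (hT (n+1))).continuous.comp (continuous_const.prodMk continuous_id))
        ((contDiff_pd2 (contDiff_pd2 (hT (n+1)))).continuous.comp
          (continuous_const.prodMk continuous_id))
        ?_ ?_ ?_
      · intro x hx
        have h2 := hpde2 n s hs x hx
        have e0 : deriv (fun y => T (n+1) s y)
            = fun y => pd2 (Function.uncurry (T (n+1))) (s, y) :=
          deriv_slice2 (hT (n+1)) s
        rw [e0] at h2
        have e1 : deriv (fun y => pd2 (Function.uncurry (T (n+1))) (s, y)) x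
            = pd2 (pd2 (Function.uncurry (T (n+1)))) (s, x) :=
          (hasDerivAt_slice2 (contDiff_pd2 (hT (n+1))) s x).deriv
        rw [e1] at h2
        show (T (n+1) s x - Ts n s x) / Δt
            = Kp * pd2 (pd2 (Function.uncurry (T (n+1)))) (s, x)
        linarith [h2]
      · show pd2 (Function.uncurry (T (n+1))) (s, 0) = -Q
        rw [← (hasDerivAt_slice2 (hT (n+1)) s 0).deriv]
        exact hneum0 n s hs
      · show pd2 (Function.uncurry (T (n+1))) (s, 1) = 0
        rw [← (hasDerivAt_slice2 (hT (n+1)) s 1).deriv]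
        exact hneum1 n s hs
    -- integrate over s
    have hcL : Continuous fun s => (1/2) * ∫ r in (0:ℝ)..1, (T (n+1) s r)^2 :=
      continuous_const.mul (contInner1 ((hT (n+1)).continuous.pow 2))
    have hcA : Continuous fun s => ∫ r in (0:ℝ)..1, (Ts n s r)^2 :=
      contInner1 ((hTs n).continuous.pow 2)
    have hcB : Continuous fun s =>
        ∫ r in (0:ℝ)..1, (pd2 (Function.uncurry (T (n+1))) (s, r))^2 :=
      contInner1 ((contDiff_pd2 (hT (n+1))).continuous.pow 2)
    have hcC : Continuous fun s => T (n+1) s 0 :=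
      (hT (n+1)).continuous.comp (continuous_id.prodMk continuous_const)
    have hcR : Continuous fun s =>
        (1/2) * (∫ r in (0:ℝ)..1, (Ts n s r)^2)
          - Kp * Δt * ((∫ r in (0:ℝ)..1,
              (pd2 (Function.uncurry (T (n+1))) (s, r))^2) - Q * T (n+1) s 0) :=
      (continuous_const.mul hcA).sub
        (continuous_const.mul (hcB.sub (continuous_const.mul hcC)))
    have hmono := intervalIntegral.integral_mono_ae_restrict (μ := volume)
      (zero_le_one' ℝ) (hcL.intervalIntegrable 0 1) (hcR.intervalIntegrable 0 1)
      (by filter_upwards [ae_restrict_Ioo'] with s hs using hslice s hs)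
    have eL : (∫ s in (0:ℝ)..1, (1/2) * ∫ r in (0:ℝ)..1, (T (n+1) s r)^2)
        = (1/2) * ∫ s in (0:ℝ)..1, ∫ r in (0:ℝ)..1, (T (n+1) s r)^2 :=
      intervalIntegral.integral_const_mul _ _
    have eR : (∫ s in (0:ℝ)..1,
        ((1/2) * (∫ r in (0:ℝ)..1, (Ts n s r)^2)
          - Kp * Δt * ((∫ r in (0:ℝ)..1,
              (pd2 (Function.uncurry (T (n+1))) (s, r))^2) - Q * T (n+1) s 0)))
        = (1/2) * (∫ s in (0:ℝ)..1, ∫ r in (0:ℝ)..1, (Ts n s r)^2)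
          - Kp * Δt * ((∫ s in (0:ℝ)..1, ∫ r in (0:ℝ)..1,
              (pd2 (Function.uncurry (T (n+1))) (s, r))^2)
            - Q * ∫ s in (0:ℝ)..1, T (n+1) s 0) := by
      rw [intervalIntegral.integral_sub
          (f := fun s => (1/2) * (∫ r in (0:ℝ)..1, (Ts n s r)^2))
          (g := fun s => Kp * Δt * ((∫ r in (0:ℝ)..1,
              (pd2 (Function.uncurry (T (n+1))) (s, r))^2) - Q * T (n+1) s 0))
          ((continuous_const.mul hcA).intervalIntegrable 0 1)
          ((continuous_const.mul (hcB.sub (continuous_const.mul hcC))).intervalIntegrable 0 1),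
        intervalIntegral.integral_const_mul, intervalIntegral.integral_const_mul,
        intervalIntegral.integral_sub (g := fun s => Q * T (n+1) s 0) (hcB.intervalIntegrable 0 1)
          ((continuous_const.mul hcC).intervalIntegrable 0 1),
        intervalIntegral.integral_const_mul]
    rw [eL, eR] at hmono
    exact hmono
  -- step (ii), s-derivative part
  have stepB2 : ∀ n : ℕ,
      (∫ s in (0:ℝ)..1, ∫ r in (0:ℝ)..1,
          (pd1 (Function.uncurry (T (n+1))) (s, r))^2)
        ≤ ∫ s in (0:ℝ)..1, ∫ r in (0:ℝ)..1,
            (pd1 (Function.uncurry (Ts n)) (s, r))^2 := by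
    intro n
    -- differentiated PDE on the open square
    have hpdeV : ∀ s ∈ Ioo (0:ℝ) 1, ∀ x ∈ Ioo (0:ℝ) 1,
        (pd1 (Function.uncurry (T (n+1))) (s, x)
            - pd1 (Function.uncurry (Ts n)) (s, x)) / Δt
          = Kp * pd2 (pd2 (pd1 (Function.uncurry (T (n+1))))) (s, x) := by
      intro s hs x hx
      have hU : IsOpen (Ioo (0:ℝ) 1 ×ˢ Ioo (0:ℝ) 1) := isOpen_Ioo.prod isOpen_Ioo
      have hmem : ((s, x) : ℝ × ℝ) ∈ Ioo (0:ℝ) 1 ×ˢ Ioo (0:ℝ) 1 := ⟨hs, hx⟩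
      have heq : (fun p : ℝ × ℝ =>
            Function.uncurry (T (n+1)) p - Function.uncurry (Ts n) p)
          =ᶠ[nhds ((s, x) : ℝ × ℝ)]
          (fun p : ℝ × ℝ =>
            (Δt * Kp) * pd2 (pd2 (Function.uncurry (T (n+1)))) p) := by
        filter_upwards [hU.mem_nhds hmem] with p hp
        obtain ⟨a, b⟩ := p
        have h := hpde2 n a hp.1 b hp.2
        have e0 : deriv (fun y => T (n+1) a y)
            = fun y => pd2 (Function.uncurry (T (n+1))) (a, y) :=
          deriv_slice2 (hT (n+1)) a
        rw [e0] at h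
        have e1 : deriv (fun y => pd2 (Function.uncurry (T (n+1))) (a, y)) b
            = pd2 (pd2 (Function.uncurry (T (n+1)))) (a, b) :=
          (hasDerivAt_slice2 (contDiff_pd2 (hT (n+1))) a b).deriv
        rw [e1] at h
        show T (n+1) a b - Ts n a b
            = Δt * Kp * pd2 (pd2 (Function.uncurry (T (n+1)))) (a, b)
        field_simp at h
        linarith [h]
      have hde := Filter.EventuallyEq.fderiv_eq (𝕜 := ℝ) heq
      have hdT : Differentiable ℝ (Function.uncurry (T (n+1))) :=
        (hT (n+1)).differentiable (by simp)
      have hdS : Differentiable ℝ (Function.uncurry (Ts n)) :=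
        (hTs n).differentiable (by simp)
      have hdD : Differentiable ℝ (pd2 (pd2 (Function.uncurry (T (n+1))))) :=
        (contDiff_pd2 (contDiff_pd2 (hT (n+1)))).differentiable (by simp)
      have hl : fderiv ℝ (fun p : ℝ × ℝ =>
            Function.uncurry (T (n+1)) p - Function.uncurry (Ts n) p) (s, x) (1, 0)
          = pd1 (Function.uncurry (T (n+1))) (s, x)
            - pd1 (Function.uncurry (Ts n)) (s, x) := by
        rw [fderiv_fun_sub (hdT (s, x)) (hdS (s, x))]
        simp [pd1]
      have hr2 : fderiv ℝ (fun p : ℝ × ℝ =>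
            (Δt * Kp) * pd2 (pd2 (Function.uncurry (T (n+1)))) p) (s, x) (1, 0)
          = (Δt * Kp) * pd1 (pd2 (pd2 (Function.uncurry (T (n+1))))) (s, x) := by
        rw [fderiv_const_mul (hdD (s, x))]
        simp [pd1]
      have hc : pd1 (pd2 (pd2 (Function.uncurry (T (n+1))))) (s, x)
          = pd2 (pd2 (pd1 (Function.uncurry (T (n+1))))) (s, x) := by
        rw [pd_comm (contDiff_pd2 (hT (n+1))) (s, x)]
        have hfe : pd1 (pd2 (Function.uncurry (T (n+1))))
            = pd2 (pd1 (Function.uncurry (T (n+1)))) :=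
          funext (pd_comm (hT (n+1)))
        rw [hfe]
      have hmain : pd1 (Function.uncurry (T (n+1))) (s, x)
            - pd1 (Function.uncurry (Ts n)) (s, x)
          = (Δt * Kp) * pd2 (pd2 (pd1 (Function.uncurry (T (n+1))))) (s, x) := by
        rw [← hc, ← hr2, ← hde, hl]
      field_simp
      linarith [hmain]
    -- vanishing Neumann data for the differentiated problem
    have hbV0 : ∀ s ∈ Ioo (0:ℝ) 1,
        pd2 (pd1 (Function.uncurry (T (n+1)))) (s, 0) = 0 := by
      intro s hs
      rw [← pd_comm (hT (n+1)) (s, 0)]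
      have e : pd1 (pd2 (Function.uncurry (T (n+1)))) (s, 0)
          = deriv (fun x => pd2 (Function.uncurry (T (n+1))) (x, 0)) s :=
        ((hasDerivAt_slice1 (contDiff_pd2 (hT (n+1))) s 0).deriv).symm
      rw [e]
      have heq : (fun x => pd2 (Function.uncurry (T (n+1))) (x, 0))
          =ᶠ[nhds s] fun _ => -Q := by
        filter_upwards [isOpen_Ioo.mem_nhds hs] with x hx
        rw [← (hasDerivAt_slice2 (hT (n+1)) x 0).deriv]
        exact hneum0 n x hx
      rw [heq.deriv_eq]
      simp
    have hbV1 : ∀ s ∈ Ioo (0:ℝ) 1,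
        pd2 (pd1 (Function.uncurry (T (n+1)))) (s, 1) = 0 := by
      intro s hs
      rw [← pd_comm (hT (n+1)) (s, 1)]
      have e : pd1 (pd2 (Function.uncurry (T (n+1)))) (s, 1)
          = deriv (fun x => pd2 (Function.uncurry (T (n+1))) (x, 1)) s :=
        ((hasDerivAt_slice1 (contDiff_pd2 (hT (n+1))) s 1).deriv).symm
      rw [e]
      have heq : (fun x => pd2 (Function.uncurry (T (n+1))) (x, 1))
          =ᶠ[nhds s] fun _ => (0:ℝ) := by
        filter_upwards [isOpen_Ioo.mem_nhds hs] with x hx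
        rw [← (hasDerivAt_slice2 (hT (n+1)) x 1).deriv]
        exact hneum1 n x hx
      rw [heq.deriv_eq]
      simp
    -- slice inequality
    have hslice : ∀ s ∈ Ioo (0:ℝ) 1,
        (∫ r in (0:ℝ)..1, (pd1 (Function.uncurry (T (n+1))) (s, r))^2)
          ≤ ∫ r in (0:ℝ)..1, (pd1 (Function.uncurry (Ts n)) (s, r))^2 := by
      intro s hs
      have h := slice_rad (Qb := 0) hΔt hKp
        (fun y => pd1 (Function.uncurry (T (n+1))) (s, y))
        (fun y => pd1 (Function.uncurry (Ts n)) (s, y))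
        (fun y => pd2 (pd1 (Function.uncurry (T (n+1)))) (s, y))
        (fun y => pd2 (pd2 (pd1 (Function.uncurry (T (n+1))))) (s, y))
        (fun y => hasDerivAt_slice2 (contDiff_pd1 (hT (n+1))) s y)
        (fun y => hasDerivAt_slice2 (contDiff_pd2 (contDiff_pd1 (hT (n+1)))) s y)
        ((contDiff_pd1 (hTs n)).continuous.comp (continuous_const.prodMk continuous_id))
        ((contDiff_pd1 (hT (n+1))).continuous.comp (continuous_const.prodMk continuous_id))
        ((contDiff_pd2 (contDiff_pd1 (hT (n+1)))).continuous.comp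
          (continuous_const.prodMk continuous_id))
        ((contDiff_pd2 (contDiff_pd2 (contDiff_pd1 (hT (n+1))))).continuous.comp
          (continuous_const.prodMk continuous_id))
        (fun x hx => hpdeV s hs x hx)
        (by show pd2 (pd1 (Function.uncurry (T (n+1)))) (s, 0) = -0
            rw [hbV0 s hs]; norm_num)
        (hbV1 s hs)
      simp only [zero_mul, sub_zero] at h
      have hpos : 0 ≤ ∫ r in (0:ℝ)..1,
          (pd2 (pd1 (Function.uncurry (T (n+1)))) (s, r))^2 :=
        intervalIntegral.integral_nonneg (zero_le_one' ℝ) (fun x _ => sq_nonneg _)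
      have hprod : 0 ≤ Kp * Δt * ∫ r in (0:ℝ)..1,
          (pd2 (pd1 (Function.uncurry (T (n+1)))) (s, r))^2 :=
        mul_nonneg (mul_nonneg hKp.le hΔt.le) hpos
      linarith [h, hprod]
    -- integrate over s
    have hcL : Continuous fun s =>
        ∫ r in (0:ℝ)..1, (pd1 (Function.uncurry (T (n+1))) (s, r))^2 :=
      contInner1 ((contDiff_pd1 (hT (n+1))).continuous.pow 2)
    have hcR : Continuous fun s =>
        ∫ r in (0:ℝ)..1, (pd1 (Function.uncurry (Ts n)) (s, r))^2 :=
      contInner1 ((contDiff_pd1 (hTs n)).continuous.pow 2)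
    exact intervalIntegral.integral_mono_ae_restrict (μ := volume)
      (zero_le_one' ℝ) (hcL.intervalIntegrable 0 1) (hcR.intervalIntegrable 0 1)
      (by filter_upwards [ae_restrict_Ioo'] with s hs using hslice s hs)
  -- step (i): parallel IMEX estimate
  have c52 : Continuous fun t : ℝ => t ^ ((5:ℝ)/2) :=
    continuous_iff_continuousAt.2 fun t =>
      Real.continuousAt_rpow_const t _ (Or.inr (by norm_num))
  have c32 : Continuous fun t : ℝ => t ^ ((5:ℝ)/2 - 1) :=
    continuous_iff_continuousAt.2 fun t =>
      Real.continuousAt_rpow_const t _ (Or.inr (by norm_num))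
  have hbd : ∀ n : ℕ, ∀ x ∈ Icc (0:ℝ) 1, ∀ rr ∈ Icc (0:ℝ) 1,
      K * T n x rr ^ ((5:ℝ)/2) ≤ ν := by
    intro n x hx rr hrr
    refine le_trans ?_ (hsup n)
    have hm : T n x rr ≤ sSup (Function.uncurry (T n) '' (Icc 0 1 ×ˢ Icc 0 1)) :=
      le_csSup (((isCompact_Icc.prod isCompact_Icc).image (hT n).continuous).bddAbove)
        (mem_image_of_mem _ (mk_mem_prod hx hrr))
    exact mul_le_mul_of_nonneg_left
      (Real.rpow_le_rpow (hTpos n x hx rr hrr) hm (by norm_num)) hK.le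
  have stepA : ∀ n : ℕ,
      (1/2) * (∫ s in (0:ℝ)..1, ∫ r in (0:ℝ)..1, (Ts n s r)^2)
        + (ν * Δt / 2) * (∫ s in (0:ℝ)..1, ∫ r in (0:ℝ)..1,
            (pd1 (Function.uncurry (Ts n)) (s, r))^2)
      ≤ (1/2) * (∫ s in (0:ℝ)..1, ∫ r in (0:ℝ)..1, (T n s r)^2)
        + (ν * Δt / 2) * (∫ s in (0:ℝ)..1, ∫ r in (0:ℝ)..1,
            (pd1 (Function.uncurry (T n)) (s, r))^2) := by
    intro n
    have hslice : ∀ r ∈ Ioo (0:ℝ) 1, r ≠ 1/2 →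
        (1/2) * (∫ x in (0:ℝ)..1, (Ts n x r)^2)
          + (ν * Δt / 2) * (∫ x in (0:ℝ)..1, (pd1 (Function.uncurry (Ts n)) (x, r))^2)
        ≤ (1/2) * (∫ x in (0:ℝ)..1, (T n x r)^2)
          + (ν * Δt / 2) * (∫ x in (0:ℝ)..1, (pd1 (Function.uncurry (T n)) (x, r))^2) := by
      intro r hr hrh
      have hF : ∀ x : ℝ, HasDerivAt
          (fun z => (K * T n z r ^ ((5:ℝ)/2) - ν) * pd1 (Function.uncurry (T n)) (z, r))
          ((K * ((5:ℝ)/2 * T n x r ^ ((5:ℝ)/2 - 1) * pd1 (Function.uncurry (T n)) (x, r)))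
              * pd1 (Function.uncurry (T n)) (x, r)
            + (K * T n x r ^ ((5:ℝ)/2) - ν) * pd1 (pd1 (Function.uncurry (T n))) (x, r)) x := by
        intro x
        have h1 : HasDerivAt (fun z => T n z r) (pd1 (Function.uncurry (T n)) (x, r)) x :=
          hasDerivAt_slice1 (hT n) x r
        have h2 : HasDerivAt (fun z => T n z r ^ ((5:ℝ)/2))
            ((5:ℝ)/2 * T n x r ^ ((5:ℝ)/2 - 1) * pd1 (Function.uncurry (T n)) (x, r)) x := by
          have hg := Real.hasDerivAt_rpow_const (x := T n x r) (p := (5:ℝ)/2)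
            (Or.inr (by norm_num))
          exact hg.comp x h1
        have h3 : HasDerivAt (fun z => K * T n z r ^ ((5:ℝ)/2) - ν)
            (K * ((5:ℝ)/2 * T n x r ^ ((5:ℝ)/2 - 1) * pd1 (Function.uncurry (T n)) (x, r))) x :=
          (h2.const_mul K).sub_const ν
        exact h3.mul (hasDerivAt_slice1 (contDiff_pd1 (hT n)) x r)
      have hcT : Continuous fun z => T n z r :=
        (hT n).continuous.comp (continuous_id.prodMk continuous_const)
      have hcT1 : Continuous fun z => pd1 (Function.uncurry (T n)) (z, r) :=
        (contDiff_pd1 (hT n)).continuous.comp (continuous_id.prodMk continuous_const)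
      have hcT11 : Continuous fun z => pd1 (pd1 (Function.uncurry (T n))) (z, r) :=
        (contDiff_pd1 (contDiff_pd1 (hT n))).continuous.comp
          (continuous_id.prodMk continuous_const)
      have hcS : Continuous fun z => Ts n z r :=
        (hTs n).continuous.comp (continuous_id.prodMk continuous_const)
      have hcS1 : Continuous fun z => pd1 (Function.uncurry (Ts n)) (z, r) :=
        (contDiff_pd1 (hTs n)).continuous.comp (continuous_id.prodMk continuous_const)
      have hcS11 : Continuous fun z => pd1 (pd1 (Function.uncurry (Ts n))) (z, r) :=
        (contDiff_pd1 (contDiff_pd1 (hTs n))).continuous.comp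
          (continuous_id.prodMk continuous_const)
      have hcF : Continuous fun z =>
          (K * T n z r ^ ((5:ℝ)/2) - ν) * pd1 (Function.uncurry (T n)) (z, r) :=
        ((continuous_const.mul (c52.comp hcT)).sub continuous_const).mul hcT1
      have hcF' : Continuous fun x =>
          (K * ((5:ℝ)/2 * T n x r ^ ((5:ℝ)/2 - 1) * pd1 (Function.uncurry (T n)) (x, r)))
              * pd1 (Function.uncurry (T n)) (x, r)
            + (K * T n x r ^ ((5:ℝ)/2) - ν) * pd1 (pd1 (Function.uncurry (T n))) (x, r) :=
        ((continuous_const.mul ((continuous_const.mul (c32.comp hcT)).mul hcT1)).mul hcT1).add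
          (((continuous_const.mul (c52.comp hcT)).sub continuous_const).mul hcT11)
      have ed : deriv (fun y => T n y r) = fun z => pd1 (Function.uncurry (T n)) (z, r) :=
        deriv_slice1 (hT n) r
      have edS : deriv (fun x => Ts n x r) = fun z => pd1 (Function.uncurry (Ts n)) (z, r) :=
        deriv_slice1 (hTs n) r
      have hpde' : ∀ x ∈ Ioo (0:ℝ) 1, (Ts n x r - T n x r) / Δt
          = ((K * ((5:ℝ)/2 * T n x r ^ ((5:ℝ)/2 - 1) * pd1 (Function.uncurry (T n)) (x, r)))
                * pd1 (Function.uncurry (T n)) (x, r)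
              + (K * T n x r ^ ((5:ℝ)/2) - ν) * pd1 (pd1 (Function.uncurry (T n))) (x, r))
            + ν * pd1 (pd1 (Function.uncurry (Ts n))) (x, r) := by
        intro x hx
        have h := hpde1 n x hx r hr
        have hd1 : deriv (fun x_1 =>
              (K * T n x_1 r ^ ((5:ℝ)/2) - ν) * deriv (fun y => T n y r) x_1) x
            = (K * ((5:ℝ)/2 * T n x r ^ ((5:ℝ)/2 - 1) * pd1 (Function.uncurry (T n)) (x, r)))
                * pd1 (Function.uncurry (T n)) (x, r)
              + (K * T n x r ^ ((5:ℝ)/2) - ν) * pd1 (pd1 (Function.uncurry (T n))) (x, r) := by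
          have hfe : (fun x_1 =>
                (K * T n x_1 r ^ ((5:ℝ)/2) - ν) * deriv (fun y => T n y r) x_1)
              = fun z => (K * T n z r ^ ((5:ℝ)/2) - ν) * pd1 (Function.uncurry (T n)) (z, r) := by
            funext z; rw [ed]
          rw [hfe, (hF x).deriv]
        have hd2 : deriv (deriv (fun x => Ts n x r)) x
            = pd1 (pd1 (Function.uncurry (Ts n))) (x, r) := by
          rw [edS]; exact (hasDerivAt_slice1 (contDiff_pd1 (hTs n)) x r).deriv
        rw [hd1, hd2] at h
        linarith [h]
      have ed0 : deriv (fun x => T n x r) 0 = pd1 (Function.uncurry (T n)) (0, r) :=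
        (hasDerivAt_slice1 (hT n) 0 r).deriv
      have ed1 : deriv (fun x => T n x r) 1 = pd1 (Function.uncurry (T n)) (1, r) :=
        (hasDerivAt_slice1 (hT n) 1 r).deriv
      have edS0 : deriv (fun x => Ts n x r) 0 = pd1 (Function.uncurry (Ts n)) (0, r) :=
        (hasDerivAt_slice1 (hTs n) 0 r).deriv
      have edS1 : deriv (fun x => Ts n x r) 1 = pd1 (Function.uncurry (Ts n)) (1, r) :=
        (hasDerivAt_slice1 (hTs n) 1 r).deriv
      have hB : (K * T n 1 r ^ ((5:ℝ)/2) - ν) * pd1 (Function.uncurry (T n)) (1, r)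
              * Ts n 1 r
            + ν * (pd1 (Function.uncurry (Ts n)) (1, r) * Ts n 1 r)
          - ((K * T n 0 r ^ ((5:ℝ)/2) - ν) * pd1 (Function.uncurry (T n)) (0, r)
              * Ts n 0 r
            + ν * (pd1 (Function.uncurry (Ts n)) (0, r) * Ts n 0 r)) ≤ 0 := by
        rcases lt_or_gt_of_ne hrh with hlt | hgt
        · obtain ⟨hp1, hp2, hp3, hp4⟩ := hper n r ⟨hr.1, hlt⟩
          rw [ed0, ed1] at hp2
          rw [edS0, edS1] at hp4
          rw [hp1, hp2, hp3, hp4]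
          linarith
        · have h0 := hbc0 n r ⟨hgt, hr.2⟩
          have h1 := hbc1 n r ⟨hgt, hr.2⟩
          rw [ed0, edS0] at h0
          rw [ed1, edS1] at h1
          rw [h0, h1]
          nlinarith [mul_nonneg hγ (sq_nonneg (Ts n 0 r)), mul_nonneg hγ (sq_nonneg (Ts n 1 r))]
      have hY : ∀ x ∈ Icc (0:ℝ) 1,
          -((K * T n x r ^ ((5:ℝ)/2) - ν) * pd1 (Function.uncurry (T n)) (x, r)
              * pd1 (Function.uncurry (Ts n)) (x, r))
            ≤ ν / 2 * ((pd1 (Function.uncurry (T n)) (x, r))^2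
              + (pd1 (Function.uncurry (Ts n)) (x, r))^2) := by
        intro x hx
        have h1 : 0 ≤ K * T n x r ^ ((5:ℝ)/2) :=
          mul_nonneg hK.le (Real.rpow_nonneg (hTpos n x hx r (Ioo_subset_Icc_self hr)) _)
        have h2 : K * T n x r ^ ((5:ℝ)/2) ≤ ν := hbd n x hx r (Ioo_subset_Icc_self hr)
        nlinarith [mul_nonneg (sub_nonneg.2 h2)
            (sq_nonneg (pd1 (Function.uncurry (T n)) (x, r)
              - pd1 (Function.uncurry (Ts n)) (x, r))),
          mul_nonneg h1 (add_nonneg (sq_nonneg (pd1 (Function.uncurry (T n)) (x, r)))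
            (sq_nonneg (pd1 (Function.uncurry (Ts n)) (x, r))))]
      exact slice_par hΔt hν (fun x => T n x r) (fun x => Ts n x r)
        (fun x => pd1 (Function.uncurry (T n)) (x, r))
        (fun x => pd1 (Function.uncurry (Ts n)) (x, r))
        (fun x => pd1 (pd1 (Function.uncurry (Ts n))) (x, r))
        (fun z => (K * T n z r ^ ((5:ℝ)/2) - ν) * pd1 (Function.uncurry (T n)) (z, r))
        (fun x => (K * ((5:ℝ)/2 * T n x r ^ ((5:ℝ)/2 - 1)
              * pd1 (Function.uncurry (T n)) (x, r)))
            * pd1 (Function.uncurry (T n)) (x, r)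
          + (K * T n x r ^ ((5:ℝ)/2) - ν) * pd1 (pd1 (Function.uncurry (T n))) (x, r))
        (fun x => hasDerivAt_slice1 (hTs n) x r)
        (fun x => hasDerivAt_slice1 (contDiff_pd1 (hTs n)) x r)
        hF hcT hcT1 hcS hcS1 hcS11 hcF hcF' hpde' hB hY
    -- swap the four double integrals
    have sw1 : (∫ s in (0:ℝ)..1, ∫ r in (0:ℝ)..1, (Ts n s r)^2)
        = ∫ r in (0:ℝ)..1, ∫ s in (0:ℝ)..1, (Ts n s r)^2 :=
      swap01 (fun s r => (Ts n s r)^2) ((hTs n).continuous.pow 2)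
    have sw2 : (∫ s in (0:ℝ)..1, ∫ r in (0:ℝ)..1,
          (pd1 (Function.uncurry (Ts n)) (s, r))^2)
        = ∫ r in (0:ℝ)..1, ∫ s in (0:ℝ)..1, (pd1 (Function.uncurry (Ts n)) (s, r))^2 :=
      swap01 (fun s r => (pd1 (Function.uncurry (Ts n)) (s, r))^2)
        ((contDiff_pd1 (hTs n)).continuous.pow 2)
    have sw3 : (∫ s in (0:ℝ)..1, ∫ r in (0:ℝ)..1, (T n s r)^2)
        = ∫ r in (0:ℝ)..1, ∫ s in (0:ℝ)..1, (T n s r)^2 :=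
      swap01 (fun s r => (T n s r)^2) ((hT n).continuous.pow 2)
    have sw4 : (∫ s in (0:ℝ)..1, ∫ r in (0:ℝ)..1,
          (pd1 (Function.uncurry (T n)) (s, r))^2)
        = ∫ r in (0:ℝ)..1, ∫ s in (0:ℝ)..1, (pd1 (Function.uncurry (T n)) (s, r))^2 :=
      swap01 (fun s r => (pd1 (Function.uncurry (T n)) (s, r))^2)
        ((contDiff_pd1 (hT n)).continuous.pow 2)
    -- integrate the slice inequality over r
    have hcA : Continuous fun r => ∫ x in (0:ℝ)..1, (Ts n x r)^2 :=
      contInner2 ((hTs n).continuous.pow 2)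
    have hcB : Continuous fun r =>
        ∫ x in (0:ℝ)..1, (pd1 (Function.uncurry (Ts n)) (x, r))^2 :=
      contInner2 ((contDiff_pd1 (hTs n)).continuous.pow 2)
    have hcC : Continuous fun r => ∫ x in (0:ℝ)..1, (T n x r)^2 :=
      contInner2 ((hT n).continuous.pow 2)
    have hcD : Continuous fun r =>
        ∫ x in (0:ℝ)..1, (pd1 (Function.uncurry (T n)) (x, r))^2 :=
      contInner2 ((contDiff_pd1 (hT n)).continuous.pow 2)
    have hmono := intervalIntegral.integral_mono_ae_restrict (μ := volume)
      (f := fun r => (1/2) * (∫ x in (0:ℝ)..1, (Ts n x r)^2)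
            + (ν * Δt / 2) * ∫ x in (0:ℝ)..1, (pd1 (Function.uncurry (Ts n)) (x, r))^2)
      (g := fun r => (1/2) * (∫ x in (0:ℝ)..1, (T n x r)^2)
            + (ν * Δt / 2) * ∫ x in (0:ℝ)..1, (pd1 (Function.uncurry (T n)) (x, r))^2)
      (zero_le_one' ℝ)
      (((continuous_const.mul hcA).add (continuous_const.mul hcB)).intervalIntegrable 0 1)
      (((continuous_const.mul hcC).add (continuous_const.mul hcD)).intervalIntegrable 0 1)
      (by filter_upwards [ae_restrict_IooHalf] with r hrr using hslice r hrr.1 hrr.2)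
    have eL : (∫ r in (0:ℝ)..1,
          ((1/2) * (∫ x in (0:ℝ)..1, (Ts n x r)^2)
            + (ν * Δt / 2) * ∫ x in (0:ℝ)..1, (pd1 (Function.uncurry (Ts n)) (x, r))^2))
        = (1/2) * (∫ r in (0:ℝ)..1, ∫ x in (0:ℝ)..1, (Ts n x r)^2)
          + (ν * Δt / 2) * ∫ r in (0:ℝ)..1, ∫ x in (0:ℝ)..1,
              (pd1 (Function.uncurry (Ts n)) (x, r))^2 := by
      rw [intervalIntegral.integral_add
          (f := fun r => (1/2) * (∫ x in (0:ℝ)..1, (Ts n x r)^2))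
          (g := fun r => (ν * Δt / 2) * ∫ x in (0:ℝ)..1, (pd1 (Function.uncurry (Ts n)) (x, r))^2)
          ((continuous_const.mul hcA).intervalIntegrable 0 1)
          ((continuous_const.mul hcB).intervalIntegrable 0 1),
        intervalIntegral.integral_const_mul, intervalIntegral.integral_const_mul]
    have eR : (∫ r in (0:ℝ)..1,
          ((1/2) * (∫ x in (0:ℝ)..1, (T n x r)^2)
            + (ν * Δt / 2) * ∫ x in (0:ℝ)..1, (pd1 (Function.uncurry (T n)) (x, r))^2))
        = (1/2) * (∫ r in (0:ℝ)..1, ∫ x in (0:ℝ)..1, (T n x r)^2)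
          + (ν * Δt / 2) * ∫ r in (0:ℝ)..1, ∫ x in (0:ℝ)..1,
              (pd1 (Function.uncurry (T n)) (x, r))^2 := by
      rw [intervalIntegral.integral_add
          (f := fun r => (1/2) * (∫ x in (0:ℝ)..1, (T n x r)^2))
          (g := fun r => (ν * Δt / 2) * ∫ x in (0:ℝ)..1, (pd1 (Function.uncurry (T n)) (x, r))^2)
          ((continuous_const.mul hcC).intervalIntegrable 0 1)
          ((continuous_const.mul hcD).intervalIntegrable 0 1),
        intervalIntegral.integral_const_mul, intervalIntegral.integral_const_mul]
    rw [eL, eR] at hmono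
    rw [sw1, sw2, sw3, sw4]
    exact hmono
  -- normalize the derivative expressions in the statement
  have nrm1 : ∀ k : ℕ,
      (∫ s in (0:ℝ)..1, ∫ r in (0:ℝ)..1, (deriv (fun x => T k x r) s)^2)
        = ∫ s in (0:ℝ)..1, ∫ r in (0:ℝ)..1, (pd1 (Function.uncurry (T k)) (s, r))^2 := by
    intro k
    refine intervalIntegral.integral_congr fun s _ => ?_
    refine intervalIntegral.integral_congr fun r _ => ?_
    have e : deriv (fun x => T k x r) s = pd1 (Function.uncurry (T k)) (s, r) :=
      (hasDerivAt_slice1 (hT k) s r).deriv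
    rw [e]
  have nrm2 : ∀ k : ℕ,
      (∫ s in (0:ℝ)..1, ∫ r in (0:ℝ)..1, (deriv (fun y => T k s y) r)^2)
        = ∫ s in (0:ℝ)..1, ∫ r in (0:ℝ)..1, (pd2 (Function.uncurry (T k)) (s, r))^2 := by
    intro k
    refine intervalIntegral.integral_congr fun s _ => ?_
    refine intervalIntegral.integral_congr fun r _ => ?_
    have e : deriv (fun y => T k s y) r = pd2 (Function.uncurry (T k)) (s, r) :=
      (hasDerivAt_slice2 (hT k) s r).deriv
    rw [e]
  -- energies and dissipation terms
  set E : ℕ → ℝ := fun k =>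
    (1/2) * (∫ s in (0:ℝ)..1, ∫ r in (0:ℝ)..1, (T k s r)^2)
      + (ν * Δt / 2) * ∫ s in (0:ℝ)..1, ∫ r in (0:ℝ)..1,
          (pd1 (Function.uncurry (T k)) (s, r))^2 with hE
  set X : ℕ → ℝ := fun k =>
    (∫ s in (0:ℝ)..1, ∫ r in (0:ℝ)..1, (pd2 (Function.uncurry (T k)) (s, r))^2)
      - Q * ∫ s in (0:ℝ)..1, T k s 0 with hX
  have hstep : ∀ m : ℕ, E (m+1) ≤ E m - Kp * Δt * X (m+1) := by
    intro m
    have h1 := stepB1 m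
    have h2 := stepB2 m
    have h3 := stepA m
    have h2' : (ν * Δt / 2) * (∫ s in (0:ℝ)..1, ∫ r in (0:ℝ)..1,
          (pd1 (Function.uncurry (T (m+1))) (s, r))^2)
        ≤ (ν * Δt / 2) * ∫ s in (0:ℝ)..1, ∫ r in (0:ℝ)..1,
            (pd1 (Function.uncurry (Ts m)) (s, r))^2 :=
      mul_le_mul_of_nonneg_left h2 (by positivity)
    simp only [hE, hX]
    linarith [h1, h2', h3]
  have hmain : ∀ n : ℕ, E (n+1) ≤ E 0 - Kp * Δt * ∑ k ∈ Finset.Icc 1 (n+1), X k := by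
    intro n
    induction n with
    | zero => simpa using hstep 0
    | succ m ih =>
      have h1 := hstep (m+1)
      have hsum : ∑ k ∈ Finset.Icc 1 (m+1+1), X k
          = (∑ k ∈ Finset.Icc 1 (m+1), X k) + X (m+1+1) := by
        rw [show (1:ℕ) = 0+1 from rfl, Finset.Icc_add_one_left_eq_Ioc, Finset.Icc_add_one_left_eq_Ioc,
          Finset.sum_Ioc_succ_top (Nat.zero_le _)]
      rw [hsum]
      linarith [h1, ih]
  intro n
  have h := hmain n
  rw [nrm1 (n+1), nrm1 0]
  have hsum_eq : (∑ k ∈ Finset.Icc 1 (n+1),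
        ((∫ s in (0:ℝ)..1, ∫ r in (0:ℝ)..1, (deriv (fun y => T k s y) r)^2)
          - Q * (∫ s in (0:ℝ)..1, T k s 0)))
      = ∑ k ∈ Finset.Icc 1 (n+1), X k := by
    refine Finset.sum_congr rfl fun k _ => ?_
    rw [nrm2 k, hX]
  rw [hsum_eq]
  exact h
end

section
/- Let β ≤ 0 and Δt > 0. Suppose real numbers T_i^n, T_e^n, T_i^⋆, T_e^⋆ satisfy the implicit source step T_i^⋆ − T_i^n = Δtβ(T_i^⋆ − T_e^⋆) and T_e^⋆ − T_e^n = −Δtβ(T_i^⋆ − T_e^⋆). Then (T_i^⋆)² + (T_e^⋆)² ≤ (T_i^n)² + (T_e^n)². -/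
/-! With `h = Δt β` and `d = x - y` the difference of the new states, the old states are
`x - h d` and `y + h d`; expanding the squares, the cross terms combine to `-2h‖d‖²`, so
`‖x₀‖² + ‖y₀‖² = ‖x‖² + ‖y‖² + 2h(h - 1)‖d‖²`, and `h(h - 1) ≥ 0` once `h ≤ 0`. -/

section ImplicitExchange

variable {E : Type*} [NormedAddCommGroup E] [InnerProductSpace ℝ E]

theorem norm_sq_add_norm_sq_of_implicit_exchange {h : ℝ} {x₀ y₀ x y : E}
    (hx : x - x₀ = h • (x - y)) (hy : y - y₀ = -(h • (x - y))) :
    ‖x₀‖ ^ 2 + ‖y₀‖ ^ 2 = ‖x‖ ^ 2 + ‖y‖ ^ 2 + 2 * h * (h - 1) * ‖x - y‖ ^ 2 := by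
  obtain rfl : x₀ = x - h • (x - y) := by rw [← hx, sub_sub_cancel]
  obtain rfl : y₀ = y + h • (x - y) := by rw [← neg_neg (h • (x - y)), ← hy]; abel
  have hinner : inner ℝ x (x - y) - inner ℝ y (x - y) = ‖x - y‖ ^ 2 := by
    rw [← inner_sub_left, real_inner_self_eq_norm_sq]
  rw [norm_sub_sq_real, norm_add_sq_real, inner_smul_right, inner_smul_right, norm_smul,
    Real.norm_eq_abs, mul_pow, sq_abs]
  linear_combination (-2 * h) * hinner

theorem norm_sq_add_norm_sq_le_of_implicit_exchange {h : ℝ} (hh : h ≤ 0) {x₀ y₀ x y : E}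
    (hx : x - x₀ = h • (x - y)) (hy : y - y₀ = -(h • (x - y))) :
    ‖x‖ ^ 2 + ‖y‖ ^ 2 ≤ ‖x₀‖ ^ 2 + ‖y₀‖ ^ 2 := by
  rw [norm_sq_add_norm_sq_of_implicit_exchange hx hy, le_add_iff_nonneg_right]
  exact mul_nonneg (by nlinarith) (sq_nonneg _)

end ImplicitExchange

/-- Pointwise L²-decrease of the implicit discretization of the
temperature-exchange source term `±β(T_i − T_e)` with `β ≤ 0`. -/
theorem implicit_source_step_L2_decrease
    (β Δt : ℝ) (hβ : β ≤ 0) (hΔt : 0 < Δt)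
    (Tin Ten Tis Tes : ℝ)
    (hi : Tis - Tin = Δt * β * (Tis - Tes))
    (he : Tes - Ten = -(Δt * β * (Tis - Tes))) :
    Tis^2 + Tes^2 ≤ Tin^2 + Ten^2 := by
  simpa only [Real.norm_eq_abs, sq_abs] using
    norm_sq_add_norm_sq_le_of_implicit_exchange (mul_nonpos_of_nonneg_of_nonpos hΔt.le hβ) hi he
end

section
/- Let Ω = (0,1)×(0,1) with variables (s,r), K_∥ > 0, K_⊥ > 0, γ ≥ 0, Q_⊥ ∈ ℝ. Let T : [0,∞)×[0,1]×[0,1] → ℝ be a smooth nonnegative solution of ∂_tT − ∂_s(K_∥ T^{5/2} ∂_sT) − ∂_r(K_⊥ ∂_rT) = 0 on (0,∞)×Ω satisfying the boundary conditions ∂_rT(t,s,0) = −Q_⊥ and ∂_rT(t,s,1) = 0 for s ∈ (0,1); for r ∈ (1/2,1): K_∥T^{5/2}(t,0,r)∂_sT(t,0,r) = γT(t,0,r) and K_∥T^{5/2}(t,1,r)∂_sT(t,1,r) = −γT(t,1,r); and for r ∈ (0,1/2): T(t,0,r) = T(t,1,r) together with matching of the parallel flux K_∥T^{5/2}∂_sT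 at s=0 and s=1. Then for all t > 0: (1/2)(d/dt)∫_Ω |T(t,s,r)|² ds dr = −(16K_∥/81)∫_Ω |∂_s(T^{9/4})|² ds dr − K_⊥∫_Ω |∂_rT|² ds dr − γ∫_{1/2}^1 (T(t,0,r)² + T(t,1,r)²) dr + K_⊥ Q_⊥ ∫_0^1 T(t,s,0) ds. -/
open Set MeasureTheory


namespace ContEnergyAux

lemma continuous_rpow_comp {X : Type*} [TopologicalSpace X] {f : X → ℝ}
    (hf : Continuous f) {q : ℝ} (hq : 0 ≤ q) : Continuous fun x => f x ^ q :=
  continuous_iff_continuousAt.2 fun x =>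
    (Real.continuousAt_rpow_const _ _ (Or.inr hq)).comp hf.continuousAt

noncomputable def pd (G : ℝ × ℝ × ℝ → ℝ) (v p : ℝ × ℝ × ℝ) : ℝ := fderiv ℝ G p v

lemma pd_contDiff {G : ℝ × ℝ × ℝ → ℝ} (hG : ContDiff ℝ (⊤ : ℕ∞) G) (v : ℝ × ℝ × ℝ) :
    ContDiff ℝ (⊤ : ℕ∞) (pd G v) :=
  (hG.fderiv_right (by simp)).clm_apply contDiff_const

lemma hasDerivAt_pd1 {G : ℝ × ℝ × ℝ → ℝ} (hG : ContDiff ℝ (⊤ : ℕ∞) G) (t s r : ℝ) :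
    HasDerivAt (fun x => G (x, s, r)) (pd G (1, 0, 0) (t, s, r)) t := by
  have hline : HasDerivAt (fun x : ℝ => ((x, s, r) : ℝ × ℝ × ℝ)) (1, 0, 0) t :=
    (hasDerivAt_id t).prodMk ((hasDerivAt_const t s).prodMk (hasDerivAt_const t r))
  exact ((hG.differentiable (by simp) (t, s, r)).hasFDerivAt).comp_hasDerivAt t hline

lemma hasDerivAt_pd2 {G : ℝ × ℝ × ℝ → ℝ} (hG : ContDiff ℝ (⊤ : ℕ∞) G) (t s r : ℝ) :
    HasDerivAt (fun x => G (t, x, r)) (pd G (0, 1, 0) (t, s, r)) s := by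
  have hline : HasDerivAt (fun x : ℝ => ((t, x, r) : ℝ × ℝ × ℝ)) (0, 1, 0) s :=
    (hasDerivAt_const s t).prodMk ((hasDerivAt_id s).prodMk (hasDerivAt_const s r))
  exact ((hG.differentiable (by simp) (t, s, r)).hasFDerivAt).comp_hasDerivAt s hline

lemma hasDerivAt_pd3 {G : ℝ × ℝ × ℝ → ℝ} (hG : ContDiff ℝ (⊤ : ℕ∞) G) (t s r : ℝ) :
    HasDerivAt (fun x => G (t, s, x)) (pd G (0, 0, 1) (t, s, r)) r := by
  have hline : HasDerivAt (fun x : ℝ => ((t, s, x) : ℝ × ℝ × ℝ)) (0, 0, 1) r :=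
    (hasDerivAt_const r t).prodMk ((hasDerivAt_const r s).prodMk (hasDerivAt_id r))
  exact ((hG.differentiable (by simp) (t, s, r)).hasFDerivAt).comp_hasDerivAt r hline

lemma intervalIntegral_congr_Ioo {f g : ℝ → ℝ} {a b : ℝ} (hab : a ≤ b)
    (h : ∀ x ∈ Ioo a b, f x = g x) :
    ∫ x in a..b, f x = ∫ x in a..b, g x := by
  rw [intervalIntegral.integral_of_le hab, intervalIntegral.integral_of_le hab,
    MeasureTheory.integral_Ioc_eq_integral_Ioo, MeasureTheory.integral_Ioc_eq_integral_Ioo]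
  exact MeasureTheory.setIntegral_congr_fun measurableSet_Ioo h

lemma integral_restrict_Icc (f : ℝ → ℝ) :
    ∫ x, f x ∂(volume.restrict (Icc (0:ℝ) 1)) = ∫ x in (0:ℝ)..1, f x := by
  rw [intervalIntegral.integral_of_le zero_le_one]
  exact MeasureTheory.integral_Icc_eq_integral_Ioc

lemma integrable_prod_restrict {f : ℝ × ℝ → ℝ} (hf : Continuous f) :
    Integrable f ((volume.restrict (Icc (0:ℝ) 1)).prod (volume.restrict (Icc (0:ℝ) 1))) := by
  rw [MeasureTheory.Measure.prod_restrict, ← MeasureTheory.Measure.volume_eq_prod]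
  exact hf.continuousOn.integrableOn_compact (isCompact_Icc.prod isCompact_Icc)

lemma prodint2 {f : ℝ → ℝ → ℝ} (hf : Continuous fun p : ℝ × ℝ => f p.1 p.2) :
    ∫ p, f p.1 p.2 ∂((volume.restrict (Icc (0:ℝ) 1)).prod (volume.restrict (Icc (0:ℝ) 1)))
      = ∫ s in (0:ℝ)..1, ∫ r in (0:ℝ)..1, f s r := by
  rw [MeasureTheory.integral_prod _ (integrable_prod_restrict hf)]
  have h1 : ∀ x : ℝ, (∫ y, f x y ∂(volume.restrict (Icc (0:ℝ) 1)))
      = ∫ y in (0:ℝ)..1, f x y := fun x => integral_restrict_Icc _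
  simp_rw [h1]
  exact integral_restrict_Icc _

lemma prodint2_symm {f : ℝ → ℝ → ℝ} (hf : Continuous fun p : ℝ × ℝ => f p.1 p.2) :
    ∫ p, f p.1 p.2 ∂((volume.restrict (Icc (0:ℝ) 1)).prod (volume.restrict (Icc (0:ℝ) 1)))
      = ∫ r in (0:ℝ)..1, ∫ s in (0:ℝ)..1, f s r := by
  rw [MeasureTheory.integral_prod_symm _ (integrable_prod_restrict hf)]
  have h1 : ∀ y : ℝ, (∫ x, f x y ∂(volume.restrict (Icc (0:ℝ) 1)))
      = ∫ x in (0:ℝ)..1, f x y := fun y => integral_restrict_Icc _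
  simp_rw [h1]
  exact integral_restrict_Icc _

lemma ae_mem_Ioo_prod :
    ∀ᵐ p ∂((volume.restrict (Icc (0:ℝ) 1)).prod (volume.restrict (Icc (0:ℝ) 1))),
      p ∈ Ioo (0:ℝ) 1 ×ˢ Ioo (0:ℝ) 1 := by
  have h1 : (volume.restrict (Icc (0:ℝ) 1)) = volume.restrict (Ioo (0:ℝ) 1) :=
    (Measure.restrict_congr_set Ioo_ae_eq_Icc).symm
  rw [h1, Measure.prod_restrict]
  exact ae_restrict_mem (measurableSet_Ioo.prod measurableSet_Ioo)

instance : IsFiniteMeasure (volume.restrict (Icc (0:ℝ) 1)) :=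
  ⟨by rw [Measure.restrict_apply_univ]; exact isCompact_Icc.measure_lt_top⟩

end ContEnergyAux

open ContEnergyAux in
/-- Energy identity (Section 3) for the continuous 2D anisotropic nonlinear
heat equation `∂ₜT − ∂ₛ(K‖ T^{5/2} ∂ₛT) − ∂ᵣ(K⊥ ∂ᵣT) = 0` on
`Ω = (0,1)²` with Neumann conditions in `r`, limiter conditions in `s` for
`r ∈ (1/2,1)` and periodic conditions in `s` for `r ∈ (0,1/2)`.
`T t s r` denotes the temperature at time `t` and position `(s,r)`. -/
theorem continuous_2D_energy_identity
    (K Kp γ Q : ℝ) (hK : 0 < K) (hKp : 0 < Kp) (hγ : 0 ≤ γ)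
    (T : ℝ → ℝ → ℝ → ℝ)
    (hT : ContDiff ℝ (⊤ : ℕ∞) (fun p : ℝ × ℝ × ℝ => T p.1 p.2.1 p.2.2))
    (hTpos : ∀ t ∈ Ici (0:ℝ), ∀ s ∈ Icc (0:ℝ) 1, ∀ r ∈ Icc (0:ℝ) 1,
      0 ≤ T t s r)
    (hpde : ∀ t > (0:ℝ), ∀ s ∈ Ioo (0:ℝ) 1, ∀ r ∈ Ioo (0:ℝ) 1,
      deriv (fun τ => T τ s r) t
        - deriv (fun x => K * (T t x r) ^ ((5:ℝ)/2)
            * deriv (fun y => T t y r) x) s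
        - deriv (fun x => Kp * deriv (fun y => T t s y) x) r = 0)
    (hneum0 : ∀ t > (0:ℝ), ∀ s ∈ Ioo (0:ℝ) 1,
      deriv (fun y => T t s y) 0 = -Q)
    (hneum1 : ∀ t > (0:ℝ), ∀ s ∈ Ioo (0:ℝ) 1,
      deriv (fun y => T t s y) 1 = 0)
    (hbc0 : ∀ t > (0:ℝ), ∀ r ∈ Ioo (1/2:ℝ) 1,
      K * (T t 0 r) ^ ((5:ℝ)/2) * deriv (fun x => T t x r) 0 = γ * T t 0 r)
    (hbc1 : ∀ t > (0:ℝ), ∀ r ∈ Ioo (1/2:ℝ) 1,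
      K * (T t 1 r) ^ ((5:ℝ)/2) * deriv (fun x => T t x r) 1 = -(γ * T t 1 r))
    (hper : ∀ t > (0:ℝ), ∀ r ∈ Ioo (0:ℝ) (1/2),
      T t 0 r = T t 1 r
      ∧ K * (T t 0 r) ^ ((5:ℝ)/2) * deriv (fun x => T t x r) 0
          = K * (T t 1 r) ^ ((5:ℝ)/2) * deriv (fun x => T t x r) 1) :
    ∀ t > (0:ℝ),
      HasDerivAt
        (fun τ => (1/2) * ∫ s in (0:ℝ)..1, ∫ r in (0:ℝ)..1, (T τ s r)^2)
        (-(16 * K / 81) * (∫ s in (0:ℝ)..1, ∫ r in (0:ℝ)..1,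
            (deriv (fun x => (T t x r) ^ ((9:ℝ)/4)) s)^2)
          - Kp * (∫ s in (0:ℝ)..1, ∫ r in (0:ℝ)..1,
              (deriv (fun y => T t s y) r)^2)
          - γ * (∫ r in (1/2:ℝ)..1, ((T t 0 r)^2 + (T t 1 r)^2))
          + Kp * Q * (∫ s in (0:ℝ)..1, T t s 0)) t := by
  intro t ht
  set μp : Measure (ℝ × ℝ) :=
    (volume.restrict (Icc (0:ℝ) 1)).prod (volume.restrict (Icc (0:ℝ) 1)) with hμpdef
  haveI : IsFiniteMeasure μp := by rw [hμpdef]; infer_instance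
  -- partial derivative functions
  set Tc : ℝ × ℝ × ℝ → ℝ := fun p => T p.1 p.2.1 p.2.2 with hTcdef
  set DT : ℝ × ℝ × ℝ → ℝ := pd Tc (1, 0, 0) with hDTdef
  set DS : ℝ × ℝ × ℝ → ℝ := pd Tc (0, 1, 0) with hDSdef
  set DR : ℝ × ℝ × ℝ → ℝ := pd Tc (0, 0, 1) with hDRdef
  set DSS : ℝ × ℝ × ℝ → ℝ := pd DS (0, 1, 0) with hDSSdef
  set DRR : ℝ × ℝ × ℝ → ℝ := pd DR (0, 0, 1) with hDRRdef
  have cdDS : ContDiff ℝ (⊤ : ℕ∞) DS := pd_contDiff hT _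
  have cdDR : ContDiff ℝ (⊤ : ℕ∞) DR := pd_contDiff hT _
  have cT : Continuous Tc := hT.continuous
  have cDT : Continuous DT := (pd_contDiff hT _).continuous
  have cDS : Continuous DS := cdDS.continuous
  have cDR : Continuous DR := cdDR.continuous
  have cDSS : Continuous DSS := (pd_contDiff cdDS _).continuous
  have cDRR : Continuous DRR := (pd_contDiff cdDR _).continuous
  have hDT : ∀ a s r, HasDerivAt (fun τ => T τ s r) (DT (a, s, r)) a :=
    fun a s r => hasDerivAt_pd1 hT a s r
  have hDS : ∀ a s r, HasDerivAt (fun x => T a x r) (DS (a, s, r)) s :=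
    fun a s r => hasDerivAt_pd2 hT a s r
  have hDR : ∀ a s r, HasDerivAt (fun y => T a s y) (DR (a, s, r)) r :=
    fun a s r => hasDerivAt_pd3 hT a s r
  have hDSS : ∀ a s r, HasDerivAt (fun x => DS (a, x, r)) (DSS (a, s, r)) s :=
    fun a s r => hasDerivAt_pd2 cdDS a s r
  have hDRR : ∀ a s r, HasDerivAt (fun y => DR (a, s, y)) (DRR (a, s, r)) r :=
    fun a s r => hasDerivAt_pd3 cdDR a s r
  have eDS : ∀ a s r, deriv (fun x => T a x r) s = DS (a, s, r) :=
    fun a s r => (hDS a s r).deriv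
  have eDR : ∀ a s r, deriv (fun y => T a s y) r = DR (a, s, r) :=
    fun a s r => (hDR a s r).deriv
  have h52 : (1:ℝ) ≤ 5/2 := by norm_num
  have h94 : (1:ℝ) ≤ 9/4 := by norm_num
  -- derivative of T^{5/2} and of the parallel flux in s
  have hT52 : ∀ r x, HasDerivAt (fun x => (T t x r) ^ ((5:ℝ)/2))
      (DS (t, x, r) * ((5:ℝ)/2) * (T t x r) ^ ((3:ℝ)/2)) x := by
    intro r x
    have h := (hDS t x r).rpow_const (p := (5:ℝ)/2) (Or.inr h52)
    norm_num at h
    exact h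
  have hvS : ∀ r x, HasDerivAt (fun x => K * (T t x r) ^ ((5:ℝ)/2) * DS (t, x, r))
      (K * ((DS (t, x, r) * ((5:ℝ)/2) * (T t x r) ^ ((3:ℝ)/2)) * DS (t, x, r)
        + (T t x r) ^ ((5:ℝ)/2) * DSS (t, x, r))) x := by
    intro r x
    have h := ((hT52 r x).mul (hDSS t x r)).const_mul K
    simpa only [← mul_assoc, Pi.mul_apply] using h
  have hvR : ∀ s x, HasDerivAt (fun y => Kp * DR (t, s, y)) (Kp * DRR (t, s, x)) x :=
    fun s x => (hDRR t s x).const_mul Kp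
  -- rewriting the PDE terms
  have eA : ∀ r s, deriv (fun x => K * (T t x r) ^ ((5:ℝ)/2)
        * deriv (fun y => T t y r) x) s
      = K * ((DS (t, s, r) * ((5:ℝ)/2) * (T t s r) ^ ((3:ℝ)/2)) * DS (t, s, r)
        + (T t s r) ^ ((5:ℝ)/2) * DSS (t, s, r)) := by
    intro r s
    have hfeq : (fun x => K * (T t x r) ^ ((5:ℝ)/2) * deriv (fun y => T t y r) x)
        = fun x => K * (T t x r) ^ ((5:ℝ)/2) * DS (t, x, r) := by
      funext x; rw [eDS]
    rw [hfeq]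
    exact (hvS r s).deriv
  have eB : ∀ s r, deriv (fun x => Kp * deriv (fun y => T t s y) x) r
      = Kp * DRR (t, s, r) := by
    intro s r
    have hfeq : (fun x => Kp * deriv (fun y => T t s y) x)
        = fun x => Kp * DR (t, s, x) := by
      funext x; rw [eDR]
    rw [hfeq]
    exact (hvR s r).deriv
  have hpde' : ∀ s ∈ Ioo (0:ℝ) 1, ∀ r ∈ Ioo (0:ℝ) 1,
      T t s r * DT (t, s, r)
        = T t s r * (K * ((DS (t, s, r) * ((5:ℝ)/2) * (T t s r) ^ ((3:ℝ)/2)) * DS (t, s, r)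
            + (T t s r) ^ ((5:ℝ)/2) * DSS (t, s, r)))
          + T t s r * (Kp * DRR (t, s, r)) := by
    intro s hs r hr
    have h := hpde t ht s hs r hr
    rw [eA, eB, (hDT t s r).deriv] at h
    have hDTeq : DT (t, s, r)
        = K * ((DS (t, s, r) * ((5:ℝ)/2) * (T t s r) ^ ((3:ℝ)/2)) * DS (t, s, r)
            + (T t s r) ^ ((5:ℝ)/2) * DSS (t, s, r)) + Kp * DRR (t, s, r) := by
      linarith
    rw [hDTeq]; ring
  -- continuity composites
  have embc : Continuous fun p : ℝ × ℝ => ((t, p.1, p.2) : ℝ × ℝ × ℝ) := by fun_prop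
  have cT2 : Continuous fun p : ℝ × ℝ => T t p.1 p.2 := cT.comp embc
  have cDS2 : Continuous fun p : ℝ × ℝ => DS (t, p.1, p.2) := cDS.comp embc
  have cDSS2 : Continuous fun p : ℝ × ℝ => DSS (t, p.1, p.2) := cDSS.comp embc
  have cDR2 : Continuous fun p : ℝ × ℝ => DR (t, p.1, p.2) := cDR.comp embc
  have cDRR2 : Continuous fun p : ℝ × ℝ => DRR (t, p.1, p.2) := cDRR.comp embc
  have cpow32 : Continuous fun p : ℝ × ℝ => (T t p.1 p.2) ^ ((3:ℝ)/2) :=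
    continuous_rpow_comp cT2 (by norm_num)
  have cpow52 : Continuous fun p : ℝ × ℝ => (T t p.1 p.2) ^ ((5:ℝ)/2) :=
    continuous_rpow_comp cT2 (by norm_num)
  have cpow54 : Continuous fun p : ℝ × ℝ => (T t p.1 p.2) ^ ((5:ℝ)/4) :=
    continuous_rpow_comp cT2 (by norm_num)
  have cg1 : Continuous fun p : ℝ × ℝ =>
      T t p.1 p.2 * (K * ((DS (t, p.1, p.2) * ((5:ℝ)/2) * (T t p.1 p.2) ^ ((3:ℝ)/2))
          * DS (t, p.1, p.2) + (T t p.1 p.2) ^ ((5:ℝ)/2) * DSS (t, p.1, p.2))) :=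
    cT2.mul (continuous_const.mul
      ((((cDS2.mul continuous_const).mul cpow32).mul cDS2).add (cpow52.mul cDSS2)))
  have cg2 : Continuous fun p : ℝ × ℝ => T t p.1 p.2 * (Kp * DRR (t, p.1, p.2)) :=
    cT2.mul (continuous_const.mul cDRR2)
  have cq1 : Continuous fun p : ℝ × ℝ =>
      (DS (t, p.1, p.2) * ((9:ℝ)/4) * (T t p.1 p.2) ^ ((5:ℝ)/4))^2 :=
    ((cDS2.mul continuous_const).mul cpow54).pow 2
  have cq2 : Continuous fun p : ℝ × ℝ => (DR (t, p.1, p.2))^2 := cDR2.pow 2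
  -- Step A : differentiation under the integral sign
  have hcmpt : IsCompact ((Icc (t-1) (t+1)) ×ˢ (Icc (0:ℝ) 1 ×ˢ Icc (0:ℝ) 1)) :=
    isCompact_Icc.prod (isCompact_Icc.prod isCompact_Icc)
  obtain ⟨C, hC⟩ := hcmpt.exists_bound_of_continuousOn
    (f := fun q : ℝ × ℝ × ℝ => 2 * T q.1 q.2.1 q.2.2 * DT (q.1, q.2.1, q.2.2))
    (Continuous.continuousOn (by
      exact (continuous_const.mul cT).mul (cDT.comp (by fun_prop))))
  have hEprelim := hasDerivAt_integral_of_dominated_loc_of_deriv_le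
    (μ := μp) (x₀ := t) (s := Metric.ball t 1) (Metric.ball_mem_nhds t one_pos)
    (F := fun τ (a : ℝ × ℝ) => (T τ a.1 a.2)^2)
    (F' := fun τ (a : ℝ × ℝ) => 2 * T τ a.1 a.2 * DT (τ, a.1, a.2))
    (bound := fun _ => C)
    (Filter.Eventually.of_forall fun x =>
      ((cT.comp (by fun_prop : Continuous fun a : ℝ × ℝ => ((x, a.1, a.2) : ℝ×ℝ×ℝ))).pow 2).aestronglyMeasurable)
    (integrable_prod_restrict
      ((cT.comp (by fun_prop : Continuous fun a : ℝ × ℝ => ((t, a.1, a.2) : ℝ×ℝ×ℝ))).pow 2))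
    (((continuous_const.mul
        (cT.comp (by fun_prop : Continuous fun a : ℝ × ℝ => ((t, a.1, a.2) : ℝ×ℝ×ℝ)))).mul
      (cDT.comp (by fun_prop : Continuous fun a : ℝ × ℝ => ((t, a.1, a.2) : ℝ×ℝ×ℝ)))).aestronglyMeasurable)
    (by
      have hmem : ∀ᵐ a ∂μp, a ∈ Icc (0:ℝ) 1 ×ˢ Icc (0:ℝ) 1 := by
        rw [hμpdef, Measure.prod_restrict]
        exact ae_restrict_mem (measurableSet_Icc.prod measurableSet_Icc)
      filter_upwards [hmem] with a ha
      intro x hx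
      have hx1 : |x - t| < 1 := by simpa [Real.dist_eq] using hx
      have hx2 := abs_lt.1 hx1
      exact hC (x, a.1, a.2) ⟨⟨by linarith [hx2.1], by linarith [hx2.2]⟩, ⟨ha.1, ha.2⟩⟩)
    (MeasureTheory.integrable_const C)
    (Filter.Eventually.of_forall fun a => by
      intro x _
      have h := (hDT x a.1 a.2).pow 2
      norm_num at h
      exact h)
  have hE : HasDerivAt
      (fun τ => (1/2) * ∫ a, (T τ a.1 a.2)^2 ∂μp)
      ((1/2) * ∫ a, 2 * T t a.1 a.2 * DT (t, a.1, a.2) ∂μp) t :=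
    hEprelim.2.const_mul (1/2)
  -- ==== inner integration by parts in r (for fixed s) ====
  have inner2 : ∀ s ∈ Ioo (0:ℝ) 1,
      (∫ r in (0:ℝ)..1, T t s r * (Kp * DRR (t, s, r)))
        = Kp * Q * T t s 0 - ∫ r in (0:ℝ)..1, Kp * (DR (t, s, r))^2 := by
    intro s hs
    have ey : Continuous fun y : ℝ => ((t, s, y) : ℝ × ℝ × ℝ) := by fun_prop
    have ibp : (∫ r in (0:ℝ)..1, T t s r * (Kp * DRR (t, s, r)))
        = T t s 1 * (Kp * DR (t, s, 1)) - T t s 0 * (Kp * DR (t, s, 0))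
          - ∫ r in (0:ℝ)..1, DR (t, s, r) * (Kp * DR (t, s, r)) :=
      intervalIntegral.integral_mul_deriv_eq_deriv_mul
        (fun x _ => hDR t s x) (fun x _ => hvR s x)
        ((cDR.comp ey).intervalIntegrable 0 1)
        ((continuous_const.mul (cDRR.comp ey)).intervalIntegrable 0 1)
    rw [show DR (t, s, 1) = 0 from by rw [← eDR]; exact hneum1 t ht s hs,
        show DR (t, s, 0) = -Q from by rw [← eDR]; exact hneum0 t ht s hs] at ibp
    rw [ibp, show (fun r => DR (t, s, r) * (Kp * DR (t, s, r)))
        = fun r => Kp * (DR (t, s, r))^2 from funext fun r => by ring]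
    ring
  -- ==== inner integration by parts in s (for fixed r) ====
  have inner1 : ∀ r ∈ Ioo (0:ℝ) 1,
      (∫ s in (0:ℝ)..1,
          T t s r * (K * ((DS (t, s, r) * ((5:ℝ)/2) * (T t s r) ^ ((3:ℝ)/2)) * DS (t, s, r)
            + (T t s r) ^ ((5:ℝ)/2) * DSS (t, s, r))))
        = (T t 1 r * (K * (T t 1 r) ^ ((5:ℝ)/2) * DS (t, 1, r))
            - T t 0 r * (K * (T t 0 r) ^ ((5:ℝ)/2) * DS (t, 0, r)))
          - ∫ s in (0:ℝ)..1,
              (16*K/81) * (DS (t, s, r) * ((9:ℝ)/4) * (T t s r) ^ ((5:ℝ)/4))^2 := by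
    intro r hr
    have ex : Continuous fun x : ℝ => ((t, x, r) : ℝ × ℝ × ℝ) := by fun_prop
    have cTx : Continuous fun x : ℝ => T t x r := cT.comp ex
    have cv' : Continuous fun x : ℝ =>
        K * ((DS (t, x, r) * ((5:ℝ)/2) * (T t x r) ^ ((3:ℝ)/2)) * DS (t, x, r)
          + (T t x r) ^ ((5:ℝ)/2) * DSS (t, x, r)) :=
      continuous_const.mul (((((cDS.comp ex).mul continuous_const).mul
        (continuous_rpow_comp cTx (by norm_num))).mul (cDS.comp ex)).add
        ((continuous_rpow_comp cTx (by norm_num)).mul (cDSS.comp ex)))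
    have ibp : (∫ s in (0:ℝ)..1,
          T t s r * (K * ((DS (t, s, r) * ((5:ℝ)/2) * (T t s r) ^ ((3:ℝ)/2)) * DS (t, s, r)
            + (T t s r) ^ ((5:ℝ)/2) * DSS (t, s, r))))
        = T t 1 r * (K * (T t 1 r) ^ ((5:ℝ)/2) * DS (t, 1, r))
            - T t 0 r * (K * (T t 0 r) ^ ((5:ℝ)/2) * DS (t, 0, r))
          - ∫ s in (0:ℝ)..1, DS (t, s, r) * (K * (T t s r) ^ ((5:ℝ)/2) * DS (t, s, r)) :=
      intervalIntegral.integral_mul_deriv_eq_deriv_mul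
        (fun x _ => hDS t x r) (fun x _ => hvS r x)
        ((cDS.comp ex).intervalIntegrable 0 1)
        (cv'.intervalIntegrable 0 1)
    rw [ibp]
    congr 1
    apply intervalIntegral.integral_congr
    intro x hx
    rw [Set.uIcc_of_le zero_le_one] at hx
    have hTn : 0 ≤ T t x r := hTpos t (Set.mem_Ici.mpr ht.le) x hx r (Ioo_subset_Icc_self hr)
    have hsq : ((T t x r) ^ ((5:ℝ)/4))^2 = (T t x r) ^ ((5:ℝ)/2) := by
      rw [← Real.rpow_natCast ((T t x r) ^ ((5:ℝ)/4)) 2, ← Real.rpow_mul hTn]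
      norm_num
    simp only
    rw [mul_pow, mul_pow, hsq]
    ring
  -- ==== the boundary term in s ====
  have e0r : Continuous fun r : ℝ => ((t, (0:ℝ), r) : ℝ × ℝ × ℝ) := by fun_prop
  have e1r : Continuous fun r : ℝ => ((t, (1:ℝ), r) : ℝ × ℝ × ℝ) := by fun_prop
  have cbnd : Continuous fun r : ℝ =>
      T t 1 r * (K * (T t 1 r) ^ ((5:ℝ)/2) * DS (t, 1, r))
        - T t 0 r * (K * (T t 0 r) ^ ((5:ℝ)/2) * DS (t, 0, r)) :=
    ((cT.comp e1r).mul ((continuous_const.mul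
        (continuous_rpow_comp (cT.comp e1r) (by norm_num))).mul (cDS.comp e1r))).sub
      ((cT.comp e0r).mul ((continuous_const.mul
        (continuous_rpow_comp (cT.comp e0r) (by norm_num))).mul (cDS.comp e0r)))
  have hbnd : (∫ r in (0:ℝ)..1,
        (T t 1 r * (K * (T t 1 r) ^ ((5:ℝ)/2) * DS (t, 1, r))
          - T t 0 r * (K * (T t 0 r) ^ ((5:ℝ)/2) * DS (t, 0, r))))
      = -(γ * ∫ r in (1/2:ℝ)..1, ((T t 0 r)^2 + (T t 1 r)^2)) := by
    rw [← intervalIntegral.integral_add_adjacent_intervals (b := (1/2:ℝ))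
      (cbnd.intervalIntegrable 0 (1/2)) (cbnd.intervalIntegrable (1/2) 1)]
    have hz : (∫ r in (0:ℝ)..(1/2:ℝ),
          (T t 1 r * (K * (T t 1 r) ^ ((5:ℝ)/2) * DS (t, 1, r))
            - T t 0 r * (K * (T t 0 r) ^ ((5:ℝ)/2) * DS (t, 0, r)))) = 0 := by
      rw [intervalIntegral_congr_Ioo (by norm_num) (g := fun _ => (0:ℝ)) (fun r hr => by
        obtain ⟨hTeq, hflux⟩ := hper t ht r hr
        rw [eDS, eDS] at hflux
        rw [hTeq] at hflux ⊢
        rw [hflux]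
        ring)]
      simp
    have hr2 : (∫ r in (1/2:ℝ)..1,
          (T t 1 r * (K * (T t 1 r) ^ ((5:ℝ)/2) * DS (t, 1, r))
            - T t 0 r * (K * (T t 0 r) ^ ((5:ℝ)/2) * DS (t, 0, r))))
        = -(γ * ∫ r in (1/2:ℝ)..1, ((T t 0 r)^2 + (T t 1 r)^2)) := by
      rw [← intervalIntegral.integral_const_mul, ← intervalIntegral.integral_neg]
      exact intervalIntegral_congr_Ioo (by norm_num) (fun r hr => by
        have h0 := hbc0 t ht r hr
        have h1 := hbc1 t ht r hr
        rw [eDS] at h0 h1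
        rw [h0, h1]
        ring)
    rw [hz, hr2]
    ring
  -- ==== the two pieces of the spatial integral ====
  have hg2 : (∫ a, T t a.1 a.2 * (Kp * DRR (t, a.1, a.2)) ∂μp)
      = Kp * Q * (∫ s in (0:ℝ)..1, T t s 0) - Kp * ∫ a, (DR (t, a.1, a.2))^2 ∂μp := by
    rw [hμpdef, prodint2 (f := fun s r => T t s r * (Kp * DRR (t, s, r))) cg2]
    rw [intervalIntegral_congr_Ioo zero_le_one inner2]
    have hi1 : IntervalIntegrable (fun s : ℝ => Kp * Q * T t s 0) volume 0 1 := by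
      have : Continuous fun s : ℝ => Kp * Q * T t s 0 :=
        continuous_const.mul (cT.comp (by fun_prop :
          Continuous fun s : ℝ => ((t, s, (0:ℝ)) : ℝ × ℝ × ℝ)))
      exact this.intervalIntegrable 0 1
    have hi2 : IntervalIntegrable
        (fun s : ℝ => ∫ r in (0:ℝ)..1, Kp * (DR (t, s, r))^2) volume 0 1 := by
      have : Continuous fun s : ℝ => ∫ r in (0:ℝ)..1, Kp * (DR (t, s, r))^2 :=
        intervalIntegral.continuous_parametric_intervalIntegral_of_continuous'
          (f := fun s r => Kp * (DR (t, s, r))^2) (show Continuous (fun p : ℝ × ℝ => Kp * (DR (t, p.1, p.2))^2) from continuous_const.mul cq2) 0 1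
      exact this.intervalIntegrable 0 1
    rw [intervalIntegral.integral_sub hi1 hi2]
    rw [intervalIntegral.integral_const_mul]
    congr 1
    rw [← prodint2 (f := fun s r => Kp * (DR (t, s, r))^2) (continuous_const.mul cq2)]
    exact integral_const_mul _ _
  have hg1 : (∫ a, T t a.1 a.2 * (K * ((DS (t, a.1, a.2) * ((5:ℝ)/2)
          * (T t a.1 a.2) ^ ((3:ℝ)/2)) * DS (t, a.1, a.2)
        + (T t a.1 a.2) ^ ((5:ℝ)/2) * DSS (t, a.1, a.2))) ∂μp)
      = -(γ * ∫ r in (1/2:ℝ)..1, ((T t 0 r)^2 + (T t 1 r)^2))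
        - (16*K/81) * ∫ a, (DS (t, a.1, a.2) * ((9:ℝ)/4) * (T t a.1 a.2) ^ ((5:ℝ)/4))^2 ∂μp := by
    rw [hμpdef, prodint2_symm (f := fun s r =>
      T t s r * (K * ((DS (t, s, r) * ((5:ℝ)/2) * (T t s r) ^ ((3:ℝ)/2)) * DS (t, s, r)
        + (T t s r) ^ ((5:ℝ)/2) * DSS (t, s, r)))) cg1]
    rw [intervalIntegral_congr_Ioo zero_le_one inner1]
    have hj2 : IntervalIntegrable (fun r : ℝ =>
        ∫ s in (0:ℝ)..1, (16*K/81) * (DS (t, s, r) * ((9:ℝ)/4) * (T t s r) ^ ((5:ℝ)/4))^2)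
        volume 0 1 := by
      have : Continuous fun r : ℝ =>
          ∫ s in (0:ℝ)..1, (16*K/81) * (DS (t, s, r) * ((9:ℝ)/4) * (T t s r) ^ ((5:ℝ)/4))^2 :=
        intervalIntegral.continuous_parametric_intervalIntegral_of_continuous'
          (f := fun r s => (16*K/81) * (DS (t, s, r) * ((9:ℝ)/4) * (T t s r) ^ ((5:ℝ)/4))^2)
          (show Continuous (fun p : ℝ × ℝ => (16*K/81) * (DS (t, p.2, p.1) * ((9:ℝ)/4) * (T t p.2 p.1) ^ ((5:ℝ)/4))^2) from continuous_const.mul (cq1.comp continuous_swap)) 0 1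
      exact this.intervalIntegrable 0 1
    rw [intervalIntegral.integral_sub (cbnd.intervalIntegrable 0 1) hj2]
    rw [hbnd]
    congr 1
    rw [← prodint2_symm (f := fun s r =>
      (16*K/81) * (DS (t, s, r) * ((9:ℝ)/4) * (T t s r) ^ ((5:ℝ)/4))^2)
      (continuous_const.mul cq1)]
    exact integral_const_mul _ _
  -- ==== splitting the time-derivative integral using the PDE ====
  have hsplit : (∫ a, T t a.1 a.2 * DT (t, a.1, a.2) ∂μp)
      = (∫ a, T t a.1 a.2 * (K * ((DS (t, a.1, a.2) * ((5:ℝ)/2)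
            * (T t a.1 a.2) ^ ((3:ℝ)/2)) * DS (t, a.1, a.2)
          + (T t a.1 a.2) ^ ((5:ℝ)/2) * DSS (t, a.1, a.2))) ∂μp)
        + ∫ a, T t a.1 a.2 * (Kp * DRR (t, a.1, a.2)) ∂μp := by
    have int1 : Integrable (fun a : ℝ × ℝ => T t a.1 a.2 * (K * ((DS (t, a.1, a.2) * ((5:ℝ)/2)
          * (T t a.1 a.2) ^ ((3:ℝ)/2)) * DS (t, a.1, a.2)
        + (T t a.1 a.2) ^ ((5:ℝ)/2) * DSS (t, a.1, a.2)))) μp := by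
      rw [hμpdef]; exact integrable_prod_restrict cg1
    have int2 : Integrable (fun a : ℝ × ℝ => T t a.1 a.2 * (Kp * DRR (t, a.1, a.2))) μp := by
      rw [hμpdef]; exact integrable_prod_restrict cg2
    rw [← integral_add int1 int2]
    apply integral_congr_ae
    have hae : ∀ᵐ p ∂μp, p ∈ Ioo (0:ℝ) 1 ×ˢ Ioo (0:ℝ) 1 := by
      rw [hμpdef]; exact ae_mem_Ioo_prod
    filter_upwards [hae] with p hp
    exact hpde' p.1 hp.1 p.2 hp.2
  -- ==== rewrite the goal ====
  have hfe : (fun τ => (1/2) * ∫ s in (0:ℝ)..1, ∫ r in (0:ℝ)..1, (T τ s r)^2)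
      = fun τ => (1/2) * ∫ a, (T τ a.1 a.2)^2 ∂μp := by
    funext τ
    rw [hμpdef, prodint2 (f := fun s r => (T τ s r)^2)
      ((cT.comp (by fun_prop : Continuous fun p : ℝ × ℝ =>
        ((τ, p.1, p.2) : ℝ × ℝ × ℝ))).pow 2)]
  rw [hfe]
  have hd94 : ∀ s r : ℝ, deriv (fun x => (T t x r) ^ ((9:ℝ)/4)) s
      = DS (t, s, r) * ((9:ℝ)/4) * (T t s r) ^ ((5:ℝ)/4) := by
    intro s r
    have h := ((hDS t s r).rpow_const (p := (9:ℝ)/4) (Or.inr h94)).deriv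
    norm_num at h
    exact h
  simp_rw [hd94, eDR]
  rw [show (∫ s in (0:ℝ)..1, ∫ r in (0:ℝ)..1,
        (DS (t, s, r) * ((9:ℝ)/4) * (T t s r) ^ ((5:ℝ)/4))^2)
      = ∫ a, (DS (t, a.1, a.2) * ((9:ℝ)/4) * (T t a.1 a.2) ^ ((5:ℝ)/4))^2 ∂μp from by
    rw [hμpdef]; exact (prodint2 cq1).symm]
  rw [show (∫ s in (0:ℝ)..1, ∫ r in (0:ℝ)..1, (DR (t, s, r))^2)
      = ∫ a, (DR (t, a.1, a.2))^2 ∂μp from by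
    rw [hμpdef]; exact (prodint2 cq2).symm]
  have hval : (1/2) * ∫ a, 2 * T t a.1 a.2 * DT (t, a.1, a.2) ∂μp
      = -(16 * K / 81) * (∫ a, (DS (t, a.1, a.2) * ((9:ℝ)/4) * (T t a.1 a.2) ^ ((5:ℝ)/4))^2 ∂μp)
        - Kp * (∫ a, (DR (t, a.1, a.2))^2 ∂μp)
        - γ * (∫ r in (1/2:ℝ)..1, ((T t 0 r)^2 + (T t 1 r)^2))
        + Kp * Q * (∫ s in (0:ℝ)..1, T t s 0) := by
    have h2 : (∫ a, 2 * T t a.1 a.2 * DT (t, a.1, a.2) ∂μp)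
        = 2 * ∫ a, T t a.1 a.2 * DT (t, a.1, a.2) ∂μp := by
      rw [show (fun a : ℝ × ℝ => 2 * T t a.1 a.2 * DT (t, a.1, a.2))
          = fun a : ℝ × ℝ => 2 * (T t a.1 a.2 * DT (t, a.1, a.2)) from
        funext fun a => by ring]
      exact integral_const_mul _ _
    rw [h2, hsplit, hg1, hg2]
    ring
  rw [← hval]
  exact hE
end
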